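/- arXiv:2205.13689 — 4 statements merged into one kernel-verified Lean document; each statement's English description precedes it below -/
import Mathlib

section
/- Let X₁, …, X_t be independent random variables with values in [0,1] almost surely and common mean E[X_u] = μ for all u. Then the probability that there exists a round s ∈ {1,…,t} with μ̂(1:s) − μ ≥ β(s, δ) is at most δ/4; that is, P(∃ s ∈ {1,…,t} : μ̂(1:s) − μ ≥ √(2 log(4 log₂(t+1)/δ)/s)) ≤ δ/4. -/
open MeasureTheory ProbabilityTheory Real

/-- pointwise convexity bound: `exp (l*x) ≤ 1 - x + x * exp l` for `x ∈ [0,1]`. -/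
lemma pud_convex (l : ℝ) {x : ℝ} (hx : x ∈ Set.Icc (0:ℝ) 1) :
    Real.exp (l * x) ≤ 1 - x + x * Real.exp l := by
  obtain ⟨h0, h1⟩ := hx
  have := convexOn_exp.2 (Set.mem_univ (0:ℝ)) (Set.mem_univ l)
    (by linarith : (0:ℝ) ≤ 1 - x) h0 (by ring)
  simpa [smul_eq_mul, Real.exp_zero, mul_comm] using this

/-- Hoeffding's lemma, analytic core. -/
lemma pud_core {p : ℝ} (hp : p ∈ Set.Icc (0:ℝ) 1) (l : ℝ) :
    Real.exp (-(l * p)) * (1 - p + p * Real.exp l) ≤ Real.exp (l ^ 2 / 8) := by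
  obtain ⟨hp0, hp1⟩ := hp
  set D : ℝ → ℝ := fun x => 1 - p + p * Real.exp x with hD
  have hDpos : ∀ x, 0 < D x := by
    intro x
    rcases eq_or_lt_of_le hp1 with h | h
    · simp [hD, ← h]; positivity
    · have : 0 ≤ p * Real.exp x := by positivity
      simp only [hD]; nlinarith
  -- g x = x^2/8 + p*x - log (D x) ≥ 0
  set g : ℝ → ℝ := fun x => x ^ 2 / 8 + p * x - Real.log (D x) with hg
  set G : ℝ → ℝ := fun x => x / 4 + p - p * Real.exp x / D x with hGdef
  have hDderiv : ∀ x, HasDerivAt D (p * Real.exp x) x := by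
    intro x
    exact ((Real.hasDerivAt_exp x).const_mul p).const_add (1 - p)
  have hgderiv : ∀ x, HasDerivAt g (G x) x := by
    intro x
    have h1 : HasDerivAt (fun x : ℝ => x ^ 2 / 8 + p * x) (x / 4 + p) x := by
      have := ((hasDerivAt_pow 2 x).div_const 8).add ((hasDerivAt_id x).const_mul p)
      exact this.congr_deriv (by ring)
    have h2 : HasDerivAt (fun x => Real.log (D x)) (p * Real.exp x / D x) x :=
      (hDderiv x).log (hDpos x).ne'
    exact h1.sub h2
  have hGderiv : ∀ x, HasDerivAt G
      (1/4 - (p * Real.exp x * D x - p * Real.exp x * (p * Real.exp x)) / (D x) ^ 2) x := by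
    intro x
    have h1 : HasDerivAt (fun x : ℝ => x / 4 + p) (1/4) x := by
      simpa using ((hasDerivAt_id x).div_const 4).add_const p
    have h2 : HasDerivAt (fun x => p * Real.exp x / D x)
        ((p * Real.exp x * D x - p * Real.exp x * (p * Real.exp x)) / (D x) ^ 2) x :=
      ((Real.hasDerivAt_exp x).const_mul p).div (hDderiv x) (hDpos x).ne'
    exact h1.sub h2
  have hGmono : Monotone G := by
    apply monotone_of_deriv_nonneg (fun x => (hGderiv x).differentiableAt)
    intro x
    rw [(hGderiv x).deriv]
    set e := p * Real.exp x with he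
    have hD2 : 0 < D x ^ 2 := pow_pos (hDpos x) 2
    have : (e * D x - e * e) / D x ^ 2 ≤ 1/4 := by
      rw [div_le_iff₀ hD2]
      have key : ∀ d e' : ℝ, e' * d - e' * e' ≤ 1/4 * d ^ 2 := by
        intro d e'; nlinarith [sq_nonneg (d - 2 * e')]
      exact key (D x) e
    linarith
  have hG0 : G 0 = 0 := by
    simp [hGdef, hD]
  have hg0 : g 0 = 0 := by simp [hg, hD]
  have hgnonneg : ∀ x, 0 ≤ g x := by
    intro x
    rcases le_total 0 x with h | h
    · have hmono : MonotoneOn g (Set.Ici 0) := by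
        apply monotoneOn_of_deriv_nonneg (convex_Ici 0)
          (Continuous.continuousOn (by
            exact continuous_iff_continuousAt.mpr fun y =>
              (hgderiv y).differentiableAt.continuousAt))
          (fun y hy => (hgderiv y).differentiableAt.differentiableWithinAt)
          (fun y hy => by
            rw [(hgderiv y).deriv]
            have h0y : G 0 ≤ G y := hGmono (le_of_lt (by simpa using hy))
            rw [hG0] at h0y; exact h0y)
      have := hmono Set.self_mem_Ici h h
      rw [hg0] at this; exact this
    · have hanti : AntitoneOn g (Set.Iic 0) := by
        apply antitoneOn_of_deriv_nonpos (convex_Iic 0)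
          (Continuous.continuousOn (by
            exact continuous_iff_continuousAt.mpr fun y =>
              (hgderiv y).differentiableAt.continuousAt))
          (fun y hy => (hgderiv y).differentiableAt.differentiableWithinAt)
          (fun y hy => by
            rw [(hgderiv y).deriv]
            have h0y : G y ≤ G 0 := hGmono (le_of_lt (by simpa using hy))
            rw [hG0] at h0y; exact h0y)
      have := hanti h Set.self_mem_Iic h
      rw [hg0] at this; exact this
  -- conclude
  have hlog : Real.log (D l) ≤ l ^ 2 / 8 + p * l := by
    have := hgnonneg l; simp only [hg] at this; linarith
  have hDl : D l ≤ Real.exp (l ^ 2 / 8 + p * l) := by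
    calc D l = Real.exp (Real.log (D l)) := (Real.exp_log (hDpos l)).symm
    _ ≤ _ := Real.exp_le_exp.mpr hlog
  calc Real.exp (-(l * p)) * (1 - p + p * Real.exp l)
      ≤ Real.exp (-(l * p)) * Real.exp (l ^ 2 / 8 + p * l) := by
        exact mul_le_mul_of_nonneg_left hDl (Real.exp_nonneg _)
    _ = Real.exp (l ^ 2 / 8) := by rw [← Real.exp_add]; ring_nf

/-- Hoeffding's lemma: for a `[0,1]`-valued random variable with mean `p`,
`E[exp (l * (X - p))] ≤ exp (l^2/8)`. -/
lemma pud_mgf_one {Ω : Type*} [MeasurableSpace Ω] (P : Measure Ω) [IsProbabilityMeasure P]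
    (X : Ω → ℝ) (hm : Measurable X) (hb : ∀ᵐ ω ∂P, X ω ∈ Set.Icc (0:ℝ) 1)
    (p : ℝ) (hp : ∫ ω, X ω ∂P = p) (l : ℝ) :
    ∫ ω, Real.exp (l * (X ω - p)) ∂P ≤ Real.exp (l ^ 2 / 8) := by
  have hXint : Integrable X P := by
    refine (integrable_const (1:ℝ)).mono' hm.aestronglyMeasurable ?_
    filter_upwards [hb] with ω h
    rw [Real.norm_eq_abs, abs_le]; exact ⟨by linarith [h.1], h.2⟩
  have hp01 : p ∈ Set.Icc (0:ℝ) 1 := by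
    constructor
    · rw [← hp]; apply integral_nonneg_of_ae; filter_upwards [hb] with ω h using h.1
    · rw [← hp]
      calc ∫ ω, X ω ∂P ≤ ∫ _ω, (1:ℝ) ∂P := by
            apply integral_mono_ae hXint (integrable_const 1)
            filter_upwards [hb] with ω h using h.2
        _ = 1 := by simp
  have hexp_int : Integrable (fun ω => Real.exp (l * X ω)) P := by
    refine (integrable_const (Real.exp |l|)).mono'
      (hm.const_mul l).exp.aestronglyMeasurable ?_
    filter_upwards [hb] with ω h
    rw [Real.norm_eq_abs, abs_of_pos (Real.exp_pos _), Real.exp_le_exp]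
    calc l * X ω ≤ |l * X ω| := le_abs_self _
      _ = |l| * |X ω| := abs_mul _ _
      _ ≤ |l| * 1 := by
          apply mul_le_mul_of_nonneg_left _ (abs_nonneg l)
          rw [abs_le]; exact ⟨by linarith [h.1], h.2⟩
      _ = |l| := mul_one _
  have hstep : ∫ ω, Real.exp (l * X ω) ∂P ≤ 1 - p + p * Real.exp l := by
    calc ∫ ω, Real.exp (l * X ω) ∂P
        ≤ ∫ ω, (1 - X ω + X ω * Real.exp l) ∂P := by
          apply integral_mono_ae hexp_int
          · exact (((integrable_const (1:ℝ)).sub hXint).add (hXint.mul_const _))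
          · filter_upwards [hb] with ω h using pud_convex l h
      _ = 1 - p + p * Real.exp l := by
          have hf : Integrable (fun ω => (1:ℝ) - X ω) P := by
            exact (integrable_const 1).sub hXint
          have hg : Integrable (fun ω => X ω * Real.exp l) P := hXint.mul_const _
          rw [integral_add hf hg, integral_sub (integrable_const (1:ℝ)) hXint,
            integral_mul_const, hp]
          simp
  calc ∫ ω, Real.exp (l * (X ω - p)) ∂P
      = ∫ ω, Real.exp (-(l * p)) * Real.exp (l * X ω) ∂P := by
        congr 1; ext ω; rw [← Real.exp_add]; ring_nf
    _ = Real.exp (-(l * p)) * ∫ ω, Real.exp (l * X ω) ∂P := integral_const_mul _ _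
    _ ≤ Real.exp (-(l * p)) * (1 - p + p * Real.exp l) := by
        apply mul_le_mul_of_nonneg_left hstep (Real.exp_nonneg _)
    _ ≤ Real.exp (l ^ 2 / 8) := pud_core hp01 l

/-- reindexing sums over a finite set through an injection onto a `Finset ℕ`. -/
lemma pud_sum_coe {α : Type*} (c : α → ℕ) (f : ℕ → ℝ) (V : Finset ℕ) (W : Finset α)
    (hinj : ∀ a₁ ∈ W, ∀ a₂ ∈ W, c a₁ = c a₂ → a₁ = a₂)
    (himg : ∀ i ∈ W, c i ∈ V)
    (hsurj : ∀ v ∈ V, ∃ i, ∃ _ : i ∈ W, c i = v) :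
    ∑ i ∈ W, f (c i) = ∑ v ∈ V, f v :=
  Finset.sum_bij (fun i _ => c i) himg (fun a₁ h₁ a₂ h₂ h => hinj a₁ h₁ a₂ h₂ h)
    hsurj (fun a _ => rfl)

section Ville
variable {Ω : Type*} [MeasurableSpace Ω] (P : Measure Ω) [IsProbabilityMeasure P]

set_option maxHeartbeats 1600000 in
/-- Ville/Hoeffding maximal inequality for prefix sums of independent `[0,1]` variables. -/
lemma pud_ville (t : ℕ) (X : ℕ → Ω → ℝ)
    (hmeas : ∀ u ∈ Finset.Icc 1 t, Measurable (X u))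
    (hindep : iIndepFun
      (fun u : (Finset.Icc 1 t : Finset ℕ) => X u.val) P)
    (hbdd : ∀ u ∈ Finset.Icc 1 t, ∀ᵐ ω ∂P, X u ω ∈ Set.Icc (0 : ℝ) 1)
    (μ : ℝ) (hmean : ∀ u ∈ Finset.Icc 1 t, ∫ ω, X u ω ∂P = μ)
    (n : ℕ) (hn1 : 1 ≤ n) (hnt : n ≤ t) (a : ℝ) (ha : 0 < a) :
    P {ω | ∃ s ∈ Finset.Icc 1 n, a ≤ (∑ u ∈ Finset.Icc 1 s, X u ω) - s * μ}
      ≤ ENNReal.ofReal (Real.exp (-(2 * a ^ 2 / n))) := by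
  classical
  set ι := {x // x ∈ Finset.Icc 1 t} with hι
  set M : ℕ → Ω → ℝ := fun s ω => (∑ u ∈ Finset.Icc 1 s, X u ω) - s * μ with hM
  have hsub : ∀ {s : ℕ}, s ≤ t → Finset.Icc 1 s ⊆ Finset.Icc 1 t :=
    fun {s} hs => Finset.Icc_subset_Icc_right hs
  have hMmeas : ∀ s, s ≤ t → Measurable (M s) := by
    intro s hs
    exact (Finset.measurable_sum _ (fun u hu => hmeas u (hsub hs hu))).sub measurable_const
  have hnR : (0:ℝ) < n := by exact_mod_cast hn1
  set l : ℝ := 4 * a / n with hl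
  have hl0 : 0 < l := by positivity
  -- a.e. boundedness of everything at once
  have hgood : ∀ᵐ ω ∂P, ∀ u ∈ Finset.Icc 1 t, X u ω ∈ Set.Icc (0:ℝ) 1 :=
    (Finset.eventually_all _).2 hbdd
  -- integrability of each X u
  have hXint : ∀ u ∈ Finset.Icc 1 t, Integrable (X u) P := by
    intro u hu
    refine (integrable_const (1:ℝ)).mono' (hmeas u hu).aestronglyMeasurable ?_
    filter_upwards [hbdd u hu] with ω h
    rw [Real.norm_eq_abs, abs_le]; exact ⟨by linarith [h.1], h.2⟩
  -- integrability of M and its zero mean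
  have hMint : ∀ s, s ≤ t → Integrable (M s) P := by
    intro s hs
    exact (integrable_finset_sum _ (fun u hu => hXint u (hsub hs hu))).sub (integrable_const _)
  have hMmean : ∀ s, s ≤ t → ∫ ω, M s ω ∂P = 0 := by
    intro s hs
    have h1 : ∫ ω, (∑ u ∈ Finset.Icc 1 s, X u ω) ∂P = ∑ u ∈ Finset.Icc 1 s, ∫ ω, X u ω ∂P :=
      integral_finset_sum _ (fun u hu => hXint u (hsub hs hu))
    have h2 : (fun ω => M s ω) = fun ω => (∑ u ∈ Finset.Icc 1 s, X u ω) - (fun _ => (s:ℝ)*μ) ω := rfl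
    rw [hM]
    rw [integral_sub (integrable_finset_sum _ (fun u hu => hXint u (hsub hs hu)))
      (integrable_const _), h1, integral_const]
    have : ∑ u ∈ Finset.Icc 1 s, ∫ ω, X u ω ∂P = ∑ u ∈ Finset.Icc 1 s, μ :=
      Finset.sum_congr rfl (fun u hu => hmean u (hsub hs hu))
    rw [this, Finset.sum_const, Nat.card_Icc]
    simp [nsmul_eq_mul]
  -- uniform integrability of exponentials of linear combinations of two M's
  have hint2 : ∀ (c d : ℝ) (s1 s2 : ℕ), s1 ≤ t → s2 ≤ t →
      Integrable (fun ω => Real.exp (c * M s1 ω + d * M s2 ω)) P := by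
    intro c d s1 s2 h1 h2
    have hmb : ∀ᵐ ω ∂P, ∀ s, s ≤ t → |M s ω| ≤ t * (1 + |μ|) := by
      filter_upwards [hgood] with ω h
      intro s hs
      have hsum : |∑ u ∈ Finset.Icc 1 s, X u ω| ≤ (s:ℝ) := by
        calc |∑ u ∈ Finset.Icc 1 s, X u ω| ≤ ∑ u ∈ Finset.Icc 1 s, |X u ω| :=
              Finset.abs_sum_le_sum_abs _ _
          _ ≤ ∑ u ∈ Finset.Icc 1 s, (1:ℝ) := by
              apply Finset.sum_le_sum
              intro u hu
              have := h u (hsub hs hu)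
              rw [abs_le]; exact ⟨by linarith [this.1], this.2⟩
          _ = (s:ℝ) := by rw [Finset.sum_const, Nat.card_Icc]; simp
      have hsR : (s:ℝ) ≤ t := by exact_mod_cast hs
      calc |M s ω| ≤ |∑ u ∈ Finset.Icc 1 s, X u ω| + |(s:ℝ) * μ| := abs_sub _ _
        _ ≤ (s:ℝ) + (s:ℝ) * |μ| := by
            refine add_le_add hsum ?_
            rw [abs_mul, abs_of_nonneg (Nat.cast_nonneg s)]
        _ ≤ (t:ℝ) + (t:ℝ) * |μ| := by
            refine add_le_add hsR (mul_le_mul_of_nonneg_right hsR (abs_nonneg μ))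
        _ = t * (1 + |μ|) := by ring
    refine (integrable_const (Real.exp ((|c| + |d|) * (t * (1 + |μ|))))).mono'
      ((((hMmeas s1 h1).const_mul c).add ((hMmeas s2 h2).const_mul d)).exp).aestronglyMeasurable ?_
    filter_upwards [hmb] with ω h
    rw [Real.norm_eq_abs, abs_of_pos (Real.exp_pos _), Real.exp_le_exp]
    have b1 := h s1 h1
    have b2 := h s2 h2
    have hT : 0 ≤ (t:ℝ) * (1 + |μ|) := by positivity
    calc c * M s1 ω + d * M s2 ω ≤ |c * M s1 ω| + |d * M s2 ω| := by
          exact le_trans (le_abs_self _) (abs_add_le _ _)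
      _ = |c| * |M s1 ω| + |d| * |M s2 ω| := by rw [abs_mul, abs_mul]
      _ ≤ |c| * (t * (1 + |μ|)) + |d| * (t * (1 + |μ|)) := by
          exact add_le_add (mul_le_mul_of_nonneg_left b1 (abs_nonneg c))
            (mul_le_mul_of_nonneg_left b2 (abs_nonneg d))
      _ = (|c| + |d|) * (t * (1 + |μ|)) := by ring
  have hintexp : ∀ (c : ℝ) (s : ℕ), s ≤ t → Integrable (fun ω => Real.exp (c * M s ω)) P := by
    intro c s hs
    have := hint2 c 0 s s hs hs
    simpa using this
  -- the first-passage events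
  set A : ℕ → Set Ω := fun s =>
    {ω | a ≤ M s ω ∧ ∀ u ∈ Finset.Icc 1 (s-1), M u ω < a} with hA
  have hAmeas : ∀ s ∈ Finset.Icc 1 n, MeasurableSet (A s) := by
    intro s hs
    rw [Finset.mem_Icc] at hs
    have h1 : A s = {ω | a ≤ M s ω} ∩ ⋂ u ∈ Finset.Icc 1 (s-1), {ω | M u ω < a} := by
      ext ω; simp [hA, Set.mem_iInter]
    rw [h1]
    refine (measurableSet_le measurable_const (hMmeas s (le_trans hs.2 hnt))).inter ?_
    refine MeasurableSet.biInter (Set.to_countable _) (fun u hu => ?_)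
    have hu' : 1 ≤ u ∧ u ≤ s - 1 := Finset.mem_Icc.mp hu
    obtain ⟨hu1, hu2⟩ := hu'
    exact measurableSet_lt (hMmeas u (by omega)) measurable_const
  -- the target event is included in the union of the A s
  have hEsub : {ω | ∃ s ∈ Finset.Icc 1 n, a ≤ (∑ u ∈ Finset.Icc 1 s, X u ω) - s * μ}
      ⊆ ⋃ s ∈ Finset.Icc 1 n, A s := by
    intro ω hω
    obtain ⟨s, hs, hsa⟩ := hω
    set Q := (Finset.Icc 1 n).filter (fun s' => a ≤ M s' ω) with hQ
    have hQne : Q.Nonempty := ⟨s, by simp [hQ, Finset.mem_filter, hs, hsa, hM]⟩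
    set s0 := Q.min' hQne with hs0
    have hs0Q : s0 ∈ Q := Q.min'_mem hQne
    rw [hQ, Finset.mem_filter] at hs0Q
    have hs0n : 1 ≤ s0 ∧ s0 ≤ n := Finset.mem_Icc.mp hs0Q.1
    refine Set.mem_biUnion (Finset.mem_Icc.mpr hs0n) ?_
    refine ⟨hs0Q.2, fun u hu => ?_⟩
    rw [Finset.mem_Icc] at hu
    by_contra hcon
    push_neg at hcon
    have huQ : u ∈ Q := by
      rw [hQ, Finset.mem_filter, Finset.mem_Icc]
      exact ⟨⟨hu.1, by omega⟩, hcon⟩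
    have := Q.min'_le u huQ
    omega
  -- disjointness
  have hdisj : Set.Pairwise ↑(Finset.Icc 1 n) (Function.onFun Disjoint A) := by
    have key : ∀ s1 ∈ (Finset.Icc 1 n : Finset ℕ), ∀ s2 ∈ (Finset.Icc 1 n : Finset ℕ),
        s1 < s2 → Disjoint (A s1) (A s2) := by
      intro s1 hs1 s2 hs2 hlt
      rw [Finset.mem_Icc] at hs1 hs2
      rw [Set.disjoint_left]
      rintro ω ⟨h1, _⟩ ⟨_, h2⟩
      have := h2 s1 (by rw [Finset.mem_Icc]; omega)
      linarith
    intro s1 hs1 s2 hs2 hne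
    simp only [Finset.mem_coe] at hs1 hs2
    rcases lt_or_gt_of_ne hne with h | h
    · exact key s1 hs1 s2 hs2 h
    · exact (key s2 hs2 s1 hs1 h).symm
  -- key inequality for each first-passage piece
  have hkey : ∀ s ∈ Finset.Icc 1 n, Real.exp (l * a) * (P (A s)).toReal
      ≤ ∫ ω in A s, Real.exp (l * M n ω) ∂P := by
    intro s hsmem
    have hs := Finset.mem_Icc.mp hsmem
    have hst : s ≤ t := le_trans hs.2 hnt
    -- index sets
    set S : Finset ι := Finset.univ.filter (fun i : ι => (i : ℕ) ≤ s) with hS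
    set T : Finset ι := Finset.univ.filter (fun i : ι => s < (i : ℕ) ∧ (i : ℕ) ≤ n) with hT
    have hST : Disjoint S T := by
      rw [Finset.disjoint_left]
      intro i hi1 hi2
      rw [hS, Finset.mem_filter] at hi1
      rw [hT, Finset.mem_filter] at hi2
      omega
    have hIndST := hindep.indepFun_finset S T hST (fun i => hmeas i.1 i.2)
    -- the function of the first block
    set mS : (↥S → ℝ) → ℕ → ℝ := fun y u =>
      (∑ i ∈ Finset.univ.filter (fun i : ↥S => ((i : ι) : ℕ) ≤ u), y i) - u * μ with hmS
    have hmSmeas : ∀ u, Measurable (fun y => mS y u) := by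
      intro u
      exact (Finset.measurable_sum _ (fun i _ => measurable_pi_apply i)).sub measurable_const
    set BF : Set (↥S → ℝ) :=
      {y | a ≤ mS y s ∧ ∀ u ∈ Finset.Icc 1 (s-1), mS y u < a} with hBF
    have hBFmeas : MeasurableSet BF := by
      have h1 : BF = {y | a ≤ mS y s} ∩ ⋂ u ∈ Finset.Icc 1 (s-1), {y | mS y u < a} := by
        ext y; simp [hBF, Set.mem_iInter]
      rw [h1]
      exact (measurableSet_le measurable_const (hmSmeas s)).inter
        (MeasurableSet.biInter (Set.to_countable _)
          (fun u _ => measurableSet_lt (hmSmeas u) measurable_const))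
    set F : (↥S → ℝ) → ℝ := Set.indicator BF (fun y => Real.exp (l * mS y s)) with hF
    have hFmeas : Measurable F := (((hmSmeas s).const_mul l).exp).indicator hBFmeas
    -- the function of the second block
    set GT : (↥T → ℝ) → ℝ :=
      fun y => Real.exp (l * ((∑ i ∈ Finset.univ, y i) - ((n : ℝ) - s) * μ)) with hGT
    have hGTmeas : Measurable GT := by
      exact (((Finset.measurable_sum _ (fun i _ => measurable_pi_apply i)).sub
        measurable_const).const_mul l).exp
    -- sums through coercions
    have hsumS : ∀ ω, ∀ u ≤ s, ∑ i ∈ Finset.univ.filter (fun i : ↥S => ((i : ι) : ℕ) ≤ u),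
        X (((i : ι) : ℕ)) ω = ∑ v ∈ Finset.Icc 1 u, X v ω := by
      intro ω u hu
      refine pud_sum_coe (fun i : ↥S => ((i : ι) : ℕ)) (fun v => X v ω) _ _ ?_ ?_ ?_
      · intro a1 h1 a2 h2 h
        exact Subtype.ext (Subtype.ext h)
      · intro i hi
        rw [Finset.mem_filter] at hi
        have h2 := (i : ι).2
        rw [Finset.mem_Icc] at h2
        show ((i : ι) : ℕ) ∈ Finset.Icc 1 u
        rw [Finset.mem_Icc]
        exact ⟨h2.1, hi.2⟩
      · intro v hv
        rw [Finset.mem_Icc] at hv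
        have hvt : v ∈ Finset.Icc 1 t := by rw [Finset.mem_Icc]; omega
        have hvS : (⟨v, hvt⟩ : ι) ∈ S := by
          rw [hS, Finset.mem_filter]
          refine ⟨Finset.mem_univ _, ?_⟩
          show v ≤ s
          omega
        refine ⟨⟨⟨v, hvt⟩, hvS⟩, Finset.mem_filter.mpr ⟨Finset.mem_univ _, ?_⟩, rfl⟩
        show v ≤ u
        exact hv.2
    have hmS_eq : ∀ ω, ∀ u ≤ s, mS (fun i : ↥S => X ((i : ι) : ℕ) ω) u = M u ω := by
      intro ω u hu
      show (∑ i ∈ Finset.univ.filter (fun i : ↥S => ((i : ι) : ℕ) ≤ u),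
        X ((i : ι) : ℕ) ω) - u * μ = M u ω
      rw [hsumS ω u hu]
    -- sum over T
    have hTsum : ∀ ω, ∑ i ∈ (Finset.univ : Finset ↥T), X ((i : ι) : ℕ) ω
        = ∑ v ∈ (Finset.Icc 1 n).filter (fun v => s < v), X v ω := by
      intro ω
      refine pud_sum_coe (fun i : ↥T => ((i : ι) : ℕ)) (fun v => X v ω) _ _ ?_ ?_ ?_
      · intro a1 h1 a2 h2 h
        exact Subtype.ext (Subtype.ext h)
      · intro i _
        have h2 := (i : ι).2
        rw [Finset.mem_Icc] at h2
        have h3 : ((i : ι) ∈ Finset.univ) ∧ (s < ((i : ι) : ℕ) ∧ ((i : ι) : ℕ) ≤ n) :=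
          Finset.mem_filter.mp i.2
        show ((i : ι) : ℕ) ∈ (Finset.Icc 1 n).filter (fun v => s < v)
        rw [Finset.mem_filter, Finset.mem_Icc]
        exact ⟨⟨h2.1, h3.2.2⟩, h3.2.1⟩
      · intro v hv
        rw [Finset.mem_filter, Finset.mem_Icc] at hv
        have hvt : v ∈ Finset.Icc 1 t := by rw [Finset.mem_Icc]; omega
        have hvT : (⟨v, hvt⟩ : ι) ∈ T := by
          rw [hT, Finset.mem_filter]
          refine ⟨Finset.mem_univ _, ?_, ?_⟩
          · show s < v; omega
          · show v ≤ n; omega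
        exact ⟨⟨⟨v, hvt⟩, hvT⟩, Finset.mem_univ _, rfl⟩
    have hMdiff : ∀ ω, M n ω - M s ω
        = (∑ v ∈ (Finset.Icc 1 n).filter (fun v => s < v), X v ω) - ((n : ℝ) - s) * μ := by
      intro ω
      have hsplit := Finset.sum_filter_add_sum_filter_not (Finset.Icc 1 n)
        (fun v => s < v) (fun v => X v ω)
      have hflt : (Finset.Icc 1 n).filter (fun v => ¬ s < v) = Finset.Icc 1 s := by
        ext v
        rw [Finset.mem_filter, Finset.mem_Icc, Finset.mem_Icc]
        constructor
        · rintro ⟨⟨h1, _⟩, h3⟩; omega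
        · rintro ⟨h1, h2⟩; exact ⟨⟨h1, by omega⟩, by omega⟩
      rw [hflt] at hsplit
      rw [hM]
      simp only
      have : (∑ u ∈ Finset.Icc 1 n, X u ω)
          = (∑ v ∈ (Finset.Icc 1 n).filter (fun v => s < v), X v ω)
            + ∑ u ∈ Finset.Icc 1 s, X u ω := hsplit.symm
      rw [this]
      ring
    have hGcomp : ∀ ω, GT (fun i : ↥T => X ((i : ι) : ℕ) ω)
        = Real.exp (l * (M n ω - M s ω)) := by
      intro ω
      rw [hGT]
      simp only
      rw [hTsum ω, hMdiff ω]
    have hFcomp : ∀ ω, F (fun i : ↥S => X ((i : ι) : ℕ) ω)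
        = Set.indicator (A s) (fun ω' => Real.exp (l * M s ω')) ω := by
      intro ω
      have hiff : (fun i : ↥S => X ((i : ι) : ℕ) ω) ∈ BF ↔ ω ∈ A s := by
        rw [hBF, hA]
        simp only [Set.mem_setOf_eq]
        rw [hmS_eq ω s le_rfl]
        constructor
        · rintro ⟨h1, h2⟩
          refine ⟨h1, fun u hu => ?_⟩
          have hu' := Finset.mem_Icc.mp hu
          have := h2 u hu
          rwa [hmS_eq ω u (by omega)] at this
        · rintro ⟨h1, h2⟩
          refine ⟨h1, fun u hu => ?_⟩
          have hu' := Finset.mem_Icc.mp hu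
          rw [hmS_eq ω u (by omega)]
          exact h2 u hu
      by_cases hmem : ω ∈ A s
      · rw [hF, Set.indicator_of_mem (hiff.mpr hmem), Set.indicator_of_mem hmem,
          hmS_eq ω s le_rfl]
      · rw [hF, Set.indicator_of_notMem (fun hc => hmem (hiff.mp hc)),
          Set.indicator_of_notMem hmem]
    -- independence of the two composed functions
    set f : Ω → ℝ := fun ω => Set.indicator (A s) (fun ω' => Real.exp (l * M s ω')) ω with hf
    set g : Ω → ℝ := fun ω => Real.exp (l * (M n ω - M s ω)) with hg
    have hIndfg : IndepFun f g P := by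
      have hcomp := hIndST.comp hFmeas hGTmeas
      have e1 : (F ∘ fun ω (i : ↥S) => X ((i : ι) : ℕ) ω) = f := funext hFcomp
      have e2 : (GT ∘ fun ω (i : ↥T) => X ((i : ι) : ℕ) ω) = g := funext hGcomp
      rwa [e1, e2] at hcomp
    have hf_int : Integrable f P := by
      rw [hf]
      have h1 : Integrable ((A s).indicator (fun ω => Real.exp (l * M s ω))) P :=
        MeasureTheory.Integrable.indicator (hintexp l s hst) (hAmeas s hsmem)
      exact h1
    have hg_int : Integrable g P := by
      have he : g = fun ω => Real.exp (l * M n ω + (-l) * M s ω) := by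
        funext ω
        show Real.exp (l * (M n ω - M s ω)) = Real.exp (l * M n ω + (-l) * M s ω)
        exact congrArg Real.exp (by ring)
      rw [he]
      exact hint2 l (-l) n s hnt hst
    have hfg_eq : (fun ω => f ω * g ω)
        = Set.indicator (A s) (fun ω => Real.exp (l * M n ω)) := by
      funext ω
      show (Set.indicator (A s) (fun ω' => Real.exp (l * M s ω')) ω)
          * Real.exp (l * (M n ω - M s ω))
        = Set.indicator (A s) (fun ω => Real.exp (l * M n ω)) ω
      by_cases hmem : ω ∈ A s
      · rw [Set.indicator_of_mem hmem, Set.indicator_of_mem hmem, ← Real.exp_add]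
        exact congrArg Real.exp (by ring)
      · rw [Set.indicator_of_notMem hmem, Set.indicator_of_notMem hmem, zero_mul]
    have hprod : ∫ ω, f ω * g ω ∂P = (∫ ω, f ω ∂P) * ∫ ω, g ω ∂P :=
      hIndfg.integral_fun_mul_eq_mul_integral hf_int.aestronglyMeasurable hg_int.aestronglyMeasurable
    -- ∫ g ≥ 1
    have hg_ge1 : 1 ≤ ∫ ω, g ω ∂P := by
      have hlow : Integrable (fun ω => l * (M n ω - M s ω) + 1) P := by
        have h1 : Integrable (fun ω => l * (M n ω - M s ω)) P :=
          ((hMint n hnt).sub (hMint s hst)).const_mul l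
        exact h1.add (integrable_const 1)
      have hmono : ∫ ω, (l * (M n ω - M s ω) + 1) ∂P ≤ ∫ ω, g ω ∂P := by
        refine integral_mono_ae hlow hg_int (ae_of_all _ (fun ω => ?_))
        show l * (M n ω - M s ω) + 1 ≤ Real.exp (l * (M n ω - M s ω))
        exact Real.add_one_le_exp _
      have hcalc : ∫ ω, (l * (M n ω - M s ω) + 1) ∂P = 1 := by
        have h1 : Integrable (fun ω => l * (M n ω - M s ω)) P :=
          ((hMint n hnt).sub (hMint s hst)).const_mul l
        rw [integral_add h1 (integrable_const 1), integral_const]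
        have h2 : ∫ ω, l * (M n ω - M s ω) ∂P = l * ∫ ω, (M n ω - M s ω) ∂P :=
          integral_const_mul _ _
        rw [h2, integral_sub (hMint n hnt) (hMint s hst), hMmean n hnt, hMmean s hst]
        simp
      linarith [hcalc ▸ hmono]
    -- ∫ f ≥ exp(l*a) * P(A s)
    have hf_lb : Real.exp (l * a) * (P (A s)).toReal ≤ ∫ ω, f ω ∂P := by
      show Real.exp (l * a) * (P (A s)).toReal
        ≤ ∫ ω, Set.indicator (A s) (fun ω' => Real.exp (l * M s ω')) ω ∂P
      rw [integral_indicator (hAmeas s hsmem)]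
      have : ∫ _ω in A s, Real.exp (l * a) ∂P ≤ ∫ ω in A s, Real.exp (l * M s ω) ∂P := by
        refine setIntegral_mono_on (integrableOn_const (measure_ne_top P _))
          ((hintexp l s hst).integrableOn) (hAmeas s hsmem) (fun ω hω => ?_)
        exact Real.exp_le_exp.mpr (mul_le_mul_of_nonneg_left hω.1 hl0.le)
      rw [setIntegral_const] at this
      calc Real.exp (l * a) * (P (A s)).toReal
          = (P (A s)).toReal • Real.exp (l * a) := by rw [smul_eq_mul]; ring
        _ ≤ _ := this
    have hf_nonneg : 0 ≤ ∫ ω, f ω ∂P := by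
      refine integral_nonneg (fun ω => ?_)
      exact Set.indicator_nonneg (fun _ _ => Real.exp_nonneg _) ω
    calc Real.exp (l * a) * (P (A s)).toReal
        ≤ ∫ ω, f ω ∂P := hf_lb
      _ = (∫ ω, f ω ∂P) * 1 := (mul_one _).symm
      _ ≤ (∫ ω, f ω ∂P) * ∫ ω, g ω ∂P := mul_le_mul_of_nonneg_left hg_ge1 hf_nonneg
      _ = ∫ ω, f ω * g ω ∂P := hprod.symm
      _ = ∫ ω, Set.indicator (A s) (fun ω => Real.exp (l * M n ω)) ω ∂P := by rw [hfg_eq]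
      _ = ∫ ω in A s, Real.exp (l * M n ω) ∂P := integral_indicator (hAmeas s hsmem)
  -- the mgf bound on the full sum
  have hmgf : ∫ ω, Real.exp (l * M n ω) ∂P ≤ Real.exp (n * l ^ 2 / 8) := by
    set Y : ι → Ω → ℝ := fun i ω => X ((i : ℕ)) ω - μ with hY
    have hYmeas : ∀ i : ι, Measurable (Y i) := fun i => (hmeas i.1 i.2).sub measurable_const
    have hYindep : iIndepFun Y P := by
      have h := hindep.comp (fun _ : ι => fun x : ℝ => x - μ)
        (fun _ => measurable_id.sub measurable_const)
      exact h
    set Sn : Finset ι := Finset.univ.filter (fun i : ι => (i : ℕ) ≤ n) with hSn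
    have hsumn : ∀ ω, ∑ i ∈ Sn, Y i ω = M n ω := by
      intro ω
      have h1 : ∑ i ∈ Sn, (fun v => X v ω - μ) ((i : ℕ)) = ∑ v ∈ Finset.Icc 1 n,
          (fun v => X v ω - μ) v := by
        refine pud_sum_coe (fun i : ι => (i : ℕ)) (fun v => X v ω - μ) _ _ ?_ ?_ ?_
        · intro a1 _ a2 _ h
          exact Subtype.ext h
        · intro i hi
          rw [hSn, Finset.mem_filter] at hi
          have h2 := i.2
          rw [Finset.mem_Icc] at h2
          rw [Finset.mem_Icc]
          exact ⟨h2.1, hi.2⟩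
        · intro v hv
          rw [Finset.mem_Icc] at hv
          have hvt : v ∈ Finset.Icc 1 t := by rw [Finset.mem_Icc]; omega
          refine ⟨⟨v, hvt⟩, ?_, rfl⟩
          rw [hSn, Finset.mem_filter]
          refine ⟨Finset.mem_univ _, ?_⟩
          show v ≤ n
          exact hv.2
      have h2 : ∑ v ∈ Finset.Icc 1 n, (X v ω - μ) = (∑ v ∈ Finset.Icc 1 n, X v ω) - n * μ := by
        rw [Finset.sum_sub_distrib, Finset.sum_const, Nat.card_Icc]
        simp [nsmul_eq_mul]
      calc ∑ i ∈ Sn, Y i ω = ∑ v ∈ Finset.Icc 1 n, (X v ω - μ) := h1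
        _ = M n ω := by rw [h2]
    have hcard : Sn.card = n := by
      have h := pud_sum_coe (fun i : ι => (i : ℕ)) (fun _ => (1:ℝ)) (Finset.Icc 1 n) Sn
        (fun a1 _ a2 _ h => Subtype.ext h)
        (fun i hi => by
          rw [hSn, Finset.mem_filter] at hi
          have h2 := i.2
          rw [Finset.mem_Icc] at h2
          rw [Finset.mem_Icc]
          exact ⟨h2.1, hi.2⟩)
        (fun v hv => by
          rw [Finset.mem_Icc] at hv
          have hvt : v ∈ Finset.Icc 1 t := by rw [Finset.mem_Icc]; omega
          refine ⟨⟨v, hvt⟩, ?_, rfl⟩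
          rw [hSn, Finset.mem_filter]
          exact ⟨Finset.mem_univ _, by show v ≤ n; exact hv.2⟩)
      rw [Finset.sum_const, Finset.sum_const, Nat.card_Icc] at h
      rw [nsmul_eq_mul, nsmul_eq_mul, mul_one, mul_one] at h
      exact_mod_cast h
    have hmgf_eq : ∫ ω, Real.exp (l * M n ω) ∂P = mgf (∑ i ∈ Sn, Y i) P l := by
      rw [mgf]
      congr 1
      funext ω
      show Real.exp (l * M n ω) = Real.exp (l * (∑ i ∈ Sn, Y i) ω)
      rw [Finset.sum_apply, hsumn ω]
    rw [hmgf_eq, hYindep.mgf_sum hYmeas Sn]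
    calc ∏ i ∈ Sn, mgf (Y i) P l ≤ ∏ _i ∈ Sn, Real.exp (l ^ 2 / 8) := by
          refine Finset.prod_le_prod (fun i _ => mgf_nonneg) (fun i hi => ?_)
          have h := pud_mgf_one P (X (i : ℕ)) (hmeas i.1 i.2) (hbdd i.1 i.2) μ
            (hmean i.1 i.2) l
          exact h
      _ = Real.exp (n * l ^ 2 / 8) := by
          rw [Finset.prod_const, hcard, ← Real.exp_nat_mul]
          congr 1
          ring
  -- assembling
  have hsum_le : ∑ s ∈ Finset.Icc 1 n, (P (A s)).toReal ≤ Real.exp (-(2 * a ^ 2 / n)) := by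
    have hmain : Real.exp (l * a) * ∑ s ∈ Finset.Icc 1 n, (P (A s)).toReal
        ≤ Real.exp (n * l ^ 2 / 8) := by
      rw [Finset.mul_sum]
      calc ∑ s ∈ Finset.Icc 1 n, Real.exp (l * a) * (P (A s)).toReal
          ≤ ∑ s ∈ Finset.Icc 1 n, ∫ ω in A s, Real.exp (l * M n ω) ∂P :=
            Finset.sum_le_sum hkey
        _ = ∫ ω in ⋃ s ∈ Finset.Icc 1 n, A s, Real.exp (l * M n ω) ∂P :=
            (integral_biUnion_finset _ hAmeas hdisj
              (fun s _ => (hintexp l n hnt).integrableOn)).symm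
        _ ≤ ∫ ω, Real.exp (l * M n ω) ∂P :=
            setIntegral_le_integral (hintexp l n hnt)
              (ae_of_all _ (fun ω => Real.exp_nonneg _))
        _ ≤ Real.exp (n * l ^ 2 / 8) := hmgf
    have hepos : (0:ℝ) < Real.exp (l * a) := Real.exp_pos _
    have h2 : ∑ s ∈ Finset.Icc 1 n, (P (A s)).toReal
        ≤ Real.exp (n * l ^ 2 / 8) / Real.exp (l * a) := by
      rw [le_div_iff₀ hepos]
      calc (∑ s ∈ Finset.Icc 1 n, (P (A s)).toReal) * Real.exp (l * a)
          = Real.exp (l * a) * ∑ s ∈ Finset.Icc 1 n, (P (A s)).toReal := by ring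
        _ ≤ _ := hmain
    calc ∑ s ∈ Finset.Icc 1 n, (P (A s)).toReal
        ≤ Real.exp (n * l ^ 2 / 8) / Real.exp (l * a) := h2
      _ = Real.exp (n * l ^ 2 / 8 - l * a) := (Real.exp_sub _ _).symm
      _ = Real.exp (-(2 * a ^ 2 / n)) := by
          congr 1
          rw [hl]
          field_simp
          ring
  calc P {ω | ∃ s ∈ Finset.Icc 1 n, a ≤ (∑ u ∈ Finset.Icc 1 s, X u ω) - s * μ}
      ≤ P (⋃ s ∈ Finset.Icc 1 n, A s) := measure_mono hEsub
    _ ≤ ∑ s ∈ Finset.Icc 1 n, P (A s) := measure_biUnion_finset_le _ _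
    _ = ENNReal.ofReal (∑ s ∈ Finset.Icc 1 n, (P (A s)).toReal) := by
        rw [ENNReal.ofReal_sum_of_nonneg (fun _ _ => ENNReal.toReal_nonneg)]
        exact Finset.sum_congr rfl (fun s _ => (ENNReal.ofReal_toReal (measure_ne_top P _)).symm)
    _ ≤ ENNReal.ofReal (Real.exp (-(2 * a ^ 2 / n))) := ENNReal.ofReal_le_ofReal hsum_le
end Ville

set_option maxHeartbeats 1600000 in
/-- One-sided anytime upper deviation: for independent `[0,1]`-valued random variables
`X 1, …, X t` with common mean `μ`, the probability that some prefix empirical mean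
exceeds the true mean by the confidence width `β(s, δ)` is at most `δ / 4`. -/
theorem prefix_upper_deviation
    {Ω : Type*} [MeasurableSpace Ω] (P : Measure Ω) [IsProbabilityMeasure P]
    (t : ℕ) (ht : 1 ≤ t) (δ : ℝ) (hδ : δ ∈ Set.Ioo (0 : ℝ) 1)
    (X : ℕ → Ω → ℝ)
    (hmeas : ∀ u ∈ Finset.Icc 1 t, Measurable (X u))
    (hindep : iIndepFun
      (fun u : (Finset.Icc 1 t : Finset ℕ) => X u.val) P)
    (hbdd : ∀ u ∈ Finset.Icc 1 t, ∀ᵐ ω ∂P, X u ω ∈ Set.Icc (0 : ℝ) 1)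
    (μ : ℝ) (hmean : ∀ u ∈ Finset.Icc 1 t, ∫ ω, X u ω ∂P = μ) :
    P {ω | ∃ s ∈ Finset.Icc 1 t,
        (∑ u ∈ Finset.Icc 1 s, X u ω) / (s : ℝ) - μ
          ≥ Real.sqrt (2 * Real.log (4 * Real.logb 2 ((t : ℝ) + 1) / δ) / (s : ℝ))}
      ≤ ENNReal.ofReal (δ / 4) := by
  classical
  obtain ⟨hδ0, hδ1⟩ := hδ
  set L : ℝ := Real.logb 2 ((t : ℝ) + 1) with hLdef
  have htR : (1:ℝ) ≤ (t:ℝ) := by exact_mod_cast ht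
  have hL1 : 1 ≤ L := by
    have h2 : Real.logb 2 2 ≤ Real.logb 2 ((t:ℝ) + 1) :=
      Real.logb_le_logb_of_le (by norm_num) (by norm_num) (by linarith)
    rw [Real.logb_self_eq_one (by norm_num : (1:ℝ) < 2)] at h2
    exact h2
  set C : ℝ := 4 * L / δ with hCdef
  have hC4 : 4 ≤ C := by
    have h1 : (4:ℝ) ≤ 4 * L := by linarith
    have h2 : 4 * L ≤ 4 * L / δ := le_div_self (by linarith) hδ0 hδ1.le
    rw [hCdef]; linarith
  have hCpos : 0 < C := by linarith
  set lnC : ℝ := Real.log C with hlnCdef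
  have hlnCpos : 0 < lnC := Real.log_pos (by linarith)
  -- the dyadic blocks
  set K : ℕ := Nat.log 2 t + 1 with hK
  set nk : ℕ → ℕ := fun k => min (2 ^ (k+1) - 1) t with hnk
  set ak : ℕ → ℝ := fun k => Real.sqrt (2 * 2 ^ k * lnC) with hak
  have hnk1 : ∀ k, 1 ≤ nk k := by
    intro k
    rw [hnk]
    refine le_min ?_ ht
    have : 2 ≤ 2 ^ (k+1) := Nat.one_lt_two_pow (by omega)
    omega
  have hnkt : ∀ k, nk k ≤ t := fun k => min_le_right _ _
  have hakpos : ∀ k, 0 < ak k := by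
    intro k
    rw [hak]
    apply Real.sqrt_pos.mpr
    positivity
  -- inclusion into the blocks
  have hsubE : {ω | ∃ s ∈ Finset.Icc 1 t,
        (∑ u ∈ Finset.Icc 1 s, X u ω) / (s : ℝ) - μ
          ≥ Real.sqrt (2 * Real.log (4 * Real.logb 2 ((t : ℝ) + 1) / δ) / (s : ℝ))}
      ⊆ ⋃ k ∈ Finset.range K, {ω | ∃ s ∈ Finset.Icc 1 (nk k),
          ak k ≤ (∑ u ∈ Finset.Icc 1 s, X u ω) - s * μ} := by
    intro ω hω
    obtain ⟨s, hs, hdev⟩ := hω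
    rw [Finset.mem_Icc] at hs
    set k := Nat.log 2 s with hkdef
    have hs0 : s ≠ 0 := by omega
    have h2k : 2 ^ k ≤ s := Nat.pow_log_le_self 2 hs0
    have hs2k : s < 2 ^ (k+1) := Nat.lt_pow_succ_log_self (by norm_num) s
    have hkK : k ∈ Finset.range K := by
      rw [Finset.mem_range, hK]
      have := Nat.log_mono_right (b := 2) hs.2
      omega
    refine Set.mem_biUnion hkK ?_
    refine ⟨s, ?_, ?_⟩
    · rw [Finset.mem_Icc]
      refine ⟨hs.1, le_min (by omega) hs.2⟩
    · -- from the normalized deviation to the sum deviation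
      have hsR : (0:ℝ) < s := by exact_mod_cast hs.1
      have hdev' : Real.sqrt (2 * lnC / s) + μ ≤ (∑ u ∈ Finset.Icc 1 s, X u ω) / s := by
        have := hdev
        rw [ge_iff_le] at this
        linarith
      have hmul : ((s:ℝ)) * (Real.sqrt (2 * lnC / s) + μ) ≤ ∑ u ∈ Finset.Icc 1 s, X u ω := by
        rw [mul_comm]
        exact (le_div_iff₀ hsR).mp hdev'
      have hsqrt_eq : (s:ℝ) * Real.sqrt (2 * lnC / s) = Real.sqrt (2 * s * lnC) := by
        rw [← Real.sqrt_sq hsR.le, ← Real.sqrt_mul (sq_nonneg _)]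
        congr 1
        rw [Real.sqrt_sq hsR.le]
        field_simp
      have hmono : ak k ≤ Real.sqrt (2 * s * lnC) := by
        rw [hak]
        apply Real.sqrt_le_sqrt
        have h2kR : (2:ℝ) ^ k ≤ (s:ℝ) := by exact_mod_cast h2k
        nlinarith
      calc ak k ≤ Real.sqrt (2 * s * lnC) := hmono
        _ = (s:ℝ) * Real.sqrt (2 * lnC / s) := hsqrt_eq.symm
        _ ≤ (∑ u ∈ Finset.Icc 1 s, X u ω) - s * μ := by nlinarith [hmul]
  -- each block probability
  have hblock : ∀ k, P {ω | ∃ s ∈ Finset.Icc 1 (nk k),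
      ak k ≤ (∑ u ∈ Finset.Icc 1 s, X u ω) - s * μ}
      ≤ ENNReal.ofReal (Real.exp (-(2 * lnC))) := by
    intro k
    refine le_trans (pud_ville P t X hmeas hindep hbdd μ hmean (nk k) (hnk1 k) (hnkt k)
      (ak k) (hakpos k)) ?_
    apply ENNReal.ofReal_le_ofReal
    apply Real.exp_le_exp.mpr
    rw [neg_le_neg_iff]
    -- 2 * lnC ≤ 2 * (ak k)^2 / nk k
    have hsq : (ak k) ^ 2 = 2 * 2 ^ k * lnC := by
      rw [hak, Real.sq_sqrt (by positivity)]
    have hnkpos : (0:ℝ) < (nk k : ℝ) := by exact_mod_cast hnk1 k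
    rw [hsq, le_div_iff₀ hnkpos]
    have hnk2 : ((nk k : ℝ)) ≤ 2 * 2 ^ k := by
      have h1 : nk k ≤ 2 ^ (k+1) - 1 := min_le_left _ _
      have h2 : (nk k : ℝ) ≤ ((2 ^ (k+1) - 1 : ℕ) : ℝ) := by exact_mod_cast h1
      have h3 : ((2 ^ (k+1) - 1 : ℕ) : ℝ) ≤ 2 * 2 ^ k := by
        have : (2:ℕ) ^ (k+1) - 1 ≤ 2 ^ (k+1) := Nat.sub_le _ _
        have h4 : ((2 ^ (k+1) - 1 : ℕ) : ℝ) ≤ ((2 ^ (k+1) : ℕ) : ℝ) := by exact_mod_cast this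
        have h5 : ((2 ^ (k+1) : ℕ) : ℝ) = 2 * 2 ^ k := by
          push_cast
          ring
        linarith
      linarith
    nlinarith [hlnCpos.le]
  -- summing up
  have hKL : (K : ℝ) ≤ L + 1 := by
    rw [hK]
    push_cast
    have h1 : ((Nat.log 2 t : ℝ)) ≤ L := by
      have h2 : (2:ℝ) ^ (Nat.log 2 t) ≤ (t:ℝ) + 1 := by
        have := Nat.pow_log_le_self 2 (by omega : t ≠ 0)
        have h3 : ((2 ^ Nat.log 2 t : ℕ) : ℝ) ≤ (t:ℝ) := by exact_mod_cast this
        push_cast at h3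
        linarith
      calc ((Nat.log 2 t : ℝ)) = Real.logb 2 ((2:ℝ) ^ (Nat.log 2 t)) := by
            rw [Real.logb_pow, Real.logb_self_eq_one (by norm_num), mul_one]
        _ ≤ L := Real.logb_le_logb_of_le (by norm_num) (by positivity) h2
    linarith
  have hfinal : (K : ℝ) * Real.exp (-(2 * lnC)) ≤ δ / 4 := by
    have hexp2 : Real.exp (-(2 * lnC)) = 1 / (C * C) := by
      rw [show -(2 * lnC) = -(lnC + lnC) by ring, Real.exp_neg, Real.exp_add,
        hlnCdef, Real.exp_log hCpos]
      rw [one_div]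
    rw [hexp2]
    have hCC : 0 < C * C := by positivity
    rw [mul_one_div, div_le_div_iff₀ hCC (by norm_num : (0:ℝ) < 4)]
    -- K * 4 ≤ δ * (C * C)
    have h1 : (K:ℝ) * 4 ≤ 8 * L := by linarith
    have h2 : 8 * L ≤ 16 * L ^ 2 := by nlinarith
    have h3 : 16 * L ^ 2 ≤ δ * (C * C) := by
      rw [hCdef]
      have : δ * (4 * L / δ * (4 * L / δ)) = 16 * L ^ 2 / δ := by
        field_simp
        ring
      rw [this]
      exact le_div_self (by positivity) hδ0 hδ1.le
    linarith
  calc P {ω | ∃ s ∈ Finset.Icc 1 t,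
        (∑ u ∈ Finset.Icc 1 s, X u ω) / (s : ℝ) - μ
          ≥ Real.sqrt (2 * Real.log (4 * Real.logb 2 ((t : ℝ) + 1) / δ) / (s : ℝ))}
      ≤ P (⋃ k ∈ Finset.range K, {ω | ∃ s ∈ Finset.Icc 1 (nk k),
          ak k ≤ (∑ u ∈ Finset.Icc 1 s, X u ω) - s * μ}) := measure_mono hsubE
    _ ≤ ∑ k ∈ Finset.range K, P {ω | ∃ s ∈ Finset.Icc 1 (nk k),
          ak k ≤ (∑ u ∈ Finset.Icc 1 s, X u ω) - s * μ} := measure_biUnion_finset_le _ _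
    _ ≤ ∑ _k ∈ Finset.range K, ENNReal.ofReal (Real.exp (-(2 * lnC))) :=
        Finset.sum_le_sum (fun k _ => hblock k)
    _ = ENNReal.ofReal ((K : ℝ) * Real.exp (-(2 * lnC))) := by
        rw [Finset.sum_const, Finset.card_range, nsmul_eq_mul,
          ENNReal.ofReal_mul (by positivity), ENNReal.ofReal_natCast]
    _ ≤ ENNReal.ofReal (δ / 4) := ENNReal.ofReal_le_ofReal hfinal
end

section
/- (Anytime prefix concentration with drifting means.) Let X₁, …, X_t be independent random variables with values in [0,1] almost surely, with arbitrary (possibly differing) means E[X_u]. Then the probability that there exists a round s ∈ {1,…,t} with |μ̂(1:s) − μ(1:s)| > β(s, δ) is at most δ/2, where μ(1:s) = (1/s) Σ_{u=1}^{s} E[X_u] and β(s, δ) = √(2 log(4 log₂(t+1)/δ)/s). -/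
set_option maxHeartbeats 1600000

open MeasureTheory ProbabilityTheory Real



-- Lemma A
lemma exp_mul_le_aux {x : ℝ} (l : ℝ) (hx0 : 0 ≤ x) (hx1 : x ≤ 1) :
    Real.exp (l * x) ≤ 1 - x + x * Real.exp l := by
  have h := convexOn_exp.2 (Set.mem_univ (0:ℝ)) (Set.mem_univ l)
    (by linarith : (0:ℝ) ≤ 1 - x) hx0 (by ring)
  simpa [mul_comm] using h

-- Lemma B: the analytic Hoeffding inequality
lemma hoeffding_log_ineq {p : ℝ} (hp0 : 0 ≤ p) (hp1 : p ≤ 1) (h : ℝ) :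
    Real.log (1 - p + p * Real.exp h) ≤ p * h + h ^ 2 / 8 := by
  set g : ℝ → ℝ := fun x => 1 - p + p * Real.exp x with hg_def
  have hg : ∀ x, 0 < g x := by
    intro x
    have := Real.exp_pos x
    rcases eq_or_lt_of_le hp0 with hp | hp
    · simp [hg_def, ← hp]
    · have : 0 < p * Real.exp x := by positivity
      simp only [hg_def]; linarith
  set f : ℝ → ℝ := fun x => Real.log (g x) - (p * x + x ^ 2 / 8) with hf_def
  set f1 : ℝ → ℝ := fun x => p * Real.exp x / g x - p - x / 4 with hf1_def
  have hderiv : ∀ x, HasDerivAt f (f1 x) x := by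
    intro x
    have h1 : HasDerivAt g (p * Real.exp x) x := by
      exact ((Real.hasDerivAt_exp x).const_mul p).const_add (1 - p)
    have h2 : HasDerivAt (fun x => Real.log (g x)) (p * Real.exp x / g x) x :=
      h1.log (hg x).ne'
    have h3 : HasDerivAt (fun x : ℝ => p * x + x ^ 2 / 8) (p + x / 4) x := by
      have := ((hasDerivAt_pow 2 x).div_const 8)
      have h4 := ((hasDerivAt_id x).const_mul p).add this
      exact h4.congr_deriv (by ring)
    exact (h2.sub h3).congr_deriv (by simp [hf1_def, sub_sub])
  have hderiv2 : ∀ x, HasDerivAt f1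
      ((p * Real.exp x * g x - p * Real.exp x * (p * Real.exp x)) / (g x) ^ 2 - 1 / 4) x := by
    intro x
    have h1 : HasDerivAt (fun x => p * Real.exp x) (p * Real.exp x) x :=
      (Real.hasDerivAt_exp x).const_mul p
    have h2 : HasDerivAt g (p * Real.exp x) x := by
      exact ((Real.hasDerivAt_exp x).const_mul p).const_add (1 - p)
    have h3 := h1.div h2 (hg x).ne'
    have h4 : HasDerivAt (fun x : ℝ => p * Real.exp x / g x - p - x / 4)
        ((p * Real.exp x * g x - p * Real.exp x * (p * Real.exp x)) / (g x) ^ 2 - 1/4) x := by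
      have h5 := (h3.sub_const p).sub ((hasDerivAt_id x).div_const 4)
      exact h5
    exact h4
  have hD : ∀ x, (p * Real.exp x * g x - p * Real.exp x * (p * Real.exp x)) / (g x) ^ 2
      - 1 / 4 ≤ 0 := by
    intro x
    have hb := hg x
    have ha : 0 ≤ p * Real.exp x := by positivity
    have hab : p * Real.exp x ≤ g x := by
      simp only [hg_def]; linarith
    set a := p * Real.exp x with ha_def
    set b := g x with hb_def
    clear_value a b
    have : (a * b - a * a) / b ^ 2 ≤ 1 / 4 := by
      rw [div_le_iff₀ (by positivity)]
      nlinarith [sq_nonneg (b - 2 * a)]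
    linarith
  -- f1 is antitone
  have hf1anti : Antitone f1 := by
    have hdiff : Differentiable ℝ f1 := fun x => (hderiv2 x).differentiableAt
    refine antitone_of_deriv_nonpos hdiff ?_
    intro x
    rw [(hderiv2 x).deriv]
    exact hD x
  have hf10 : f1 0 = 0 := by
    simp [hf1_def, hg_def]
  have hf0 : f 0 = 0 := by
    simp [hf_def, hg_def]
  have key : ∀ x, f x ≤ 0 := by
    intro x
    rcases le_total 0 x with hx | hx
    · -- f antitone on [0, ∞)
      have : AntitoneOn f (Set.Ici 0) := by
        refine antitoneOn_of_deriv_nonpos (convex_Ici 0) ?_ ?_ ?_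
        · exact fun y _ => (hderiv y).differentiableAt.continuousAt.continuousWithinAt
        · exact fun y _ => (hderiv y).differentiableAt.differentiableWithinAt
        · intro y hy
          rw [(hderiv y).deriv]
          have : f1 y ≤ f1 0 := hf1anti (le_of_lt (by simpa using hy))
          linarith [hf10 ▸ this]
      have := this (Set.self_mem_Ici) (Set.mem_Ici.2 hx) hx
      linarith [hf0 ▸ this]
    · have : MonotoneOn f (Set.Iic 0) := by
        refine monotoneOn_of_deriv_nonneg (convex_Iic 0) ?_ ?_ ?_
        · exact fun y _ => (hderiv y).differentiableAt.continuousAt.continuousWithinAt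
        · exact fun y _ => (hderiv y).differentiableAt.differentiableWithinAt
        · intro y hy
          rw [(hderiv y).deriv]
          have : f1 0 ≤ f1 y := hf1anti (le_of_lt (by simpa using hy))
          linarith [hf10 ▸ this]
      have := this (Set.mem_Iic.2 hx) (Set.self_mem_Iic) hx
      linarith [hf0 ▸ this]
  have := key h
  simp only [hf_def] at this
  linarith

-- Lemma C: Hoeffding's lemma for [0,1]-valued random variables
lemma integrable_of_bounded_meas {Ω : Type*} [MeasurableSpace Ω] {P : Measure Ω}
    [IsProbabilityMeasure P] {f : Ω → ℝ} (hf : Measurable f) {C : ℝ}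
    (hC : ∀ ω, |f ω| ≤ C) : Integrable f P := by
  refine Integrable.mono' (integrable_const C) hf.aestronglyMeasurable ?_
  exact Filter.Eventually.of_forall fun ω => by simpa using hC ω

lemma hoeffding_mgf {Ω : Type*} [MeasurableSpace Ω] {P : Measure Ω}
    [IsProbabilityMeasure P] {X : Ω → ℝ} (hX : Measurable X)
    (hb : ∀ ω, X ω ∈ Set.Icc (0:ℝ) 1) (l : ℝ) :
    ∫ ω, Real.exp (l * (X ω - ∫ ω', X ω' ∂P)) ∂P ≤ Real.exp (l ^ 2 / 8) := by
  set m := ∫ ω', X ω' ∂P with hm_def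
  have hXint : Integrable X P :=
    integrable_of_bounded_meas hX (C := 1) (fun ω => by
      rcases hb ω with ⟨h0, h1⟩; rw [abs_le]; constructor <;> linarith)
  have hm0 : 0 ≤ m := integral_nonneg fun ω => (hb ω).1
  have hm1 : m ≤ 1 := by
    calc m ≤ ∫ _, (1:ℝ) ∂P := integral_mono hXint (integrable_const 1) fun ω => (hb ω).2
    _ = 1 := by simp
  have hexp_int : Integrable (fun ω => Real.exp (l * X ω)) P := by
    refine integrable_of_bounded_meas ((Real.measurable_exp).comp (hX.const_mul l))
      (C := Real.exp |l|) fun ω => ?_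
    rw [abs_of_pos (Real.exp_pos _)]
    apply Real.exp_le_exp.2
    rcases hb ω with ⟨h0, h1⟩
    rcases le_total 0 l with hl | hl
    · calc l * X ω ≤ l * 1 := by nlinarith
      _ ≤ |l| := by rw [mul_one]; exact le_abs_self l
    · calc l * X ω ≤ l * 0 := by nlinarith
      _ ≤ |l| := by simpa using abs_nonneg l
  have step1 : ∫ ω, Real.exp (l * X ω) ∂P ≤ 1 - m + m * Real.exp l := by
    have : ∫ ω, Real.exp (l * X ω) ∂P ≤ ∫ ω, (1 - X ω + X ω * Real.exp l) ∂P := by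
      refine integral_mono hexp_int ?_ fun ω => exp_mul_le_aux l (hb ω).1 (hb ω).2
      exact ((integrable_const 1).sub hXint).add (hXint.mul_const _)
    calc ∫ ω, Real.exp (l * X ω) ∂P ≤ ∫ ω, (1 - X ω + X ω * Real.exp l) ∂P := this
    _ = 1 - m + m * Real.exp l := by
        have h1 : Integrable (fun ω => 1 - X ω) P := (integrable_const 1).sub hXint
        have h2 : Integrable (fun ω => X ω * Real.exp l) P := hXint.mul_const _
        rw [integral_add h1 h2, integral_sub (integrable_const 1) hXint, integral_mul_const]
        simp [hm_def]
  have hgpos : 0 < 1 - m + m * Real.exp l := by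
    rcases eq_or_lt_of_le hm0 with hp | hp
    · simp [← hp]
    · nlinarith [Real.exp_pos l]
  have step2 : (1 - m + m * Real.exp l) ≤ Real.exp (l * m + l ^ 2 / 8) := by
    have := hoeffding_log_ineq hm0 hm1 l
    calc 1 - m + m * Real.exp l = Real.exp (Real.log (1 - m + m * Real.exp l)) :=
          (Real.exp_log hgpos).symm
    _ ≤ Real.exp (m * l + l ^ 2 / 8) := Real.exp_le_exp.2 this
    _ = Real.exp (l * m + l ^ 2 / 8) := by ring_nf
  calc ∫ ω, Real.exp (l * (X ω - m)) ∂P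
      = ∫ ω, Real.exp (-(l * m)) * Real.exp (l * X ω) ∂P := by
        congr 1; ext ω; rw [← Real.exp_add]; ring_nf
    _ = Real.exp (-(l * m)) * ∫ ω, Real.exp (l * X ω) ∂P := integral_const_mul _ _
    _ ≤ Real.exp (-(l * m)) * (1 - m + m * Real.exp l) := by
        exact mul_le_mul_of_nonneg_left step1 (le_of_lt (Real.exp_pos _))
    _ ≤ Real.exp (-(l * m)) * Real.exp (l * m + l ^ 2 / 8) :=
        mul_le_mul_of_nonneg_left step2 (le_of_lt (Real.exp_pos _))
    _ = Real.exp (l ^ 2 / 8) := by rw [← Real.exp_add]; ring_nf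


lemma integrable_of_bounded_meas' {Ω : Type*} [MeasurableSpace Ω] {P : Measure Ω}
    [IsProbabilityMeasure P] {f : Ω → ℝ} (hf : Measurable f) {C : ℝ}
    (hC : ∀ ω, |f ω| ≤ C) : Integrable f P := by
  refine Integrable.mono' (integrable_const C) hf.aestronglyMeasurable ?_
  exact Filter.Eventually.of_forall fun ω => by simpa using hC ω

lemma maximal_chernoff {Ω : Type*} [MeasurableSpace Ω] (P : Measure Ω)
    [IsProbabilityMeasure P] (N : ℕ) (Y : ℕ → Ω → ℝ) (l c : ℝ) (hl : 0 ≤ l)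
    (hmeas : ∀ u ∈ Finset.Icc 1 N, Measurable (Y u))
    (hbdd : ∀ u ∈ Finset.Icc 1 N, ∀ ω, |Y u ω| ≤ 1)
    (hcent : ∀ u ∈ Finset.Icc 1 N, ∫ ω, Y u ω ∂P = 0)
    (hmgf : ∀ u ∈ Finset.Icc 1 N, ∫ ω, Real.exp (l * Y u ω) ∂P ≤ Real.exp (l ^ 2 / 8))
    (hind : ∀ n, n ≤ N →
      Indep (⨆ u ∈ Set.Icc 1 n, MeasurableSpace.comap (Y u) inferInstance)
        (⨆ u ∈ Set.Icc (n+1) N, MeasurableSpace.comap (Y u) inferInstance) P) :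
    P {ω | ∃ n ∈ Finset.Icc 1 N, c ≤ ∑ u ∈ Finset.Icc 1 n, Y u ω}
      ≤ ENNReal.ofReal (Real.exp (-(l * c) + N * l ^ 2 / 8)) := by
  classical
  set S : ℕ → Ω → ℝ := fun n ω => ∑ u ∈ Finset.Icc 1 n, Y u ω with hS_def
  set R : ℕ → Ω → ℝ := fun n ω => ∑ u ∈ Finset.Icc (n+1) N, Y u ω with hR_def
  -- σ-algebras
  set 𝔪 : ℕ → MeasurableSpace Ω :=
    fun n => ⨆ u ∈ Set.Icc 1 n, MeasurableSpace.comap (Y u) inferInstance with h𝔪_def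
  set 𝔫 : ℕ → MeasurableSpace Ω :=
    fun n => ⨆ u ∈ Set.Icc (n+1) N, MeasurableSpace.comap (Y u) inferInstance with h𝔫_def
  have h𝔪le : ∀ n, n ≤ N → 𝔪 n ≤ ‹MeasurableSpace Ω› := by
    intro n hn
    refine iSup₂_le fun u hu => ?_
    exact measurable_iff_comap_le.1
      (hmeas u (Finset.mem_Icc.2 ⟨hu.1, le_trans hu.2 hn⟩))
  have hYm𝔪 : ∀ n u, u ∈ Set.Icc 1 n → Measurable[𝔪 n] (Y u) := by
    intro n u hu
    exact measurable_iff_comap_le.2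
      (le_iSup₂ (f := fun u _ => MeasurableSpace.comap (Y u) inferInstance) u hu)
  have hSm𝔪 : ∀ n m, m ≤ n → Measurable[𝔪 n] (S m) := by
    intro n m hm
    refine Finset.measurable_sum _ fun u hu => ?_
    rcases Finset.mem_Icc.1 hu with ⟨h1, h2⟩
    exact hYm𝔪 n u ⟨h1, le_trans h2 hm⟩
  have hRm𝔫 : ∀ n, Measurable[𝔫 n] (R n) := by
    intro n
    refine Finset.measurable_sum _ fun u hu => ?_
    rcases Finset.mem_Icc.1 hu with ⟨h1, h2⟩
    exact measurable_iff_comap_le.2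
      (le_iSup₂ (f := fun u _ => MeasurableSpace.comap (Y u) inferInstance) u ⟨h1, h2⟩)
  have hSmeas : ∀ n, n ≤ N → Measurable (S n) :=
    fun n hn => (hSm𝔪 n n le_rfl).mono (h𝔪le n hn) le_rfl
  -- bound on S
  have hSb : ∀ n, n ≤ N → ∀ ω, |S n ω| ≤ n := by
    intro n hn ω
    calc |S n ω| ≤ ∑ u ∈ Finset.Icc 1 n, |Y u ω| := Finset.abs_sum_le_sum_abs _ _
    _ ≤ ∑ u ∈ Finset.Icc 1 n, 1 := by
        refine Finset.sum_le_sum fun u hu => ?_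
        rcases Finset.mem_Icc.1 hu with ⟨h1, h2⟩
        exact hbdd u (Finset.mem_Icc.2 ⟨h1, le_trans h2 hn⟩) ω
    _ ≤ n := by simp [Nat.Icc_eq_range']
  -- the first-entry sets
  set A : ℕ → Set Ω := fun n =>
    {ω | c ≤ S n ω} ∩ ⋂ m ∈ Finset.Icc 1 (n-1), {ω | S m ω < c} with hA_def
  have hAm𝔪 : ∀ n, 1 ≤ n → n ≤ N → MeasurableSet[𝔪 n] (A n) := by
    intro n h1 h2
    refine MeasurableSet.inter ?_ ?_
    · exact measurableSet_le measurable_const (hSm𝔪 n n le_rfl)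
    · refine MeasurableSet.biInter (Finset.Icc 1 (n-1)).countable_toSet fun m hm => ?_
      rcases Finset.mem_Icc.1 hm with ⟨hm1, hm2⟩
      exact measurableSet_lt (hSm𝔪 n m (le_trans hm2 (Nat.sub_le n 1))) measurable_const
  have hAmeas : ∀ n, 1 ≤ n → n ≤ N → MeasurableSet (A n) :=
    fun n h1 h2 => (h𝔪le n h2) _ (hAm𝔪 n h1 h2)
  -- covering
  have hcover : {ω | ∃ n ∈ Finset.Icc 1 N, c ≤ S n ω} = ⋃ n ∈ Finset.Icc 1 N, A n := by
    ext ω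
    simp only [Set.mem_setOf_eq, Set.mem_iUnion]
    constructor
    · rintro ⟨n, hn, hc⟩
      rcases Finset.mem_Icc.1 hn with ⟨hn1, hn2⟩
      have hex : ∃ k, 1 ≤ k ∧ k ≤ N ∧ c ≤ S k ω := ⟨n, hn1, hn2, hc⟩
      set n₀ := Nat.find hex with hn₀
      obtain ⟨h1, h2, h3⟩ := Nat.find_spec hex
      refine ⟨n₀, Finset.mem_Icc.2 ⟨h1, h2⟩, h3, ?_⟩
      simp only [Set.mem_iInter]
      intro m hm
      rcases Finset.mem_Icc.1 hm with ⟨hm1, hm2⟩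
      have hmlt : m < n₀ := lt_of_le_of_lt hm2 (Nat.sub_lt (lt_of_lt_of_le Nat.zero_lt_one h1) Nat.one_pos)
      have := Nat.find_min hex hmlt
      push_neg at this
      exact this hm1 (le_trans (le_of_lt hmlt) h2)
    · rintro ⟨n, hn, hc, _⟩
      exact ⟨n, hn, hc⟩
  -- disjointness
  have hdisj : Set.PairwiseDisjoint (↑(Finset.Icc 1 N) : Set ℕ) A := by
    intro n hn n' hn' hne
    rcases Finset.mem_coe.1 hn |> Finset.mem_Icc.1 with ⟨hn1, hn2⟩
    rcases Finset.mem_coe.1 hn' |> Finset.mem_Icc.1 with ⟨hn'1, hn'2⟩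
    wlog hlt : n < n' generalizing n n'
    · exact (this hn' hn hne.symm hn'1 hn'2 hn1 hn2
        (lt_of_le_of_ne (le_of_not_gt hlt) (Ne.symm hne))).symm
    refine Set.disjoint_left.2 fun ω hω hω' => ?_
    have h1 : c ≤ S n ω := hω.1
    have h2 : S n ω < c := by
      have := hω'.2
      simp only [Set.mem_iInter] at this
      exact this n (Finset.mem_Icc.2 ⟨hn1, Nat.le_sub_one_of_lt hlt⟩)
    linarith
  -- integrability facts
  have hexpSint : ∀ n, n ≤ N → Integrable (fun ω => Real.exp (l * S n ω)) P := by
    intro n hn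
    refine integrable_of_bounded_meas' (Real.measurable_exp.comp ((hSmeas n hn).const_mul l))
      (C := Real.exp (l * N)) fun ω => ?_
    rw [abs_of_pos (Real.exp_pos _)]
    refine Real.exp_le_exp.2 ?_
    have h1 : |S n ω| ≤ n := hSb n hn ω
    have : S n ω ≤ N := le_trans (le_trans (le_abs_self _) h1) (by exact_mod_cast hn)
    nlinarith
  have hexpRmeas : ∀ n, n ≤ N → Measurable (fun ω => Real.exp (l * R n ω)) := by
    intro n hn
    refine Real.measurable_exp.comp (Measurable.const_mul ?_ l)
    refine Finset.measurable_sum _ fun u hu => ?_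
    rcases Finset.mem_Icc.1 hu with ⟨h1, h2⟩
    exact hmeas u (Finset.mem_Icc.2 ⟨le_trans (Nat.succ_le_succ (Nat.zero_le n)) h1, h2⟩)
  have hRb : ∀ n ω, |R n ω| ≤ N := by
    intro n ω
    calc |R n ω| ≤ ∑ u ∈ Finset.Icc (n+1) N, |Y u ω| := Finset.abs_sum_le_sum_abs _ _
    _ ≤ ∑ u ∈ Finset.Icc (n+1) N, 1 := by
        refine Finset.sum_le_sum fun u hu => ?_
        rcases Finset.mem_Icc.1 hu with ⟨h1, h2⟩
        exact hbdd u (Finset.mem_Icc.2 ⟨le_trans (Nat.succ_le_succ (Nat.zero_le n)) h1, h2⟩) ω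
    _ ≤ N := by
        rw [Finset.sum_const, Nat.smul_one_eq_cast, Nat.card_Icc]
        exact_mod_cast Nat.cast_le.2 (by omega : N + 1 - (n+1) ≤ N)
  have hexpRint : ∀ n, n ≤ N → Integrable (fun ω => Real.exp (l * R n ω)) P := by
    intro n hn
    refine integrable_of_bounded_meas' (hexpRmeas n hn) (C := Real.exp (l * N)) fun ω => ?_
    rw [abs_of_pos (Real.exp_pos _)]
    refine Real.exp_le_exp.2 ?_
    have h1 := hRb n ω
    nlinarith [le_trans (le_abs_self _) h1]
  -- the indicator functions
  set W : ℕ → Ω → ℝ := fun n => (A n).indicator (fun ω => Real.exp (l * S n ω)) with hW_def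
  have hWm𝔪 : ∀ n, 1 ≤ n → n ≤ N → Measurable[𝔪 n] (W n) := by
    intro n h1 h2
    have he : Measurable[𝔪 n] fun ω => Real.exp (l * S n ω) :=
      Real.measurable_exp.comp ((hSm𝔪 n n le_rfl).const_mul l)
    exact he.indicator (hAm𝔪 n h1 h2)
  have hWmeas : ∀ n, 1 ≤ n → n ≤ N → Measurable (W n) :=
    fun n h1 h2 => (hWm𝔪 n h1 h2).mono (h𝔪le n h2) le_rfl
  have hWint : ∀ n, 1 ≤ n → n ≤ N → Integrable (W n) P := by
    intro n h1 h2
    refine integrable_of_bounded_meas' (hWmeas n h1 h2) (C := Real.exp (l * N)) fun ω => ?_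
    simp only [hW_def]
    by_cases hω : ω ∈ A n
    · rw [Set.indicator_of_mem hω, abs_of_pos (Real.exp_pos _)]
      refine Real.exp_le_exp.2 ?_
      have hb1 := hSb n h2 ω
      nlinarith [le_trans (le_abs_self _) hb1, (Nat.cast_le (α := ℝ)).2 h2]
    · rw [Set.indicator_of_notMem hω]
      simp [Real.exp_nonneg, le_of_lt (Real.exp_pos _)]
  -- independence of W n and exp(l * R n)
  have hindWV : ∀ n, 1 ≤ n → n ≤ N →
      IndepFun (W n) (fun ω => Real.exp (l * R n ω)) P := by
    intro n h1 h2
    rw [IndepFun_iff_Indep]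
    have base := hind n h2
    refine indep_of_indep_of_le_right (indep_of_indep_of_le_left base ?_) ?_
    · exact measurable_iff_comap_le.1 (hWm𝔪 n h1 h2)
    · refine measurable_iff_comap_le.1 ?_
      exact Real.measurable_exp.comp ((hRm𝔫 n).const_mul l)
  -- sum splitting : S n + R n = S N
  have hsplit : ∀ n, n ≤ N → ∀ ω, S n ω + R n ω = S N ω := by
    intro n hn ω
    have e : ∀ k, Finset.Icc 1 k = Finset.Ioc 0 k := fun k => by
      ext x; simp [Nat.lt_iff_add_one_le]
    simp only [hS_def, hR_def, e, Finset.Icc_add_one_left_eq_Ioc]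
    exact Finset.sum_Ioc_consecutive _ (Nat.zero_le n) hn
  -- mean of R is 0, hence mgf of R at l is ≥ 1
  have hRint : ∀ n, n ≤ N → Integrable (R n) P := by
    intro n hn
    refine integrable_of_bounded_meas' ?_ (C := (N:ℝ)) (hRb n)
    refine Finset.measurable_sum _ fun u hu => ?_
    rcases Finset.mem_Icc.1 hu with ⟨h1, h2⟩
    exact hmeas u (Finset.mem_Icc.2 ⟨le_trans (Nat.succ_le_succ (Nat.zero_le n)) h1, h2⟩)
  have hRmean : ∀ n, n ≤ N → ∫ ω, R n ω ∂P = 0 := by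
    intro n hn
    rw [hR_def]
    simp only []
    rw [integral_finset_sum _ (fun u hu => ?_)]
    · refine Finset.sum_eq_zero fun u hu => ?_
      rcases Finset.mem_Icc.1 hu with ⟨h1, h2⟩
      exact hcent u (Finset.mem_Icc.2 ⟨le_trans (Nat.succ_le_succ (Nat.zero_le n)) h1, h2⟩)
    · rcases Finset.mem_Icc.1 hu with ⟨h1, h2⟩
      refine integrable_of_bounded_meas' (hmeas u ?_) (C := 1) (fun ω => hbdd u ?_ ω) <;>
        exact Finset.mem_Icc.2 ⟨le_trans (Nat.succ_le_succ (Nat.zero_le n)) h1, h2⟩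
  have hQ1 : ∀ n, n ≤ N → 1 ≤ ∫ ω, Real.exp (l * R n ω) ∂P := by
    intro n hn
    have hint1 : Integrable (fun ω => 1 + l * R n ω) P :=
      (integrable_const 1).add ((hRint n hn).const_mul l)
    have heq : ∫ ω, (1 + l * R n ω) ∂P = 1 := by
      rw [integral_add (integrable_const 1) ((hRint n hn).const_mul l), integral_const_mul,
        hRmean n hn]
      simp
    calc (1:ℝ) = ∫ ω, (1 + l * R n ω) ∂P := heq.symm
    _ ≤ ∫ ω, Real.exp (l * R n ω) ∂P := by
        refine integral_mono hint1 (hexpRint n hn) fun ω => ?_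
        have := Real.add_one_le_exp (l * R n ω)
        linarith
  -- mgf product bound by induction
  have hprod : ∀ j, j ≤ N → ∫ ω, Real.exp (l * S j ω) ∂P ≤ Real.exp (j * l ^ 2 / 8) := by
    intro j
    induction j with
    | zero =>
      intro _
      have : ∀ ω : Ω, S 0 ω = 0 := by intro ω; simp [hS_def]
      simp only [this]
      simp
    | succ j ih =>
      intro hj1
      have hj : j ≤ N := le_trans (Nat.le_succ j) hj1
      have hYint : Integrable (fun ω => Real.exp (l * Y (j+1) ω)) P := by
        refine integrable_of_bounded_meas'
          (Real.measurable_exp.comp ((hmeas (j+1) (Finset.mem_Icc.2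
            ⟨Nat.succ_le_succ (Nat.zero_le j), hj1⟩)).const_mul l))
          (C := Real.exp l) fun ω => ?_
        rw [abs_of_pos (Real.exp_pos _)]
        refine Real.exp_le_exp.2 ?_
        have := hbdd (j+1) (Finset.mem_Icc.2 ⟨Nat.succ_le_succ (Nat.zero_le j), hj1⟩) ω
        nlinarith [le_trans (le_abs_self _) this]
      have hindSY : IndepFun (fun ω => Real.exp (l * S j ω))
          (fun ω => Real.exp (l * Y (j+1) ω)) P := by
        rw [IndepFun_iff_Indep]
        refine indep_of_indep_of_le_right (indep_of_indep_of_le_left (hind j hj) ?_) ?_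
        · exact measurable_iff_comap_le.1
            (Real.measurable_exp.comp ((hSm𝔪 j j le_rfl).const_mul l))
        · refine measurable_iff_comap_le.1 ?_
          have hY𝔫 : Measurable[𝔫 j] (Y (j+1)) :=
            measurable_iff_comap_le.2
              (le_iSup₂ (f := fun u _ => MeasurableSpace.comap (Y u) inferInstance)
                (j+1) ⟨le_rfl, hj1⟩)
          exact Real.measurable_exp.comp (hY𝔫.const_mul l)
      have hsucc : ∀ ω, S (j+1) ω = S j ω + Y (j+1) ω := by
        intro ω
        rw [hS_def]
        simp only []
        exact Finset.sum_Icc_succ_top (Nat.succ_le_succ (Nat.zero_le j)) _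
      calc ∫ ω, Real.exp (l * S (j+1) ω) ∂P
          = ∫ ω, Real.exp (l * S j ω) * Real.exp (l * Y (j+1) ω) ∂P := by
            congr 1; ext ω; rw [hsucc ω, ← Real.exp_add]; ring_nf
        _ = (∫ ω, Real.exp (l * S j ω) ∂P) * ∫ ω, Real.exp (l * Y (j+1) ω) ∂P :=
            hindSY.integral_mul_eq_mul_integral (hexpSint j hj).aestronglyMeasurable hYint.aestronglyMeasurable
        _ ≤ Real.exp (j * l ^ 2 / 8) * Real.exp (l ^ 2 / 8) := by
            refine mul_le_mul (ih hj) (hmgf (j+1) (Finset.mem_Icc.2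
              ⟨Nat.succ_le_succ (Nat.zero_le j), hj1⟩)) ?_ (Real.exp_nonneg _)
            exact integral_nonneg fun ω => Real.exp_nonneg _
        _ = Real.exp ((j+1 : ℕ) * l ^ 2 / 8) := by
            rw [← Real.exp_add]
            push_cast
            ring_nf
  -- the key per-n estimate
  have key : ∀ n ∈ Finset.Icc 1 N,
      Real.exp (l * c) * (P (A n)).toReal ≤ ∫ ω in A n, Real.exp (l * S N ω) ∂P := by
    intro n hn
    rcases Finset.mem_Icc.1 hn with ⟨hn1, hn2⟩
    have h1 : Real.exp (l * c) * (P (A n)).toReal ≤ ∫ ω in A n, Real.exp (l * S n ω) ∂P := by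
      refine setIntegral_ge_of_const_le_real (hAmeas n hn1 hn2) (measure_ne_top P _)
        (fun ω hω => ?_) ((hexpSint n hn2).integrableOn)
      exact Real.exp_le_exp.2 (mul_le_mul_of_nonneg_left hω.1 hl)
    have h2 : ∫ ω in A n, Real.exp (l * S n ω) ∂P = ∫ ω, W n ω ∂P := by
      rw [hW_def]
      simp only []
      rw [integral_indicator (hAmeas n hn1 hn2)]
    have h3 : ∫ ω, W n ω ∂P ≤ (∫ ω, W n ω ∂P) * ∫ ω, Real.exp (l * R n ω) ∂P := by
      refine le_mul_of_one_le_right ?_ (hQ1 n hn2)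
      exact integral_nonneg fun ω => Set.indicator_nonneg (fun ω _ => Real.exp_nonneg _) ω
    have h4 : (∫ ω, W n ω ∂P) * ∫ ω, Real.exp (l * R n ω) ∂P
        = ∫ ω, W n ω * Real.exp (l * R n ω) ∂P :=
      ((hindWV n hn1 hn2).integral_mul_eq_mul_integral (hWint n hn1 hn2).aestronglyMeasurable (hexpRint n hn2).aestronglyMeasurable).symm
    have h5 : ∫ ω, W n ω * Real.exp (l * R n ω) ∂P = ∫ ω in A n, Real.exp (l * S N ω) ∂P := by
      rw [← integral_indicator (hAmeas n hn1 hn2)]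
      congr 1
      ext ω
      rw [hW_def]
      simp only []
      by_cases hω : ω ∈ A n
      · rw [Set.indicator_of_mem hω, Set.indicator_of_mem hω, ← Real.exp_add,
          ← hsplit n hn2 ω]
        ring_nf
      · rw [Set.indicator_of_notMem hω, Set.indicator_of_notMem hω, zero_mul]
    linarith
  -- assemble
  have hTmeas : ∀ n ∈ Finset.Icc 1 N, MeasurableSet (A n) := by
    intro n hn
    rcases Finset.mem_Icc.1 hn with ⟨hn1, hn2⟩
    exact hAmeas n hn1 hn2
  have hPT : P {ω | ∃ n ∈ Finset.Icc 1 N, c ≤ S n ω} = ∑ n ∈ Finset.Icc 1 N, P (A n) := by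
    rw [hcover]
    exact measure_biUnion_finset hdisj hTmeas
  have hfinal : Real.exp (l * c) * (P {ω | ∃ n ∈ Finset.Icc 1 N, c ≤ S n ω}).toReal
      ≤ Real.exp (N * l ^ 2 / 8) := by
    rw [hPT, ENNReal.toReal_sum (fun n _ => measure_ne_top P _), Finset.mul_sum]
    calc ∑ n ∈ Finset.Icc 1 N, Real.exp (l * c) * (P (A n)).toReal
        ≤ ∑ n ∈ Finset.Icc 1 N, ∫ ω in A n, Real.exp (l * S N ω) ∂P :=
          Finset.sum_le_sum key
      _ = ∫ ω in ⋃ n ∈ Finset.Icc 1 N, A n, Real.exp (l * S N ω) ∂P :=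
          (integral_biUnion_finset _ hTmeas hdisj
            (fun n _ => (hexpSint N le_rfl).integrableOn)).symm
      _ ≤ ∫ ω, Real.exp (l * S N ω) ∂P :=
          setIntegral_le_integral (hexpSint N le_rfl)
            (Filter.Eventually.of_forall fun ω => Real.exp_nonneg _)
      _ ≤ Real.exp (N * l ^ 2 / 8) := hprod N le_rfl
  rw [ENNReal.le_ofReal_iff_toReal_le (measure_ne_top P _) (Real.exp_nonneg _)]
  have hnn : 0 ≤ (P {ω | ∃ n ∈ Finset.Icc 1 N, c ≤ S n ω}).toReal := ENNReal.toReal_nonneg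
  have : (P {ω | ∃ n ∈ Finset.Icc 1 N, c ≤ S n ω}).toReal
      ≤ Real.exp (N * l ^ 2 / 8) / Real.exp (l * c) := by
    rw [le_div_iff₀ (Real.exp_pos _)]
    calc (P {ω | ∃ n ∈ Finset.Icc 1 N, c ≤ S n ω}).toReal * Real.exp (l * c)
        = Real.exp (l * c) * (P {ω | ∃ n ∈ Finset.Icc 1 N, c ≤ S n ω}).toReal := mul_comm _ _
      _ ≤ Real.exp (N * l ^ 2 / 8) := hfinal
  calc (P {ω | ∃ n ∈ Finset.Icc 1 N, c ≤ S n ω}).toReal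
      ≤ Real.exp (N * l ^ 2 / 8) / Real.exp (l * c) := this
    _ = Real.exp (-(l * c) + N * l ^ 2 / 8) := by
        rw [← Real.exp_sub]
        ring_nf


-- helper: independence of past/future blocks
lemma indep_blocks {Ω : Type*} [MeasurableSpace Ω] {P : Measure Ω} [IsProbabilityMeasure P]
    {t : ℕ} {Y : ℕ → Ω → ℝ}
    (hYmeas : ∀ u ∈ Finset.Icc 1 t, Measurable (Y u))
    (hYindep : iIndepFun
      (fun u : (Finset.Icc 1 t : Finset ℕ) => Y u.val) P)
    {N : ℕ} (hN : N ≤ t) :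
    ∀ n, n ≤ N →
      Indep (⨆ u ∈ Set.Icc 1 n, MeasurableSpace.comap (Y u) inferInstance)
        (⨆ u ∈ Set.Icc (n+1) N, MeasurableSpace.comap (Y u) inferInstance) P := by
  intro n hn
  have hiI : iIndep (fun i : (Finset.Icc 1 t : Finset ℕ) =>
      MeasurableSpace.comap (Y i.val) inferInstance) P :=
    (iIndepFun_iff_iIndep _ _ _).1 hYindep
  set S : Set (Finset.Icc 1 t : Finset ℕ) := {i | (i : ℕ) ≤ n} with hS_def
  set T : Set (Finset.Icc 1 t : Finset ℕ) := {i | n + 1 ≤ (i : ℕ)} with hT_def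
  have hST : Disjoint S T := by
    rw [Set.disjoint_left]
    intro i hi hi'
    simp only [hS_def, hT_def, Set.mem_setOf_eq] at hi hi'
    omega
  have h_le : ∀ i : (Finset.Icc 1 t : Finset ℕ),
      MeasurableSpace.comap (Y i.val) inferInstance ≤ ‹MeasurableSpace Ω› := by
    intro i
    exact measurable_iff_comap_le.1 (hYmeas i.val i.property)
  have hmain := indep_iSup_of_disjoint h_le hiI hST
  refine indep_of_indep_of_le_right (indep_of_indep_of_le_left hmain ?_) ?_
  · refine iSup₂_le fun u hu => ?_
    have hu' : u ∈ Finset.Icc 1 t := Finset.mem_Icc.2 ⟨hu.1, le_trans hu.2 (le_trans hn hN)⟩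
    have : (⟨u, hu'⟩ : (Finset.Icc 1 t : Finset ℕ)) ∈ S := by
      simp only [hS_def, Set.mem_setOf_eq]; exact hu.2
    exact le_iSup₂ (f := fun i : (Finset.Icc 1 t : Finset ℕ) => fun _ : i ∈ S =>
      MeasurableSpace.comap (Y i.val) inferInstance) _ this
  · refine iSup₂_le fun u hu => ?_
    have hu' : u ∈ Finset.Icc 1 t := Finset.mem_Icc.2
      ⟨le_trans (Nat.succ_le_succ (Nat.zero_le n)) hu.1, le_trans hu.2 hN⟩
    have : (⟨u, hu'⟩ : (Finset.Icc 1 t : Finset ℕ)) ∈ T := by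
      simp only [hT_def, Set.mem_setOf_eq]; exact hu.1
    exact le_iSup₂ (f := fun i : (Finset.Icc 1 t : Finset ℕ) => fun _ : i ∈ T =>
      MeasurableSpace.comap (Y i.val) inferInstance) _ this

lemma block_bound {Ω : Type*} [MeasurableSpace Ω] (P : Measure Ω) [IsProbabilityMeasure P]
    (t : ℕ) (ht : 1 ≤ t) (L : ℝ) (hL0 : 0 < L) (Y : ℕ → Ω → ℝ)
    (hYmeas : ∀ u ∈ Finset.Icc 1 t, Measurable (Y u))
    (hYbdd : ∀ u ∈ Finset.Icc 1 t, ∀ ω, |Y u ω| ≤ 1)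
    (hYcent : ∀ u ∈ Finset.Icc 1 t, ∫ ω, Y u ω ∂P = 0)
    (hYmgf : ∀ l : ℝ, 0 ≤ l → ∀ u ∈ Finset.Icc 1 t,
      ∫ ω, Real.exp (l * Y u ω) ∂P ≤ Real.exp (l ^ 2 / 8))
    (hYindep : iIndepFun
      (fun u : (Finset.Icc 1 t : Finset ℕ) => Y u.val) P)
    (k : ℕ) :
    P {ω | ∃ n ∈ Finset.Icc 1 (min (2^(k+1) - 1) t), Real.sqrt (2 * 2^k * L)
        ≤ ∑ u ∈ Finset.Icc 1 n, Y u ω}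
      ≤ ENNReal.ofReal (Real.exp (-(2 * L))) := by
  set N : ℕ := min (2^(k+1) - 1) t with hN_def
  set c : ℝ := Real.sqrt (2 * 2^k * L) with hc_def
  have hNt : N ≤ t := min_le_right _ _
  have hN1 : 1 ≤ N := by
    refine le_min ?_ ht
    have : 2 ≤ 2^(k+1) := by
      calc 2 = 2^1 := by norm_num
      _ ≤ 2^(k+1) := Nat.pow_le_pow_right (by norm_num) (by omega)
    omega
  have hNpos : (0:ℝ) < (N:ℝ) := by exact_mod_cast hN1
  have hc0 : 0 ≤ c := Real.sqrt_nonneg _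
  set l : ℝ := 4 * c / (N:ℝ) with hl_def
  have hl : 0 ≤ l := by positivity
  have hsub : ∀ u, u ∈ Finset.Icc 1 N → u ∈ Finset.Icc 1 t := by
    intro u hu
    rcases Finset.mem_Icc.1 hu with ⟨h1, h2⟩
    exact Finset.mem_Icc.2 ⟨h1, le_trans h2 hNt⟩
  have hmain := maximal_chernoff P N Y l c hl
    (fun u hu => hYmeas u (hsub u hu))
    (fun u hu => hYbdd u (hsub u hu))
    (fun u hu => hYcent u (hsub u hu))
    (fun u hu => hYmgf l hl u (hsub u hu))
    (indep_blocks hYmeas hYindep hNt)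
  refine le_trans hmain (ENNReal.ofReal_le_ofReal (Real.exp_le_exp.2 ?_))
  have hc2 : c ^ 2 = 2 * 2^k * L := Real.sq_sqrt (by positivity)
  have hNle : (N:ℝ) ≤ 2 * 2^k := by
    have h1 : N ≤ 2^(k+1) - 1 := min_le_left _ _
    have h2 : (N:ℝ) ≤ ((2^(k+1) - 1 : ℕ):ℝ) := Nat.cast_le.2 h1
    have h3 : ((2^(k+1) - 1 : ℕ):ℝ) = (2:ℝ)^(k+1) - 1 := by
      have := Nat.one_le_two_pow (n := k+1)
      push_cast [Nat.cast_sub this]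
      ring
    have h4 : (2:ℝ)^(k+1) = 2 * 2^k := by ring
    rw [h3, h4] at h2
    linarith
  have heq : -(l * c) + (N:ℝ) * l ^ 2 / 8 = -(2 * (c^2) / N) := by
    rw [hl_def]
    field_simp
    ring
  rw [heq, hc2]
  rw [neg_le_neg_iff]
  rw [le_div_iff₀ hNpos]
  nlinarith

theorem prefix_concentration_core
    {Ω : Type*} [MeasurableSpace Ω] (P : Measure Ω) [IsProbabilityMeasure P]
    (t : ℕ) (ht : 1 ≤ t) (δ : ℝ) (hδ : δ ∈ Set.Ioo (0 : ℝ) 1)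
    (Z : ℕ → Ω → ℝ)
    (hmeas : ∀ u ∈ Finset.Icc 1 t, Measurable (Z u))
    (hindep : iIndepFun
      (fun u : (Finset.Icc 1 t : Finset ℕ) => Z u.val) P)
    (hbdd : ∀ u ∈ Finset.Icc 1 t, ∀ ω, Z u ω ∈ Set.Icc (0 : ℝ) 1) :
    P {ω | ∃ s ∈ Finset.Icc 1 t,
        |(∑ u ∈ Finset.Icc 1 s, Z u ω) / (s : ℝ)
            - (∑ u ∈ Finset.Icc 1 s, ∫ ω' , Z u ω' ∂P) / (s : ℝ)|
          > Real.sqrt (2 * Real.log (4 * Real.logb 2 ((t : ℝ) + 1) / δ) / (s : ℝ))}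
      ≤ ENNReal.ofReal (δ / 2) := by
  classical
  obtain ⟨hδ0, hδ1⟩ := hδ
  set B : ℝ := Real.logb 2 ((t : ℝ) + 1) with hB_def
  have hB1 : 1 ≤ B := by
    have h1 : (1:ℝ) ≤ (t:ℝ) := by exact_mod_cast ht
    have h2 : Real.logb 2 2 ≤ Real.logb 2 ((t:ℝ) + 1) :=
      Real.logb_le_logb_of_le one_lt_two (by norm_num) (by linarith)
    simpa using h2
  set K : ℝ := 4 * B with hK_def
  have hK4 : 4 ≤ K := by rw [hK_def]; linarith
  set L : ℝ := Real.log (K / δ) with hL_def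
  have hKδ : 1 < K / δ := by
    rw [lt_div_iff₀ hδ0]; nlinarith
  have hL0 : 0 < L := Real.log_pos hKδ
  -- means
  set m : ℕ → ℝ := fun u => ∫ ω', Z u ω' ∂P with hm_def
  have hm01 : ∀ u ∈ Finset.Icc 1 t, m u ∈ Set.Icc (0:ℝ) 1 := by
    intro u hu
    have hint : Integrable (Z u) P := by
      refine integrable_of_bounded_meas' (hmeas u hu) (C := 1) fun ω => ?_
      rcases hbdd u hu ω with ⟨h0, h1⟩
      rw [abs_le]; exact ⟨by linarith, h1⟩
    constructor
    · exact integral_nonneg fun ω => (hbdd u hu ω).1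
    · calc m u ≤ ∫ _, (1:ℝ) ∂P :=
            (integral_mono hint (integrable_const 1) (fun ω => (hbdd u hu ω).2))
      _ = 1 := by simp
  -- centered variables, both signs
  set Yp : ℕ → Ω → ℝ := fun u ω => Z u ω - m u with hYp_def
  set Yn : ℕ → Ω → ℝ := fun u ω => m u - Z u ω with hYn_def
  -- block data
  set M : ℕ := Nat.log 2 t with hM_def
  set Nk : ℕ → ℕ := fun k => min (2^(k+1) - 1) t with hNk_def
  set ck : ℕ → ℝ := fun k => Real.sqrt (2 * 2^k * L) with hck_def
  have hNk1 : ∀ k, 1 ≤ Nk k := by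
    intro k
    refine le_min ?_ ht
    have : 2 ≤ 2^(k+1) := by
      calc 2 = 2^1 := by norm_num
      _ ≤ 2^(k+1) := Nat.pow_le_pow_right (by norm_num) (by omega)
    omega
  have hNkt : ∀ k, Nk k ≤ t := fun k => min_le_right _ _
  have hck0 : ∀ k, 0 ≤ ck k := fun k => Real.sqrt_nonneg _
  -- the events
  set U : ℕ → Set Ω := fun k =>
    {ω | ∃ n ∈ Finset.Icc 1 (Nk k), ck k ≤ ∑ u ∈ Finset.Icc 1 n, Yp u ω} with hU_def
  set V : ℕ → Set Ω := fun k =>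
    {ω | ∃ n ∈ Finset.Icc 1 (Nk k), ck k ≤ ∑ u ∈ Finset.Icc 1 n, Yn u ω} with hV_def
  -- covering
  have hcover : {ω | ∃ s ∈ Finset.Icc 1 t,
        |(∑ u ∈ Finset.Icc 1 s, Z u ω) / (s : ℝ)
            - (∑ u ∈ Finset.Icc 1 s, m u) / (s : ℝ)|
          > Real.sqrt (2 * L / (s : ℝ))}
      ⊆ ⋃ k ∈ Finset.range (M + 1), (U k ∪ V k) := by
    intro ω hω
    obtain ⟨s, hs, habs⟩ := hω
    rcases Finset.mem_Icc.1 hs with ⟨hs1, hst⟩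
    have hs0 : (0:ℝ) < (s:ℝ) := by exact_mod_cast hs1
    set D : ℝ := ∑ u ∈ Finset.Icc 1 s, Yp u ω with hD_def
    have hDdiv : (∑ u ∈ Finset.Icc 1 s, Z u ω) / (s : ℝ)
        - (∑ u ∈ Finset.Icc 1 s, m u) / (s : ℝ) = D / s := by
      rw [hD_def, div_sub_div_same]
      congr 1
      rw [hYp_def]
      simp [Finset.sum_sub_distrib]
    have habs' : Real.sqrt (2 * s * L) < |D| := by
      have h1 : Real.sqrt (2 * L / (s:ℝ)) < |D / s| := by rw [← hDdiv]; exact habs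
      have h2 : |D / s| = |D| / s := by rw [abs_div, abs_of_pos hs0]
      have h3 : Real.sqrt (2 * L / s) * s < |D| := by
        rw [h2] at h1
        calc Real.sqrt (2 * L / s) * s < (|D| / s) * s := by
              exact mul_lt_mul_of_pos_right h1 hs0
        _ = |D| := by field_simp
      have h4 : Real.sqrt (2 * L / s) * s = Real.sqrt (2 * s * L) := by
        rw [show (s:ℝ) = Real.sqrt ((s:ℝ)^2) by rw [Real.sqrt_sq (le_of_lt hs0)]]
        rw [← Real.sqrt_mul (by positivity) _]
        rw [Real.sqrt_sq (le_of_lt hs0)]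
        congr 1
        field_simp
      rw [← h4]; exact h3
    set k : ℕ := Nat.log 2 s with hk_def
    have hkM : k ≤ M := Nat.log_mono_right hst
    have h2ks : 2^k ≤ s := Nat.pow_log_le_self 2 (by omega)
    have hs2k : s < 2^(k+1) := Nat.lt_pow_succ_log_self (by norm_num) s
    have hsNk : s ∈ Finset.Icc 1 (Nk k) := by
      rw [Finset.mem_Icc]
      refine ⟨hs1, le_min (by omega) hst⟩
    have hcks : ck k ≤ Real.sqrt (2 * s * L) := by
      rw [hck_def]
      apply Real.sqrt_le_sqrt
      have : (2:ℝ)^k ≤ (s:ℝ) := by exact_mod_cast h2ks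
      nlinarith
    have hckD : ck k < |D| := lt_of_le_of_lt hcks habs'
    simp only [Set.mem_iUnion]
    refine ⟨k, Finset.mem_range.2 (by omega), ?_⟩
    rcases le_or_gt (ck k) D with hpos | hneg
    · left
      exact ⟨s, hsNk, hpos⟩
    · right
      refine ⟨s, hsNk, ?_⟩
      have hsum : ∑ u ∈ Finset.Icc 1 s, Yn u ω = -D := by
        rw [hD_def, hYp_def, hYn_def, ← Finset.sum_neg_distrib]
        exact Finset.sum_congr rfl fun u _ => by ring
      rw [hsum]
      rcases abs_cases D with ⟨he, _⟩ | ⟨he, _⟩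
      · rw [he] at hckD; linarith
      · rw [he] at hckD; linarith
  -- properties of Yp and Yn
  have hintZ : ∀ u ∈ Finset.Icc 1 t, Integrable (Z u) P := by
    intro u hu
    refine integrable_of_bounded_meas' (hmeas u hu) (C := 1) fun ω => ?_
    rcases hbdd u hu ω with ⟨h0, h1⟩
    rw [abs_le]; exact ⟨by linarith, h1⟩
  have hYpmeas : ∀ u ∈ Finset.Icc 1 t, Measurable (Yp u) :=
    fun u hu => (hmeas u hu).sub_const (m u)
  have hYnmeas : ∀ u ∈ Finset.Icc 1 t, Measurable (Yn u) :=
    fun u hu => (measurable_const.sub (hmeas u hu))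
  have hYpbdd : ∀ u ∈ Finset.Icc 1 t, ∀ ω, |Yp u ω| ≤ 1 := by
    intro u hu ω
    rcases hbdd u hu ω with ⟨h0, h1⟩
    rcases hm01 u hu with ⟨g0, g1⟩
    rw [hYp_def]; rw [abs_le]; constructor <;> simp <;> linarith
  have hYnbdd : ∀ u ∈ Finset.Icc 1 t, ∀ ω, |Yn u ω| ≤ 1 := by
    intro u hu ω
    rcases hbdd u hu ω with ⟨h0, h1⟩
    rcases hm01 u hu with ⟨g0, g1⟩
    rw [hYn_def]; rw [abs_le]; constructor <;> simp <;> linarith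
  have hYpcent : ∀ u ∈ Finset.Icc 1 t, ∫ ω, Yp u ω ∂P = 0 := by
    intro u hu
    rw [hYp_def]
    simp only []
    rw [integral_sub (hintZ u hu) (integrable_const _), integral_const]
    simp [hm_def]
  have hYncent : ∀ u ∈ Finset.Icc 1 t, ∫ ω, Yn u ω ∂P = 0 := by
    intro u hu
    rw [hYn_def]
    simp only []
    rw [integral_sub (integrable_const _) (hintZ u hu), integral_const]
    simp [hm_def]
  have hYpmgf : ∀ l : ℝ, 0 ≤ l → ∀ u ∈ Finset.Icc 1 t,
      ∫ ω, Real.exp (l * Yp u ω) ∂P ≤ Real.exp (l ^ 2 / 8) := by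
    intro l _ u hu
    have := hoeffding_mgf (P := P) (hmeas u hu) (hbdd u hu) l
    simpa [hYp_def, hm_def] using this
  have hYnmgf : ∀ l : ℝ, 0 ≤ l → ∀ u ∈ Finset.Icc 1 t,
      ∫ ω, Real.exp (l * Yn u ω) ∂P ≤ Real.exp (l ^ 2 / 8) := by
    intro l _ u hu
    have hb' : ∀ ω, (1 - Z u ω) ∈ Set.Icc (0:ℝ) 1 := by
      intro ω
      rcases hbdd u hu ω with ⟨h0, h1⟩
      constructor <;> simp <;> linarith
    have hmeas' : Measurable (fun ω => 1 - Z u ω) := measurable_const.sub (hmeas u hu)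
    have hX := hoeffding_mgf (P := P) hmeas' hb' l
    have hmean : ∫ ω', (1 - Z u ω') ∂P = 1 - m u := by
      rw [integral_sub (integrable_const _) (hintZ u hu), integral_const]
      simp [hm_def]
    rw [hmean] at hX
    have : (fun ω => Real.exp (l * (1 - Z u ω - (1 - m u))))
        = fun ω => Real.exp (l * Yn u ω) := by
      funext ω
      rw [hYn_def]
      ring_nf
    rwa [this] at hX
  have hYpindep : iIndepFun
      (fun u : (Finset.Icc 1 t : Finset ℕ) => Yp u.val) P :=
    hindep.comp (fun i (y : ℝ) => y - m i.val) (fun i => measurable_id.sub_const _)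
  have hYnindep : iIndepFun
      (fun u : (Finset.Icc 1 t : Finset ℕ) => Yn u.val) P :=
    hindep.comp (fun i (y : ℝ) => m i.val - y) (fun i => measurable_const.sub measurable_id)
  -- per-block bounds
  have hUbound : ∀ k, P (U k) ≤ ENNReal.ofReal (Real.exp (-(2 * L))) := by
    intro k
    have := block_bound P t ht L hL0 Yp hYpmeas hYpbdd hYpcent hYpmgf hYpindep k
    rw [hU_def]
    exact this
  have hVbound : ∀ k, P (V k) ≤ ENNReal.ofReal (Real.exp (-(2 * L))) := by
    intro k
    have := block_bound P t ht L hL0 Yn hYnmeas hYnbdd hYncent hYnmgf hYnindep k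
    rw [hV_def]
    exact this
  -- sum it all up
  set e : ℝ := Real.exp (-(2 * L)) with he_def
  have he0 : 0 ≤ e := Real.exp_nonneg _
  have hsum : P {ω | ∃ s ∈ Finset.Icc 1 t,
        |(∑ u ∈ Finset.Icc 1 s, Z u ω) / (s : ℝ)
            - (∑ u ∈ Finset.Icc 1 s, m u) / (s : ℝ)|
          > Real.sqrt (2 * L / (s : ℝ))}
      ≤ ENNReal.ofReal (((M:ℝ) + 1) * (2 * e)) := by
    calc P _ ≤ P (⋃ k ∈ Finset.range (M + 1), (U k ∪ V k)) := measure_mono hcover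
      _ ≤ ∑ k ∈ Finset.range (M + 1), P (U k ∪ V k) := measure_biUnion_finset_le _ _
      _ ≤ ∑ k ∈ Finset.range (M + 1), (ENNReal.ofReal e + ENNReal.ofReal e) := by
          refine Finset.sum_le_sum fun k _ => ?_
          exact le_trans (measure_union_le _ _) (add_le_add (hUbound k) (hVbound k))
      _ = (M + 1) • (ENNReal.ofReal e + ENNReal.ofReal e) := by
          rw [Finset.sum_const, Finset.card_range]
      _ = ENNReal.ofReal (((M:ℝ) + 1) * (2 * e)) := by
          rw [← ENNReal.ofReal_add he0 he0, nsmul_eq_mul]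
          rw [← ENNReal.ofReal_natCast (M + 1), ← ENNReal.ofReal_mul (by positivity)]
          congr 1
          push_cast
          ring
  refine le_trans hsum (ENNReal.ofReal_le_ofReal ?_)
  -- final arithmetic
  have hexpL : Real.exp L = K / δ := Real.exp_log (by positivity)
  have hee : e = δ^2 / K^2 := by
    rw [he_def]
    have h1 : Real.exp (-(2 * L)) = (Real.exp L * Real.exp L)⁻¹ := by
      rw [← Real.exp_add, ← Real.exp_neg]
      ring_nf
    rw [h1, hexpL]
    field_simp
  have hMB : (M:ℝ) ≤ B := by
    have h2M : ((2:ℝ))^M ≤ (t:ℝ) := by exact_mod_cast Nat.pow_log_le_self 2 (by omega)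
    have h3 : (M:ℝ) = Real.logb 2 ((2:ℝ)^M) := by
      rw [Real.logb_pow]
      simp
    rw [h3, hB_def]
    apply Real.logb_le_logb_of_le one_lt_two (by positivity)
    have : (0:ℝ) ≤ (t:ℝ) := by positivity
    linarith
  have hK0 : (0:ℝ) < K := by linarith
  rw [hee]
  have h1 : ((M:ℝ)+1) * (2 * (δ^2/K^2)) = (((M:ℝ)+1) * 2 * δ^2) / K^2 := by ring
  rw [h1, div_le_iff₀ (by positivity)]
  have hMB2 : (M:ℝ) + 1 ≤ 2 * B := by linarith
  have hKB : K = 4 * B := hK_def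
  have hB0 : (0:ℝ) ≤ B := by linarith
  have s1 : ((M:ℝ) + 1) * 2 * δ^2 ≤ 4 * B * δ^2 := by nlinarith [sq_nonneg δ]
  have s2 : δ^2 ≤ δ := by nlinarith
  have s3 : 4 * B * δ^2 ≤ 4 * B * δ := by nlinarith
  have s4 : 4 * B * δ ≤ 8 * B^2 * δ := by nlinarith [mul_pos hδ0 (lt_of_lt_of_le one_pos hB1)]
  have s5 : δ/2 * K^2 = 8 * B^2 * δ := by rw [hKB]; ring
  linarith


/-- Anytime prefix concentration with drifting means: for independent `[0,1]`-valued random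
variables `X 1, …, X t` (possibly with differing means), the probability that some prefix
empirical mean deviates from the corresponding average true mean by more than `β(s, δ)`
is at most `δ / 2`. -/
theorem prefix_concentration_drifting
    {Ω : Type*} [MeasurableSpace Ω] (P : Measure Ω) [IsProbabilityMeasure P]
    (t : ℕ) (ht : 1 ≤ t) (δ : ℝ) (hδ : δ ∈ Set.Ioo (0 : ℝ) 1)
    (X : ℕ → Ω → ℝ)
    (hmeas : ∀ u ∈ Finset.Icc 1 t, Measurable (X u))
    (hindep : iIndepFun
      (fun u : (Finset.Icc 1 t : Finset ℕ) => X u.val) P)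
    (hbdd : ∀ u ∈ Finset.Icc 1 t, ∀ᵐ ω ∂P, X u ω ∈ Set.Icc (0 : ℝ) 1) :
    P {ω | ∃ s ∈ Finset.Icc 1 t,
        |(∑ u ∈ Finset.Icc 1 s, X u ω) / (s : ℝ)
            - (∑ u ∈ Finset.Icc 1 s, ∫ ω' , X u ω' ∂P) / (s : ℝ)|
          > Real.sqrt (2 * Real.log (4 * Real.logb 2 ((t : ℝ) + 1) / δ) / (s : ℝ))}
      ≤ ENNReal.ofReal (δ / 2) := by
  classical
  set Z : ℕ → Ω → ℝ := fun u ω => max 0 (min (X u ω) 1) with hZ_def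
  have hZmeas : ∀ u ∈ Finset.Icc 1 t, Measurable (Z u) :=
    fun u hu => measurable_const.max ((hmeas u hu).min measurable_const)
  have hZbdd : ∀ u ∈ Finset.Icc 1 t, ∀ ω, Z u ω ∈ Set.Icc (0:ℝ) 1 := by
    intro u _ ω
    exact ⟨le_max_left _ _, max_le zero_le_one (le_trans (min_le_right _ _) le_rfl)⟩
  have hZindep : iIndepFun
      (fun u : (Finset.Icc 1 t : Finset ℕ) => Z u.val) P :=
    hindep.comp (fun _ (y : ℝ) => max 0 (min y 1))
      (fun _ => measurable_const.max (measurable_id.min measurable_const))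
  have hae : ∀ u ∈ Finset.Icc 1 t, ∀ᵐ ω ∂P, X u ω = Z u ω := by
    intro u hu
    filter_upwards [hbdd u hu] with ω hω
    rw [hZ_def]
    simp only []
    rw [min_eq_left hω.2, max_eq_right hω.1]
  have hint_eq : ∀ u ∈ Finset.Icc 1 t, ∫ ω, X u ω ∂P = ∫ ω, Z u ω ∂P :=
    fun u hu => integral_congr_ae (hae u hu)
  have hG : ∀ᵐ ω ∂P, ∀ u ∈ Finset.Icc 1 t, X u ω = Z u ω :=
    (Finset.eventually_all _).2 hae
  have hset : {ω | ∃ s ∈ Finset.Icc 1 t,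
        |(∑ u ∈ Finset.Icc 1 s, X u ω) / (s : ℝ)
            - (∑ u ∈ Finset.Icc 1 s, ∫ ω' , X u ω' ∂P) / (s : ℝ)|
          > Real.sqrt (2 * Real.log (4 * Real.logb 2 ((t : ℝ) + 1) / δ) / (s : ℝ))}
      =ᵐ[P] {ω | ∃ s ∈ Finset.Icc 1 t,
        |(∑ u ∈ Finset.Icc 1 s, Z u ω) / (s : ℝ)
            - (∑ u ∈ Finset.Icc 1 s, ∫ ω' , Z u ω' ∂P) / (s : ℝ)|
          > Real.sqrt (2 * Real.log (4 * Real.logb 2 ((t : ℝ) + 1) / δ) / (s : ℝ))} := by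
    rw [Filter.eventuallyEq_set]
    filter_upwards [hG] with ω hω
    have hkey : ∀ s ∈ Finset.Icc 1 t,
        ((∑ u ∈ Finset.Icc 1 s, X u ω) = ∑ u ∈ Finset.Icc 1 s, Z u ω)
        ∧ ((∑ u ∈ Finset.Icc 1 s, ∫ ω', X u ω' ∂P)
            = ∑ u ∈ Finset.Icc 1 s, ∫ ω', Z u ω' ∂P) := by
      intro s hs
      rcases Finset.mem_Icc.1 hs with ⟨hs1, hs2⟩
      have hsub : ∀ u ∈ Finset.Icc 1 s, u ∈ Finset.Icc 1 t := by
        intro u hu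
        rcases Finset.mem_Icc.1 hu with ⟨h1, h2⟩
        exact Finset.mem_Icc.2 ⟨h1, le_trans h2 hs2⟩
      constructor
      · exact Finset.sum_congr rfl fun u hu => hω u (hsub u hu)
      · exact Finset.sum_congr rfl fun u hu => hint_eq u (hsub u hu)
    constructor
    · rintro ⟨s, hs, h⟩
      exact ⟨s, hs, by rw [← (hkey s hs).1, ← (hkey s hs).2]; exact h⟩
    · rintro ⟨s, hs, h⟩
      exact ⟨s, hs, by rw [(hkey s hs).1, (hkey s hs).2]; exact h⟩
  rw [measure_congr hset]
  exact prefix_concentration_core P t ht δ hδ Z hZmeas hZindep hZbdd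
end

section
/- (No false alarm for the confidence-based scan statistic.) Let X₁, …, X_t be independent random variables with values in [0,1] almost surely and common mean E[X_u] = μ for all u (no changepoint). Then with probability at least 1 − δ, simultaneously for every split s ∈ {1,…,t−1}, the confidence-based scan statistic does not trigger: |μ̂(1:s) − μ̂(s+1:t)| ≤ β(s, δ) + β(t−s, δ), where β(n, δ) = √(2 log(4 log₂(t+1)/δ)/n). -/
open Real MeasureTheory ProbabilityTheory
open scoped ENNReal


lemma scan_aux_scalar_hoeffding (p : ℝ) (hp0 : 0 ≤ p) (hp1 : p ≤ 1) (c : ℝ) :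
    Real.log (1 - p + p * Real.exp c) ≤ c * p + c ^ 2 / 8 := by
  set D : ℝ → ℝ := fun x => 1 - p + p * Real.exp x with hD
  have hDpos : ∀ x, 0 < D x := by
    intro x
    rcases eq_or_lt_of_le hp0 with h | h
    · simp only [hD, ← h]; norm_num
    · have : 0 < p * Real.exp x := mul_pos h (Real.exp_pos x)
      simp only [hD]; linarith
  set F : ℝ → ℝ := fun x => x * p + x ^ 2 / 8 - Real.log (D x) with hF
  set F' : ℝ → ℝ := fun x => p + x / 4 - p * Real.exp x / D x with hF'
  have hDderiv : ∀ x, HasDerivAt D (p * Real.exp x) x := by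
    intro x
    exact ((Real.hasDerivAt_exp x).const_mul p).const_add (1 - p)
  have hFderiv : ∀ x, HasDerivAt F (F' x) x := by
    intro x
    have h1 : HasDerivAt (fun x : ℝ => x * p + x ^ 2 / 8) (p + x * 2 / 8) x := by
      have := ((hasDerivAt_id x).mul_const p).add
        (((hasDerivAt_pow 2 x)).div_const 8)
      exact this.congr_deriv (by norm_num; ring)
    have h2 : HasDerivAt (fun x => Real.log (D x)) (p * Real.exp x / D x) x :=
      (hDderiv x).log (hDpos x).ne'
    have := h1.sub h2
    refine this.congr_deriv ?_
    simp only [hF']; ring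
  have hF'deriv : ∀ x, HasDerivAt F'
      (1 / 4 - (p * Real.exp x * D x - p * Real.exp x * (p * Real.exp x)) / (D x) ^ 2) x := by
    intro x
    have h1 : HasDerivAt (fun x : ℝ => p + x / 4) (1 / 4) x := by
      simpa using ((hasDerivAt_id x).div_const 4).const_add p
    have h2 : HasDerivAt (fun x => p * Real.exp x / D x)
        ((p * Real.exp x * D x - p * Real.exp x * (p * Real.exp x)) / (D x) ^ 2) x := by
      have := ((Real.hasDerivAt_exp x).const_mul p).div (hDderiv x) (hDpos x).ne'
      exact this
    exact h1.sub h2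
  have hF'nonneg : ∀ x, 0 ≤ 1 / 4 -
      (p * Real.exp x * D x - p * Real.exp x * (p * Real.exp x)) / (D x) ^ 2 := by
    intro x
    have hd := hDpos x
    have hE : (0:ℝ) ≤ p * Real.exp x := mul_nonneg hp0 (Real.exp_pos x).le
    have hED : p * Real.exp x ≤ D x := by simp only [hD]; linarith
    rw [sub_nonneg, div_le_iff₀ (by positivity)]
    set E := p * Real.exp x with hEdef
    set d := D x with hddef
    clear_value E d
    nlinarith [sq_nonneg (d - 2 * E)]
  have hmono : Monotone F' :=
    monotone_of_deriv_nonneg (fun x => (hF'deriv x).differentiableAt)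
      (fun x => by rw [(hF'deriv x).deriv]; exact hF'nonneg x)
  have hF'0 : F' 0 = 0 := by
    simp only [hF', hD]
    norm_num
  have hF0 : F 0 = 0 := by
    simp only [hF, hD]
    norm_num
  have hFnonneg : ∀ x, 0 ≤ F x := by
    intro x
    rcases le_or_gt 0 x with hx | hx
    · have : MonotoneOn F (Set.Ici 0) := by
        apply monotoneOn_of_deriv_nonneg (convex_Ici 0)
          (Differentiable.continuous (fun y => (hFderiv y).differentiableAt)).continuousOn
        · intro y hy
          exact ((hFderiv y).differentiableAt).differentiableWithinAt
        · intro y hy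
          rw [(hFderiv y).deriv]
          rw [interior_Ici] at hy
          have := hmono (le_of_lt hy)
          rw [hF'0] at this
          exact this
      have := this (Set.mem_Ici.mpr le_rfl) (Set.mem_Ici.mpr hx) hx
      rw [hF0] at this; exact this
    · have : AntitoneOn F (Set.Iic 0) := by
        apply antitoneOn_of_deriv_nonpos (convex_Iic 0)
          (Differentiable.continuous (fun y => (hFderiv y).differentiableAt)).continuousOn
        · intro y hy
          exact ((hFderiv y).differentiableAt).differentiableWithinAt
        · intro y hy
          rw [(hFderiv y).deriv]
          rw [interior_Iic] at hy
          have := hmono (le_of_lt hy)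
          rw [hF'0] at this
          exact this
      have := this (Set.mem_Iic.mpr hx.le) (Set.mem_Iic.mpr le_rfl) hx.le
      rw [hF0] at this; exact this
  have := hFnonneg c
  simp only [hF] at this
  linarith

lemma scan_aux_mgf_le {Ω : Type*} [MeasurableSpace Ω] (P : Measure Ω) [IsProbabilityMeasure P]
    (Y : Ω → ℝ) (hm : Measurable Y) (hb : ∀ᵐ ω ∂P, Y ω ∈ Set.Icc (0:ℝ) 1)
    (μ : ℝ) (hmean : ∫ ω, Y ω ∂P = μ) (c : ℝ) :
    ∫ ω, Real.exp (c * (Y ω - μ)) ∂P ≤ Real.exp (c ^ 2 / 8) := by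
  have hYint : Integrable Y P := by
    refine Integrable.mono' (integrable_const 1) hm.aestronglyMeasurable ?_
    filter_upwards [hb] with ω hω
    rw [Real.norm_eq_abs, abs_le]; exact ⟨by linarith [hω.1], hω.2⟩
  have hμ0 : 0 ≤ μ := by
    rw [← hmean]
    apply integral_nonneg_of_ae
    filter_upwards [hb] with ω hω using hω.1
  have hμ1 : μ ≤ 1 := by
    rw [← hmean]
    calc ∫ ω, Y ω ∂P ≤ ∫ _, (1:ℝ) ∂P := by
          apply integral_mono_ae hYint (integrable_const 1)
          filter_upwards [hb] with ω hω using hω.2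
      _ = 1 := by simp
  have hptwise : ∀ᵐ ω ∂P, Real.exp (c * Y ω) ≤ 1 - Y ω + Y ω * Real.exp c := by
    filter_upwards [hb] with ω hω
    have h := convexOn_exp.2 (Set.mem_univ (0:ℝ)) (Set.mem_univ c)
      (by linarith [hω.2] : (0:ℝ) ≤ 1 - Y ω) hω.1 (by ring)
    simpa [mul_comm] using h
  have hexp_int : Integrable (fun ω => Real.exp (c * Y ω)) P := by
    refine Integrable.mono' (integrable_const (Real.exp |c|)) ?_ ?_
    · exact (hm.const_mul c).exp.aestronglyMeasurable
    · filter_upwards [hb] with ω hω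
      rw [Real.norm_eq_abs, abs_of_pos (Real.exp_pos _)]
      apply Real.exp_le_exp.mpr
      calc c * Y ω ≤ |c * Y ω| := le_abs_self _
        _ = |c| * |Y ω| := abs_mul _ _
        _ ≤ |c| * 1 := by
            apply mul_le_mul_of_nonneg_left _ (abs_nonneg c)
            rw [abs_le]; exact ⟨by linarith [hω.1], hω.2⟩
        _ = |c| := mul_one _
  have hstep1 : ∫ ω, Real.exp (c * Y ω) ∂P ≤ 1 - μ + μ * Real.exp c := by
    have hrint : Integrable (fun ω => 1 - Y ω + Y ω * Real.exp c) P :=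
      ((integrable_const 1).sub hYint).add (hYint.mul_const _)
    calc ∫ ω, Real.exp (c * Y ω) ∂P ≤ ∫ ω, (1 - Y ω + Y ω * Real.exp c) ∂P :=
          integral_mono_ae hexp_int hrint hptwise
      _ = 1 - μ + μ * Real.exp c := by
          have heq : (fun ω => 1 - Y ω + Y ω * Real.exp c)
              = fun ω => 1 + (Real.exp c - 1) * Y ω := by funext ω; ring
          rw [heq, integral_add (integrable_const 1) (hYint.const_mul _),
            MeasureTheory.integral_const_mul, hmean]
          simp; ring
  have key : ∫ ω, Real.exp (c * (Y ω - μ)) ∂P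
      = (∫ ω, Real.exp (c * Y ω) ∂P) * Real.exp (-(c * μ)) := by
    rw [← integral_mul_const]
    congr 1; funext ω
    rw [← Real.exp_add]; ring_nf
  rw [key]
  have hDpos : 0 < 1 - μ + μ * Real.exp c := by
    rcases eq_or_lt_of_le hμ0 with h | h
    · rw [← h]; norm_num
    · have : 0 < μ * Real.exp c := mul_pos h (Real.exp_pos c)
      linarith
  have hlog := scan_aux_scalar_hoeffding μ hμ0 hμ1 c
  have hDle : 1 - μ + μ * Real.exp c ≤ Real.exp (c * μ + c ^ 2 / 8) := by
    calc 1 - μ + μ * Real.exp c = Real.exp (Real.log (1 - μ + μ * Real.exp c)) :=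
          (Real.exp_log hDpos).symm
      _ ≤ Real.exp (c * μ + c ^ 2 / 8) := Real.exp_le_exp.mpr hlog
  calc (∫ ω, Real.exp (c * Y ω) ∂P) * Real.exp (-(c * μ))
      ≤ (1 - μ + μ * Real.exp c) * Real.exp (-(c * μ)) := by
        apply mul_le_mul_of_nonneg_right hstep1 (Real.exp_pos _).le
    _ ≤ Real.exp (c * μ + c ^ 2 / 8) * Real.exp (-(c * μ)) := by
        apply mul_le_mul_of_nonneg_right hDle (Real.exp_pos _).le
    _ = Real.exp (c ^ 2 / 8) := by rw [← Real.exp_add]; ring_nf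

lemma scan_aux_crossing {Ω : Type*} [MeasurableSpace Ω] (P : Measure Ω) [IsProbabilityMeasure P]
    {ι : Type*} (g : ι → Ω → ℝ)
    (hindep : iIndepFun g P)
    (hmeas : ∀ i, Measurable (g i))
    (hmgf : ∀ i (c : ℝ), ∫ ω, Real.exp (c * g i ω) ∂P ≤ Real.exp (c ^ 2 / 8))
    (hint : ∀ i (c : ℝ), Integrable (fun ω => Real.exp (c * g i ω)) P)
    (hint0 : ∀ i, Integrable (g i) P)
    (hmean0 : ∀ i, ∫ ω, g i ω ∂P = 0)
    (C : ℕ → Finset ι) (hmono : Monotone C) (hC0 : C 0 = ∅)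
    (N : ℕ) (hN : 1 ≤ N) (hcard : (C N).card ≤ N)
    (a : ℝ) (ha : 0 < a) :
    P {ω | ∃ n, 1 ≤ n ∧ n ≤ N ∧ a ≤ ∑ i ∈ C n, g i ω}
      ≤ ENNReal.ofReal (Real.exp (-2 * a ^ 2 / N)) := by
  classical
  have hNpos : (0:ℝ) < N := by exact_mod_cast hN
  set c : ℝ := 4 * a / N with hc
  have hcpos : 0 < c := by positivity
  set S : ℕ → Ω → ℝ := fun n ω => ∑ i ∈ C n, g i ω with hS
  have hSmeas : ∀ n, Measurable (S n) := fun n => Finset.measurable_sum _ fun i _ => hmeas i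
  set B : ℕ → Set Ω := fun n => {ω | a ≤ S n ω ∧ ∀ m < n, S m ω < a} with hB
  have hBmeas : ∀ n, MeasurableSet (B n) := by
    intro n
    have : B n = {ω | a ≤ S n ω} ∩ ⋂ m ∈ Finset.range n, {ω | S m ω < a} := by
      ext ω
      simp only [hB, Set.mem_setOf_eq, Set.mem_inter_iff, Set.mem_iInter, Finset.mem_range]
    rw [this]
    exact (measurableSet_le measurable_const (hSmeas n)).inter
      (MeasurableSet.biInter (Set.to_countable _)
        (fun m _ => measurableSet_lt (hSmeas m) measurable_const))
  -- integrability of exponential of window sums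
  have hDint : ∀ s : Finset ι, Integrable (fun ω => Real.exp (c * ∑ i ∈ s, g i ω)) P := by
    intro s
    have := hindep.integrable_exp_mul_sum hmeas (s := s) (fun i _ => hint i c)
    simpa [Finset.sum_apply] using this
  -- Expected exp of a window sum bounded below by 1
  have hED1 : ∀ s : Finset ι, (1:ℝ) ≤ ∫ ω, Real.exp (c * ∑ i ∈ s, g i ω) ∂P := by
    intro s
    have hint0s : Integrable (fun ω => ∑ i ∈ s, g i ω) P :=
      integrable_finset_sum _ (fun i _ => hint0 i)
    have hmeanS : ∫ ω, ∑ i ∈ s, g i ω ∂P = 0 := by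
      rw [integral_finset_sum _ (fun i _ => hint0 i)]
      simp [hmean0]
    calc (1:ℝ) = ∫ ω, (1 + c * ∑ i ∈ s, g i ω) ∂P := by
          rw [integral_add (integrable_const 1) (hint0s.const_mul c),
            MeasureTheory.integral_const_mul, hmeanS]
          simp
      _ ≤ ∫ ω, Real.exp (c * ∑ i ∈ s, g i ω) ∂P := by
          apply integral_mono ((integrable_const 1).add (hint0s.const_mul c)) (hDint s)
          intro ω
          simp only [Pi.add_apply]
          have := Real.add_one_le_exp (c * ∑ i ∈ s, g i ω)
          linarith
  -- mgf bound for the full window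
  have hmgfN : ∫ ω, Real.exp (c * S N ω) ∂P ≤ Real.exp (N * c ^ 2 / 8) := by
    have h1 : ∫ ω, Real.exp (c * S N ω) ∂P = mgf (∑ i ∈ C N, g i) P c := by
      simp only [mgf, Finset.sum_apply, hS]
    rw [h1, hindep.mgf_sum hmeas]
    calc ∏ i ∈ C N, mgf (g i) P c ≤ ∏ i ∈ C N, Real.exp (c ^ 2 / 8) := by
          apply Finset.prod_le_prod (fun i _ => mgf_nonneg) (fun i _ => hmgf i c)
      _ = Real.exp (c ^ 2 / 8) ^ (C N).card := Finset.prod_const _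
      _ = Real.exp ((C N).card * (c ^ 2 / 8)) := by rw [← Real.exp_nat_mul]
      _ ≤ Real.exp (N * c ^ 2 / 8) := by
          apply Real.exp_le_exp.mpr
          have : ((C N).card : ℝ) ≤ N := by exact_mod_cast hcard
          have h8 : (0:ℝ) ≤ c ^ 2 / 8 := by positivity
          calc ((C N).card : ℝ) * (c ^ 2 / 8) ≤ N * (c ^ 2 / 8) :=
                mul_le_mul_of_nonneg_right this h8
            _ = N * c ^ 2 / 8 := by ring
  have hSNint : Integrable (fun ω => Real.exp (c * S N ω)) P := hDint (C N)
  -- key per-n bound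
  have hkey : ∀ n, 1 ≤ n → n ≤ N →
      (P (B n)).toReal * Real.exp (c * a) ≤ ∫ ω in B n, Real.exp (c * S N ω) ∂P := by
    intro n h1n hnN
    have hsubCn : C n ⊆ C N := hmono hnN
    set D : Ω → ℝ := fun ω => ∑ i ∈ C N \ C n, g i ω with hDdef
    have hdecomp : ∀ ω, S N ω = S n ω + D ω := by
      intro ω
      simp only [hS, hDdef]
      rw [← Finset.sum_sdiff hsubCn]
      ring
    -- independence of indicator of B n and exp (c * D)
    have hIF := hindep.indepFun_finset (C n) (C N \ C n) Finset.disjoint_sdiff hmeas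
    set ψ : ℕ → (↥(C n) → ℝ) → ℝ :=
      fun m v => ∑ i : ↥(C n), if (i : ι) ∈ C m then v i else 0 with hψdef
    have hψmeas : ∀ m, Measurable (ψ m) := by
      intro m
      apply Finset.measurable_sum
      intro i _
      by_cases h : (i : ι) ∈ C m
      · simpa [h] using measurable_pi_apply i
      · simpa [h] using measurable_const
    have hψeval : ∀ m, m ≤ n → ∀ ω, ψ m (fun i => g i ω) = S m ω := by
      intro m hmn ω
      rw [hψdef]
      simp only
      rw [Finset.sum_coe_sort (C n) (fun i => if i ∈ C m then g i ω else 0)]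
      rw [Finset.sum_ite_mem]
      rw [Finset.inter_eq_right.mpr (hmono hmn)]
    set A : Set (↥(C n) → ℝ) :=
      {v | a ≤ ψ n v ∧ ∀ m ∈ Finset.range n, ψ m v < a} with hAdef
    have hAmeas : MeasurableSet A := by
      have : A = {v | a ≤ ψ n v} ∩ ⋂ m ∈ Finset.range n, {v | ψ m v < a} := by
        ext v
        simp only [hAdef, Set.mem_setOf_eq, Set.mem_inter_iff, Set.mem_iInter]
      rw [this]
      exact (measurableSet_le measurable_const (hψmeas n)).inter
        (MeasurableSet.biInter (Set.to_countable _)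
          (fun m _ => measurableSet_lt (hψmeas m) measurable_const))
    set φ₁ : (↥(C n) → ℝ) → ℝ := A.indicator (fun _ => 1) with hφ₁def
    set φ₂ : (↥(C N \ C n) → ℝ) → ℝ :=
      fun v => Real.exp (c * ∑ i : ↥(C N \ C n), v i) with hφ₂def
    have hφ₁meas : Measurable φ₁ := (measurable_const.indicator hAmeas)
    have hφ₂meas : Measurable φ₂ :=
      ((Finset.measurable_sum _ (fun i _ => measurable_pi_apply i)).const_mul c).exp
    have hcomp := hIF.comp hφ₁meas hφ₂meas
    have hcomp₁ : (φ₁ ∘ fun ω (i : ↥(C n)) => g i ω)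
        = (B n).indicator (fun _ => (1:ℝ)) := by
      funext ω
      simp only [Function.comp_apply, hφ₁def]
      by_cases hω : ω ∈ B n
      · rw [Set.indicator_of_mem hω]
        rw [Set.indicator_of_mem]
        rw [hAdef]
        simp only [Set.mem_setOf_eq]
        constructor
        · rw [hψeval n le_rfl ω]; exact hω.1
        · intro m hm
          rw [hψeval m (le_of_lt (Finset.mem_range.mp hm)) ω]
          exact hω.2 m (Finset.mem_range.mp hm)
      · rw [Set.indicator_of_notMem hω]
        rw [Set.indicator_of_notMem]
        rw [hAdef]
        simp only [Set.mem_setOf_eq]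
        intro hcon
        apply hω
        constructor
        · rw [← hψeval n le_rfl ω]; exact hcon.1
        · intro m hm
          rw [← hψeval m (le_of_lt hm) ω]
          exact hcon.2 m (Finset.mem_range.mpr hm)
    have hcomp₂ : (φ₂ ∘ fun ω (i : ↥(C N \ C n)) => g i ω)
        = fun ω => Real.exp (c * D ω) := by
      funext ω
      simp only [Function.comp_apply, hφ₂def, hDdef]
      rw [Finset.sum_coe_sort (C N \ C n) (fun i => g i ω)]
    rw [hcomp₁, hcomp₂] at hcomp
    have hindint : Integrable ((B n).indicator fun _ => (1:ℝ)) P :=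
      (integrable_const 1).indicator (hBmeas n)
    have hexpDint : Integrable (fun ω => Real.exp (c * D ω)) P := hDint _
    have hprod : ∫ ω, (B n).indicator (fun _ => (1:ℝ)) ω * Real.exp (c * D ω) ∂P
        = (∫ ω, (B n).indicator (fun _ => (1:ℝ)) ω ∂P) * ∫ ω, Real.exp (c * D ω) ∂P := by
      have := hcomp.integral_mul_eq_mul_integral hindint.aestronglyMeasurable hexpDint.aestronglyMeasurable
      simpa [Pi.mul_apply] using this
    have hindval : ∫ ω, (B n).indicator (fun _ => (1:ℝ)) ω ∂P = (P (B n)).toReal := by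
      rw [MeasureTheory.integral_indicator_const (1:ℝ) (hBmeas n)]
      simp
      rfl
    -- lower bound chain
    have step1 : ∫ ω in B n, Real.exp (c * a) * Real.exp (c * D ω) ∂P
        ≤ ∫ ω in B n, Real.exp (c * S N ω) ∂P := by
      apply setIntegral_mono_on ((hexpDint.const_mul _).integrableOn)
        (hSNint.integrableOn) (hBmeas n)
      intro ω hω
      rw [hdecomp ω, mul_add, Real.exp_add]
      apply mul_le_mul_of_nonneg_right _ (Real.exp_pos _).le
      exact Real.exp_le_exp.mpr (mul_le_mul_of_nonneg_left hω.1 hcpos.le)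
    have step2 : ∫ ω in B n, Real.exp (c * a) * Real.exp (c * D ω) ∂P
        = Real.exp (c * a) * ∫ ω, (B n).indicator (fun _ => (1:ℝ)) ω * Real.exp (c * D ω) ∂P := by
      rw [← integral_indicator (hBmeas n)]
      rw [← MeasureTheory.integral_const_mul]
      congr 1
      funext ω
      by_cases hω : ω ∈ B n
      · simp [Set.indicator_of_mem hω]
      · simp [Set.indicator_of_notMem hω]
    calc (P (B n)).toReal * Real.exp (c * a)
        = Real.exp (c * a) * ((P (B n)).toReal * 1) := by ring
      _ ≤ Real.exp (c * a) * ((P (B n)).toReal * ∫ ω, Real.exp (c * D ω) ∂P) := by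
          apply mul_le_mul_of_nonneg_left _ (Real.exp_pos _).le
          exact mul_le_mul_of_nonneg_left (hED1 _) ENNReal.toReal_nonneg
      _ = Real.exp (c * a) * ∫ ω, (B n).indicator (fun _ => (1:ℝ)) ω * Real.exp (c * D ω) ∂P := by
          rw [hprod, hindval]
      _ = ∫ ω in B n, Real.exp (c * a) * Real.exp (c * D ω) ∂P := step2.symm
      _ ≤ ∫ ω in B n, Real.exp (c * S N ω) ∂P := step1
  -- the union
  set T : Set Ω := ⋃ n ∈ Finset.Icc 1 N, B n with hT
  have hTmeas : MeasurableSet T := Finset.measurableSet_biUnion _ (fun n _ => hBmeas n)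
  have hsub : {ω | ∃ n, 1 ≤ n ∧ n ≤ N ∧ a ≤ ∑ i ∈ C n, g i ω} ⊆ T := by
    intro ω hω
    obtain ⟨n, h1, h2, h3⟩ := hω
    have hex : ∃ m, a ≤ S m ω := ⟨n, h3⟩
    set n₀ := Nat.find hex with hn₀
    have hn₀le : n₀ ≤ n := Nat.find_le h3
    have hn₀spec : a ≤ S n₀ ω := Nat.find_spec hex
    have hn₀pos : 1 ≤ n₀ := by
      by_contra h
      push_neg at h
      interval_cases n₀
      · rw [hS] at hn₀spec
        simp only [hC0, Finset.sum_empty] at hn₀spec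
        linarith
    rw [hT]
    apply Set.mem_biUnion (Finset.mem_Icc.mpr ⟨hn₀pos, le_trans hn₀le h2⟩)
    exact ⟨hn₀spec, fun m hm => not_le.mp (Nat.find_min hex hm)⟩
  have hdisj : (Finset.Icc 1 N : Set ℕ).PairwiseDisjoint B := by
    intro m hm n hn hmn
    rcases lt_or_gt_of_ne hmn with h | h
    · apply Set.disjoint_left.mpr
      intro ω hωm hωn
      exact absurd hωm.1 (not_le.mpr (hωn.2 m h))
    · apply Set.disjoint_left.mpr
      intro ω hωm hωn
      exact absurd hωn.1 (not_le.mpr (hωm.2 n h))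
  have hPsum : (P T).toReal = ∑ n ∈ Finset.Icc 1 N, (P (B n)).toReal := by
    rw [hT, measure_biUnion_finset hdisj (fun n _ => hBmeas n)]
    rw [ENNReal.toReal_sum (fun n _ => measure_ne_top P _)]
  have hintsum : ∑ n ∈ Finset.Icc 1 N, ∫ ω in B n, Real.exp (c * S N ω) ∂P
      = ∫ ω in T, Real.exp (c * S N ω) ∂P := by
    rw [hT]
    exact (integral_biUnion_finset _ (fun n _ => hBmeas n) hdisj
      (fun n _ => hSNint.integrableOn)).symm
  have hchain : (P T).toReal * Real.exp (c * a) ≤ Real.exp (N * c ^ 2 / 8) := by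
    calc (P T).toReal * Real.exp (c * a)
        = ∑ n ∈ Finset.Icc 1 N, (P (B n)).toReal * Real.exp (c * a) := by
          rw [hPsum, Finset.sum_mul]
      _ ≤ ∑ n ∈ Finset.Icc 1 N, ∫ ω in B n, Real.exp (c * S N ω) ∂P := by
          apply Finset.sum_le_sum
          intro n hn
          exact hkey n (Finset.mem_Icc.mp hn).1 (Finset.mem_Icc.mp hn).2
      _ = ∫ ω in T, Real.exp (c * S N ω) ∂P := hintsum
      _ ≤ ∫ ω, Real.exp (c * S N ω) ∂P := by
          apply setIntegral_le_integral hSNint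
          filter_upwards with ω using (Real.exp_pos _).le
      _ ≤ Real.exp (N * c ^ 2 / 8) := hmgfN
  have hfinal : (P T).toReal ≤ Real.exp (-2 * a ^ 2 / N) := by
    have h1 : (P T).toReal ≤ Real.exp (N * c ^ 2 / 8) / Real.exp (c * a) := by
      rw [le_div_iff₀ (Real.exp_pos _)]
      exact hchain
    have h2 : Real.exp (N * c ^ 2 / 8) / Real.exp (c * a)
        = Real.exp (N * c ^ 2 / 8 - c * a) := (Real.exp_sub _ _).symm
    have h3 : N * c ^ 2 / 8 - c * a = -2 * a ^ 2 / N := by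
      rw [hc]
      field_simp
      ring
    rw [h2, h3] at h1
    exact h1
  calc P {ω | ∃ n, 1 ≤ n ∧ n ≤ N ∧ a ≤ ∑ i ∈ C n, g i ω} ≤ P T := measure_mono hsub
    _ = ENNReal.ofReal (P T).toReal := (ENNReal.ofReal_toReal (measure_ne_top P T)).symm
    _ ≤ ENNReal.ofReal (Real.exp (-2 * a ^ 2 / N)) := ENNReal.ofReal_le_ofReal hfinal

/-- Crossing bound specialized to `[0,1]`-valued variables indexed by `Icc 1 t`. -/
lemma scan_aux_window {Ω : Type*} [MeasurableSpace Ω] (P : Measure Ω) [IsProbabilityMeasure P]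
    (t : ℕ) (Y : ℕ → Ω → ℝ)
    (hmeas : ∀ u ∈ Finset.Icc 1 t, Measurable (Y u))
    (hindep : iIndepFun
      (fun u : (Finset.Icc 1 t : Finset ℕ) => Y u.val) P)
    (hbdd : ∀ u ∈ Finset.Icc 1 t, ∀ᵐ ω ∂P, Y u ω ∈ Set.Icc (0 : ℝ) 1)
    (ν : ℝ) (hmean : ∀ u ∈ Finset.Icc 1 t, ∫ ω, Y u ω ∂P = ν)
    (C : ℕ → Finset (Finset.Icc 1 t : Finset ℕ)) (hmono : Monotone C) (hC0 : C 0 = ∅)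
    (N : ℕ) (hN : 1 ≤ N) (hcard : (C N).card ≤ N)
    (a : ℝ) (ha : 0 < a) :
    P {ω | ∃ n, 1 ≤ n ∧ n ≤ N ∧ a ≤ ∑ u ∈ C n, (Y u.val ω - ν)}
      ≤ ENNReal.ofReal (Real.exp (-2 * a ^ 2 / N)) := by
  set g : (Finset.Icc 1 t : Finset ℕ) → Ω → ℝ := fun u ω => Y u.val ω - ν with hg
  have hYint : ∀ u : (Finset.Icc 1 t : Finset ℕ), Integrable (Y u.val) P := by
    intro u
    refine Integrable.mono' (integrable_const 1) (hmeas u.val u.prop).aestronglyMeasurable ?_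
    filter_upwards [hbdd u.val u.prop] with ω hω
    rw [Real.norm_eq_abs, abs_le]; exact ⟨by linarith [hω.1], hω.2⟩
  have hgmeas : ∀ u, Measurable (g u) := fun u => (hmeas u.val u.prop).sub measurable_const
  have hgindep : iIndepFun g P := by
    have := hindep.comp (fun _ => fun x : ℝ => x - ν) (fun _ => measurable_id.sub measurable_const)
    exact this
  have hgmgf : ∀ u (c : ℝ), ∫ ω, Real.exp (c * g u ω) ∂P ≤ Real.exp (c ^ 2 / 8) := by
    intro u c
    exact scan_aux_mgf_le P (Y u.val) (hmeas u.val u.prop) (hbdd u.val u.prop) ν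
      (hmean u.val u.prop) c
  have hgint : ∀ u (c : ℝ), Integrable (fun ω => Real.exp (c * g u ω)) P := by
    intro u c
    refine Integrable.mono' (integrable_const (Real.exp (|c| * (1 + |ν|)))) ?_ ?_
    · exact ((hgmeas u).const_mul c).exp.aestronglyMeasurable
    · filter_upwards [hbdd u.val u.prop] with ω hω
      rw [Real.norm_eq_abs, abs_of_pos (Real.exp_pos _)]
      apply Real.exp_le_exp.mpr
      calc c * g u ω ≤ |c * g u ω| := le_abs_self _
        _ = |c| * |g u ω| := abs_mul _ _
        _ ≤ |c| * (1 + |ν|) := by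
            apply mul_le_mul_of_nonneg_left _ (abs_nonneg c)
            rw [hg]
            simp only
            calc |Y u.val ω - ν| ≤ |Y u.val ω| + |ν| := abs_sub _ _
              _ ≤ 1 + |ν| := by
                  have : |Y u.val ω| ≤ 1 := by rw [abs_le]; exact ⟨by linarith [hω.1], hω.2⟩
                  linarith
  have hgint0 : ∀ u, Integrable (g u) P := fun u => (hYint u).sub (integrable_const ν)
  have hgmean0 : ∀ u, ∫ ω, g u ω ∂P = 0 := by
    intro u
    rw [hg]
    simp only
    rw [integral_sub (hYint u) (integrable_const ν), hmean u.val u.prop]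
    simp
  exact scan_aux_crossing P g hgindep hgmeas hgmgf hgint hgint0 hgmean0 C hmono hC0 N hN hcard a ha

set_option maxHeartbeats 2000000 in
lemma scan_aux_main
    {Ω : Type*} [MeasurableSpace Ω] (P : Measure Ω) [IsProbabilityMeasure P]
    (t : ℕ) (ht : 2 ≤ t) (δ : ℝ) (hδ : δ ∈ Set.Ioo (0 : ℝ) 1)
    (X : ℕ → Ω → ℝ)
    (hmeas : ∀ u ∈ Finset.Icc 1 t, Measurable (X u))
    (hindep : iIndepFun
      (fun u : (Finset.Icc 1 t : Finset ℕ) => X u.val) P)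
    (hbdd : ∀ u ∈ Finset.Icc 1 t, ∀ᵐ ω ∂P, X u ω ∈ Set.Icc (0 : ℝ) 1)
    (μ : ℝ) (hmean : ∀ u ∈ Finset.Icc 1 t, ∫ ω, X u ω ∂P = μ) :
    ENNReal.ofReal (1 - δ)
      ≤ P {ω | ∀ s ∈ Finset.Icc 1 (t - 1),
          |(∑ u ∈ Finset.Icc 1 s, X u ω) / (s : ℝ)
              - (∑ u ∈ Finset.Icc (s + 1) t, X u ω) / ((t - s : ℕ) : ℝ)|
            ≤ Real.sqrt (2 * Real.log (4 * Real.logb 2 ((t : ℝ) + 1) / δ) / (s : ℝ))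
              + Real.sqrt (2 * Real.log (4 * Real.logb 2 ((t : ℝ) + 1) / δ)
                  / ((t - s : ℕ) : ℝ))} := by
  classical
  obtain ⟨hδ0, hδ1⟩ := hδ
  set L₂ : ℝ := Real.logb 2 ((t : ℝ) + 1) with hL₂def
  have hL₂1 : 1 ≤ L₂ := by
    rw [hL₂def]
    calc (1:ℝ) = Real.logb 2 2 := (Real.logb_self_eq_one (by norm_num)).symm
      _ ≤ Real.logb 2 ((t:ℝ) + 1) := by
          apply Real.logb_le_logb_of_le (by norm_num) (by norm_num)
          have : (2:ℝ) ≤ (t:ℝ) := by exact_mod_cast ht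
          linarith
  set L : ℝ := Real.log (4 * L₂ / δ) with hLdef
  have hratio_pos : 0 < 4 * L₂ / δ := by positivity
  have hLpos : 0 < L := by
    rw [hLdef]
    apply Real.log_pos
    rw [lt_div_iff₀ hδ0]
    nlinarith
  -- index structures
  set ι := (Finset.Icc 1 t : Finset ℕ)
  set Cpre : ℕ → Finset ι := fun n => Finset.univ.filter (fun u : ι => (u : ℕ) ≤ n) with hCpre
  set Csuf : ℕ → Finset ι := fun m => Finset.univ.filter (fun u : ι => t + 1 - m ≤ (u : ℕ))
    with hCsuf
  have hCpre_mono : Monotone Cpre := by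
    intro m n hmn
    rw [hCpre, Finset.le_iff_subset]
    intro u hu
    simp only [Finset.mem_filter, Finset.mem_univ, true_and] at hu ⊢
    omega
  have hCsuf_mono : Monotone Csuf := by
    intro m n hmn
    rw [hCsuf, Finset.le_iff_subset]
    intro u hu
    simp only [Finset.mem_filter, Finset.mem_univ, true_and] at hu ⊢
    omega
  have hCpre0 : Cpre 0 = ∅ := by
    rw [hCpre]
    ext u
    simp only [Finset.mem_filter, Finset.mem_univ, true_and, Finset.notMem_empty, iff_false]
    have := u.prop
    rw [Finset.mem_Icc] at this
    omega
  have hCsuf0 : Csuf 0 = ∅ := by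
    rw [hCsuf]
    ext u
    simp only [Finset.mem_filter, Finset.mem_univ, true_and, Finset.notMem_empty, iff_false]
    have := u.prop
    rw [Finset.mem_Icc] at this
    omega
  -- generic sum identities
  have hgen_pre : ∀ n, n ≤ t → ∀ F : ℕ → ℝ,
      ∑ u ∈ Cpre n, F (u : ℕ) = ∑ x ∈ Finset.Icc 1 n, F x := by
    intro n hn F
    rw [hCpre]
    rw [Finset.sum_filter]
    rw [Finset.sum_coe_sort ((Finset.Icc 1 t)) (fun x => if x ≤ n then F x else 0)]
    rw [← Finset.sum_filter]
    congr 1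
    ext x
    simp only [Finset.mem_filter, Finset.mem_Icc]
    omega
  have hgen_suf : ∀ m, m ≤ t → ∀ F : ℕ → ℝ,
      ∑ u ∈ Csuf m, F (u : ℕ) = ∑ x ∈ Finset.Icc (t + 1 - m) t, F x := by
    intro m hm F
    rw [hCsuf]
    rw [Finset.sum_filter]
    rw [Finset.sum_coe_sort ((Finset.Icc 1 t)) (fun x => if t + 1 - m ≤ x then F x else 0)]
    rw [← Finset.sum_filter]
    congr 1
    ext x
    simp only [Finset.mem_filter, Finset.mem_Icc]
    omega
  have hcard_pre : ∀ n, (Cpre n).card ≤ n := by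
    intro n
    calc (Cpre n).card ≤ (Finset.Icc 1 n).card := by
          refine Finset.card_le_card_of_injOn (fun u => (u : ℕ)) ?_ ?_
          · intro u hu
            rw [hCpre] at hu
            simp only [Finset.mem_coe, Finset.mem_filter, Finset.mem_univ, true_and] at hu
            have hu2 := u.prop
            rw [Finset.mem_Icc] at hu2
            simp only [Finset.mem_coe, Finset.mem_Icc]
            beta_reduce
            omega
          · intro u _ v _ h
            exact Subtype.ext h
      _ = n := by rw [Nat.card_Icc]; omega
  have hcard_suf : ∀ m, m ≤ t → (Csuf m).card ≤ m := by
    intro m hm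
    calc (Csuf m).card ≤ (Finset.Icc (t + 1 - m) t).card := by
          refine Finset.card_le_card_of_injOn (fun u => (u : ℕ)) ?_ ?_
          · intro u hu
            rw [hCsuf] at hu
            simp only [Finset.mem_coe, Finset.mem_filter, Finset.mem_univ, true_and] at hu
            have hu2 := u.prop
            rw [Finset.mem_Icc] at hu2
            simp only [Finset.mem_coe, Finset.mem_Icc]
            beta_reduce
            omega
          · intro u _ v _ h
            exact Subtype.ext h
      _ = m := by rw [Nat.card_Icc]; omega
  -- the four crossing bounds
  set K : ℕ := Nat.log 2 (t - 1) with hKdef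
  set X' : ℕ → Ω → ℝ := fun u ω => 1 - X u ω with hX'def
  have hmeas' : ∀ u ∈ Finset.Icc 1 t, Measurable (X' u) :=
    fun u hu => measurable_const.sub (hmeas u hu)
  have hindep' : iIndepFun
      (fun u : (Finset.Icc 1 t : Finset ℕ) => X' u.val) P := by
    have := hindep.comp (fun _ => fun x : ℝ => 1 - x)
      (fun _ => measurable_const.sub measurable_id)
    exact this
  have hbdd' : ∀ u ∈ Finset.Icc 1 t, ∀ᵐ ω ∂P, X' u ω ∈ Set.Icc (0 : ℝ) 1 := by
    intro u hu
    filter_upwards [hbdd u hu] with ω hω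
    constructor
    · simp only [hX'def]; linarith [hω.2]
    · simp only [hX'def]; linarith [hω.1]
  have hXint : ∀ u ∈ Finset.Icc 1 t, Integrable (X u) P := by
    intro u hu
    refine Integrable.mono' (integrable_const 1) (hmeas u hu).aestronglyMeasurable ?_
    filter_upwards [hbdd u hu] with ω hω
    rw [Real.norm_eq_abs, abs_le]; exact ⟨by linarith [hω.1], hω.2⟩
  have hmean' : ∀ u ∈ Finset.Icc 1 t, ∫ ω, X' u ω ∂P = 1 - μ := by
    intro u hu
    rw [hX'def]
    simp only
    rw [integral_sub (integrable_const 1) (hXint u hu), hmean u hu]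
    simp
  -- epoch quantities
  set Nk : ℕ → ℕ := fun k => min (2 ^ (k + 1) - 1) (t - 1) with hNkdef
  set ak : ℕ → ℝ := fun k => Real.sqrt (2 * L * 2 ^ k) with hakdef
  have hNk1 : ∀ k, 1 ≤ Nk k := by
    intro k
    have hp : 1 ≤ 2 ^ k := Nat.one_le_two_pow
    have hp2 : 2 ^ (k + 1) = 2 * 2 ^ k := by ring
    rw [hNkdef]
    simp only [le_min_iff]
    exact ⟨by omega, by omega⟩
  have hak_pos : ∀ k, 0 < ak k := by
    intro k
    rw [hakdef]
    apply Real.sqrt_pos.mpr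
    positivity
  have hexp_bound : ∀ k, Real.exp (-2 * ak k ^ 2 / (Nk k)) ≤ Real.exp (-(2 * L)) := by
    intro k
    apply Real.exp_le_exp.mpr
    have hak2 : ak k ^ 2 = 2 * L * 2 ^ k := by
      rw [hakdef]
      simp only
      rw [Real.sq_sqrt (by positivity)]
    have hNkpos : (0:ℝ) < (Nk k : ℝ) := by exact_mod_cast hNk1 k
    have hNkle : (Nk k : ℝ) ≤ 2 * 2 ^ k := by
      have h1 : Nk k ≤ 2 ^ (k + 1) - 1 := min_le_left _ _
      have hp : 1 ≤ 2 ^ (k+1) := Nat.one_le_two_pow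
      have h2 : (Nk k : ℕ) ≤ 2 ^ (k+1) := by omega
      have : ((Nk k : ℕ) : ℝ) ≤ ((2 ^ (k+1) : ℕ) : ℝ) := by exact_mod_cast h2
      calc ((Nk k : ℕ) : ℝ) ≤ ((2 ^ (k+1) : ℕ) : ℝ) := this
        _ = 2 * 2 ^ k := by push_cast; ring
    rw [hak2]
    rw [div_le_iff₀ hNkpos]
    have h2k : (0:ℝ) < 2 ^ k := by positivity
    nlinarith
  -- the четыре events
  set E1 : ℕ → Set Ω := fun k =>
    {ω | ∃ n, 1 ≤ n ∧ n ≤ Nk k ∧ ak k ≤ ∑ u ∈ Cpre n, (X u.val ω - μ)} with hE1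
  set E2 : ℕ → Set Ω := fun k =>
    {ω | ∃ n, 1 ≤ n ∧ n ≤ Nk k ∧ ak k ≤ ∑ u ∈ Cpre n, (X' u.val ω - (1 - μ))} with hE2
  set E3 : ℕ → Set Ω := fun k =>
    {ω | ∃ n, 1 ≤ n ∧ n ≤ Nk k ∧ ak k ≤ ∑ u ∈ Csuf n, (X u.val ω - μ)} with hE3
  set E4 : ℕ → Set Ω := fun k =>
    {ω | ∃ n, 1 ≤ n ∧ n ≤ Nk k ∧ ak k ≤ ∑ u ∈ Csuf n, (X' u.val ω - (1 - μ))} with hE4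
  have hbound : ∀ k, P (E1 k) ≤ ENNReal.ofReal (Real.exp (-(2 * L)))
      ∧ P (E2 k) ≤ ENNReal.ofReal (Real.exp (-(2 * L)))
      ∧ P (E3 k) ≤ ENNReal.ofReal (Real.exp (-(2 * L)))
      ∧ P (E4 k) ≤ ENNReal.ofReal (Real.exp (-(2 * L))) := by
    intro k
    have hNkt : Nk k ≤ t - 1 := min_le_right _ _
    have hcard_sufNk : (Csuf (Nk k)).card ≤ Nk k := hcard_suf (Nk k) (by omega)
    refine ⟨?_, ?_, ?_, ?_⟩
    · exact le_trans (scan_aux_window P t X hmeas hindep hbdd μ hmean Cpre hCpre_mono hCpre0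
        (Nk k) (hNk1 k) (le_trans (hcard_pre (Nk k)) le_rfl) (ak k) (hak_pos k))
        (ENNReal.ofReal_le_ofReal (hexp_bound k))
    · exact le_trans (scan_aux_window P t X' hmeas' hindep' hbdd' (1 - μ) hmean' Cpre hCpre_mono
        hCpre0 (Nk k) (hNk1 k) (hcard_pre (Nk k)) (ak k) (hak_pos k))
        (ENNReal.ofReal_le_ofReal (hexp_bound k))
    · exact le_trans (scan_aux_window P t X hmeas hindep hbdd μ hmean Csuf hCsuf_mono hCsuf0
        (Nk k) (hNk1 k) hcard_sufNk (ak k) (hak_pos k))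
        (ENNReal.ofReal_le_ofReal (hexp_bound k))
    · exact le_trans (scan_aux_window P t X' hmeas' hindep' hbdd' (1 - μ) hmean' Csuf hCsuf_mono
        hCsuf0 (Nk k) (hNk1 k) hcard_sufNk (ak k) (hak_pos k))
        (ENNReal.ofReal_le_ofReal (hexp_bound k))
  -- inclusion of the bad event
  set Good : Set Ω := {ω | ∀ s ∈ Finset.Icc 1 (t - 1),
      |(∑ u ∈ Finset.Icc 1 s, X u ω) / (s : ℝ)
          - (∑ u ∈ Finset.Icc (s + 1) t, X u ω) / ((t - s : ℕ) : ℝ)|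
        ≤ Real.sqrt (2 * L / (s : ℝ)) + Real.sqrt (2 * L / ((t - s : ℕ) : ℝ))} with hGood
  have hincl : Goodᶜ ⊆ ⋃ k ∈ Finset.range (K + 1), (E1 k ∪ E2 k ∪ E3 k ∪ E4 k) := by
    intro ω hω
    rw [hGood] at hω
    simp only [Set.mem_compl_iff, Set.mem_setOf_eq, not_forall] at hω
    obtain ⟨s, hs, hviol⟩ := hω
    rw [Finset.mem_Icc] at hs
    obtain ⟨hs1, hs2⟩ := hs
    rw [not_le] at hviol
    have hst : s ≤ t := by omega
    have hspos : (0:ℝ) < (s:ℝ) := by exact_mod_cast hs1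
    set m : ℕ := t - s with hm
    have hm1 : 1 ≤ m := by omega
    have hmt : m ≤ t - 1 := by omega
    have hmpos : (0:ℝ) < (m:ℝ) := by exact_mod_cast hm1
    set A : ℝ := ∑ u ∈ Finset.Icc 1 s, X u ω with hA
    set B : ℝ := ∑ u ∈ Finset.Icc (s + 1) t, X u ω with hB
    -- one of the two deviations must be large
    have hdev : Real.sqrt (2 * L / (s:ℝ)) < |A / s - μ|
        ∨ Real.sqrt (2 * L / (m:ℝ)) < |B / m - μ| := by
      by_contra hcon
      push_neg at hcon
      have : |A / s - B / m| ≤ |A / s - μ| + |B / m - μ| := by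
        calc |A / s - B / m| = |(A / s - μ) - (B / m - μ)| := by ring_nf
          _ ≤ |A / s - μ| + |B / m - μ| := abs_sub _ _
      linarith [hviol, hcon.1, hcon.2]
    rcases hdev with hdev | hdev
    · -- prefix deviation
      have hkey : Real.sqrt (2 * L * s) < |A - s * μ| := by
        have h1 : |A - s * μ| = s * |A / s - μ| := by
          rw [← abs_of_pos hspos, ← abs_mul]
          congr 1
          field_simp
          rw [abs_of_pos hspos]; ring
        rw [h1]
        have h2 : Real.sqrt (2 * L * s) = s * Real.sqrt (2 * L / s) := by
          rw [← Real.sqrt_sq hspos.le, ← Real.sqrt_mul (by positivity)]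
          congr 1
          field_simp
          ring
          rw [Real.sq_sqrt (by positivity)]
        rw [h2]
        exact (mul_lt_mul_iff_right₀ hspos).mpr hdev
      set k : ℕ := Nat.log 2 s with hk
      have hkK : k ≤ K := by
        rw [hk, hKdef]
        exact Nat.log_mono_right (by omega)
      have h2ks : 2 ^ k ≤ s := Nat.pow_log_le_self 2 (by omega)
      have hsNk : s ≤ Nk k := by
        have hlt : s < 2 ^ (k + 1) := by
          rw [hk]
          simpa using Nat.lt_pow_succ_log_self (by norm_num : 1 < 2) s
        rw [hNkdef]
        simp only [le_min_iff]
        exact ⟨by omega, by omega⟩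
      have haks : ak k ≤ Real.sqrt (2 * L * s) := by
        rw [hakdef]
        apply Real.sqrt_le_sqrt
        have : ((2:ℝ) ^ k) ≤ (s:ℝ) := by exact_mod_cast h2ks
        nlinarith
      apply Set.mem_biUnion (Finset.mem_range.mpr (by omega : k < K + 1))
      rcases le_or_gt (A - s * μ) 0 with hsign | hsign
      · -- lower tail : use X'
        left; left; right
        rw [hE2]
        simp only [Set.mem_setOf_eq]
        refine ⟨s, hs1, hsNk, ?_⟩
        have hsum : ∑ u ∈ Cpre s, (X' u.val ω - (1 - μ)) = -(A - s * μ) := by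
          rw [hgen_pre s hst (fun x => X' x ω - (1 - μ))]
          have hc : s + 1 - 1 = s := by omega
          calc ∑ x ∈ Finset.Icc 1 s, (X' x ω - (1 - μ))
              = ∑ x ∈ Finset.Icc 1 s, (μ - X x ω) :=
                Finset.sum_congr rfl (fun x _ => by simp only [hX'def]; ring)
            _ = ((Finset.Icc 1 s).card : ℝ) * μ - A := by
                rw [Finset.sum_sub_distrib, Finset.sum_const, nsmul_eq_mul, hA]
            _ = -(A - s * μ) := by rw [Nat.card_Icc, hc]; ring
        rw [hsum]
        have : Real.sqrt (2 * L * s) < -(A - s * μ) := by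
          rw [abs_of_nonpos hsign] at hkey; exact hkey
        linarith [haks]
      · -- upper tail
        left; left; left
        rw [hE1]
        simp only [Set.mem_setOf_eq]
        refine ⟨s, hs1, hsNk, ?_⟩
        have hsum : ∑ u ∈ Cpre s, (X u.val ω - μ) = A - s * μ := by
          rw [hgen_pre s hst (fun x => X x ω - μ)]
          have hc : s + 1 - 1 = s := by omega
          rw [Finset.sum_sub_distrib, Finset.sum_const, nsmul_eq_mul, ← hA, Nat.card_Icc, hc]
        rw [hsum]
        have : Real.sqrt (2 * L * s) < A - s * μ := by
          rw [abs_of_pos hsign] at hkey; exact hkey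
        linarith [haks]
    · -- suffix deviation
      have hkey : Real.sqrt (2 * L * m) < |B - m * μ| := by
        have h1 : |B - m * μ| = m * |B / m - μ| := by
          rw [← abs_of_pos hmpos, ← abs_mul]
          congr 1
          field_simp
          rw [abs_of_pos hmpos]; ring
        rw [h1]
        have h2 : Real.sqrt (2 * L * m) = m * Real.sqrt (2 * L / m) := by
          rw [← Real.sqrt_sq hmpos.le, ← Real.sqrt_mul (by positivity)]
          congr 1
          field_simp
          ring
          rw [Real.sq_sqrt (by positivity)]
        rw [h2]
        exact (mul_lt_mul_iff_right₀ hmpos).mpr hdev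
      set k : ℕ := Nat.log 2 m with hk
      have hkK : k ≤ K := by
        rw [hk, hKdef]
        exact Nat.log_mono_right (by omega)
      have h2ks : 2 ^ k ≤ m := Nat.pow_log_le_self 2 (by omega)
      have hsNk : m ≤ Nk k := by
        have hlt : m < 2 ^ (k + 1) := by
          rw [hk]
          simpa using Nat.lt_pow_succ_log_self (by norm_num : 1 < 2) m
        rw [hNkdef]
        simp only [le_min_iff]
        exact ⟨by omega, by omega⟩
      have haks : ak k ≤ Real.sqrt (2 * L * m) := by
        rw [hakdef]
        apply Real.sqrt_le_sqrt
        have : ((2:ℝ) ^ k) ≤ (m:ℝ) := by exact_mod_cast h2ks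
        nlinarith
      have hsufidx : t + 1 - m = s + 1 := by omega
      apply Set.mem_biUnion (Finset.mem_range.mpr (by omega : k < K + 1))
      rcases le_or_gt (B - m * μ) 0 with hsign | hsign
      · right
        rw [hE4]
        simp only [Set.mem_setOf_eq]
        refine ⟨m, hm1, hsNk, ?_⟩
        have hsum : ∑ u ∈ Csuf m, (X' u.val ω - (1 - μ)) = -(B - m * μ) := by
          rw [hgen_suf m (by omega) (fun x => X' x ω - (1 - μ))]
          rw [hsufidx]
          have hc : t + 1 - (s + 1) = m := by omega
          calc ∑ x ∈ Finset.Icc (s + 1) t, (X' x ω - (1 - μ))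
              = ∑ x ∈ Finset.Icc (s + 1) t, (μ - X x ω) :=
                Finset.sum_congr rfl (fun x _ => by simp only [hX'def]; ring)
            _ = ((Finset.Icc (s + 1) t).card : ℝ) * μ - B := by
                rw [Finset.sum_sub_distrib, Finset.sum_const, nsmul_eq_mul, hB]
            _ = -(B - m * μ) := by rw [Nat.card_Icc, hc]; ring
        rw [hsum]
        have : Real.sqrt (2 * L * m) < -(B - m * μ) := by
          rw [abs_of_nonpos hsign] at hkey; exact hkey
        linarith [haks]
      · left; right
        rw [hE3]
        simp only [Set.mem_setOf_eq]
        refine ⟨m, hm1, hsNk, ?_⟩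
        have hsum : ∑ u ∈ Csuf m, (X u.val ω - μ) = B - m * μ := by
          rw [hgen_suf m (by omega) (fun x => X x ω - μ)]
          rw [hsufidx]
          have hc : t + 1 - (s + 1) = m := by omega
          rw [Finset.sum_sub_distrib, Finset.sum_const, nsmul_eq_mul, ← hB, Nat.card_Icc, hc]
        rw [hsum]
        have : Real.sqrt (2 * L * m) < B - m * μ := by
          rw [abs_of_pos hsign] at hkey; exact hkey
        linarith [haks]
  -- measure of bad event
  have hbadP : P Goodᶜ ≤ ENNReal.ofReal δ := by
    calc P Goodᶜ ≤ P (⋃ k ∈ Finset.range (K + 1), (E1 k ∪ E2 k ∪ E3 k ∪ E4 k)) :=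
          measure_mono hincl
      _ ≤ ∑ k ∈ Finset.range (K + 1), P (E1 k ∪ E2 k ∪ E3 k ∪ E4 k) :=
          measure_biUnion_finset_le _ _
      _ ≤ ∑ k ∈ Finset.range (K + 1), (4 * ENNReal.ofReal (Real.exp (-(2 * L)))) := by
          apply Finset.sum_le_sum
          intro k _
          obtain ⟨h1, h2, h3, h4⟩ := hbound k
          calc P (E1 k ∪ E2 k ∪ E3 k ∪ E4 k)
              ≤ P (E1 k ∪ E2 k ∪ E3 k) + P (E4 k) := measure_union_le _ _
            _ ≤ (P (E1 k ∪ E2 k) + P (E3 k)) + P (E4 k) := by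
                gcongr
                exact measure_union_le _ _
            _ ≤ ((P (E1 k) + P (E2 k)) + P (E3 k)) + P (E4 k) := by
                gcongr
                exact measure_union_le _ _
            _ ≤ ((ENNReal.ofReal (Real.exp (-(2 * L))) + ENNReal.ofReal (Real.exp (-(2 * L))))
                  + ENNReal.ofReal (Real.exp (-(2 * L)))) + ENNReal.ofReal (Real.exp (-(2 * L)))
                := by gcongr
            _ = 4 * ENNReal.ofReal (Real.exp (-(2 * L))) := by ring
      _ = (K + 1 : ℕ) * (4 * ENNReal.ofReal (Real.exp (-(2 * L)))) := by
          rw [Finset.sum_const, Finset.card_range, nsmul_eq_mul]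
      _ ≤ ENNReal.ofReal δ := by
          rw [show ((K + 1 : ℕ) : ℝ≥0∞) = ENNReal.ofReal ((K + 1 : ℕ) : ℝ) from
            (ENNReal.ofReal_natCast (K + 1)).symm]
          rw [show (4 : ℝ≥0∞) = ENNReal.ofReal (4:ℝ) by rw [ENNReal.ofReal_ofNat]]
          rw [← ENNReal.ofReal_mul (by norm_num), ← ENNReal.ofReal_mul (by positivity)]
          apply ENNReal.ofReal_le_ofReal
          -- the numeric inequality
          have hexpL : Real.exp L = 4 * L₂ / δ := Real.exp_log hratio_pos
          have hexp2L : Real.exp (-(2 * L)) = (δ / (4 * L₂)) ^ 2 := by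
            rw [show (2:ℝ) * L = L + L by ring, Real.exp_neg, Real.exp_add, hexpL]
            rw [div_pow]
            field_simp
          have hKle : (K : ℝ) ≤ L₂ := by
            have h2K : (2:ℕ) ^ K ≤ t - 1 := Nat.pow_log_le_self 2 (by omega)
            have h2KR : ((2:ℝ)) ^ K ≤ (t:ℝ) + 1 := by
              have : ((2^K : ℕ) : ℝ) ≤ ((t - 1 : ℕ) : ℝ) := by exact_mod_cast h2K
              have h1 : ((t - 1 : ℕ) : ℝ) ≤ (t:ℝ) + 1 := by
                have : (t - 1 : ℕ) ≤ t + 1 := by omega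
                exact_mod_cast this
              calc ((2:ℝ)) ^ K = ((2^K : ℕ) : ℝ) := by push_cast; ring
                _ ≤ ((t - 1 : ℕ) : ℝ) := this
                _ ≤ (t:ℝ) + 1 := h1
            calc (K : ℝ) = K * Real.logb 2 2 := by
                  rw [Real.logb_self_eq_one (by norm_num)]; ring
              _ = Real.logb 2 ((2:ℝ) ^ K) := (Real.logb_pow 2 2 K).symm
              _ ≤ Real.logb 2 ((t:ℝ) + 1) := by
                  apply Real.logb_le_logb_of_le (by norm_num) (by positivity) h2KR
              _ = L₂ := hL₂def.symm
          rw [hexp2L]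
          have hL₂pos : (0:ℝ) < L₂ := by linarith
          rw [div_pow]
          have h4L₂ : (0:ℝ) < (4 * L₂)^2 := by positivity
          rw [show ((K+1:ℕ):ℝ) * (4 * (δ^2 / (4*L₂)^2)) = ((K:ℝ)+1) * 4 * δ^2 / (4*L₂)^2 by
            push_cast; ring]
          rw [div_le_iff₀ h4L₂]
          have hδ2 : δ ^ 2 ≤ δ := by nlinarith
          have hK1 : (K:ℝ) + 1 ≤ 4 * L₂ ^ 2 := by nlinarith [hKle, hL₂1]
          have hmain : ((K:ℝ) + 1) * δ ^ 2 ≤ (4 * L₂ ^ 2) * δ :=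
            mul_le_mul hK1 hδ2 (by positivity) (by positivity)
          nlinarith [hmain]
  -- conclude
  have hGoodmeas : MeasurableSet Good := by
    rw [hGood]
    have : {ω | ∀ s ∈ Finset.Icc 1 (t - 1),
        |(∑ u ∈ Finset.Icc 1 s, X u ω) / (s : ℝ)
            - (∑ u ∈ Finset.Icc (s + 1) t, X u ω) / ((t - s : ℕ) : ℝ)|
          ≤ Real.sqrt (2 * L / (s : ℝ)) + Real.sqrt (2 * L / ((t - s : ℕ) : ℝ))}
        = ⋂ s ∈ Finset.Icc 1 (t - 1), {ω |
        |(∑ u ∈ Finset.Icc 1 s, X u ω) / (s : ℝ)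
            - (∑ u ∈ Finset.Icc (s + 1) t, X u ω) / ((t - s : ℕ) : ℝ)|
          ≤ Real.sqrt (2 * L / (s : ℝ)) + Real.sqrt (2 * L / ((t - s : ℕ) : ℝ))} := by
      ext ω
      simp only [Set.mem_setOf_eq, Set.mem_iInter]
    rw [this]
    apply MeasurableSet.biInter (Set.to_countable _)
    intro s hs
    have hs2 : s ∈ Finset.Icc 1 (t - 1) := hs
    have hs' : 1 ≤ s ∧ s ≤ t - 1 := Finset.mem_Icc.mp hs2
    have hmeas1 : Measurable (fun ω => ∑ u ∈ Finset.Icc 1 s, X u ω) := by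
      apply Finset.measurable_sum
      intro u hu
      rw [Finset.mem_Icc] at hu
      have := hs'.2
      exact hmeas u (Finset.mem_Icc.mpr ⟨hu.1, by omega⟩)
    have hmeas2 : Measurable (fun ω => ∑ u ∈ Finset.Icc (s+1) t, X u ω) := by
      apply Finset.measurable_sum
      intro u hu
      rw [Finset.mem_Icc] at hu
      exact hmeas u (Finset.mem_Icc.mpr ⟨by omega, hu.2⟩)
    apply measurableSet_le
    · exact ((hmeas1.div_const _).sub (hmeas2.div_const _)).abs
    · exact measurable_const
  show ENNReal.ofReal (1 - δ) ≤ P Good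
  calc ENNReal.ofReal (1 - δ) = 1 - ENNReal.ofReal δ := by
        rw [ENNReal.ofReal_sub 1 hδ0.le, ENNReal.ofReal_one]
    _ ≤ 1 - P Goodᶜ := tsub_le_tsub_left hbadP 1
    _ = P Good := by
        have := prob_compl_eq_one_sub (μ := P) hGoodmeas.compl
        rw [compl_compl] at this
        rw [← this]


/-- No false alarm for the confidence-based scan statistic: for independent `[0,1]`-valued
random variables `X 1, …, X t` with common mean `μ` (no changepoint), with probability at
least `1 - δ`, simultaneously for every split `s ∈ {1, …, t-1}`, the scan statistic does not
trigger: `|μ̂(1:s) - μ̂(s+1:t)| ≤ β(s, δ) + β(t-s, δ)`. -/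
theorem scan_statistic_no_false_alarm
    {Ω : Type*} [MeasurableSpace Ω] (P : Measure Ω) [IsProbabilityMeasure P]
    (t : ℕ) (ht : 2 ≤ t) (δ : ℝ) (hδ : δ ∈ Set.Ioo (0 : ℝ) 1)
    (X : ℕ → Ω → ℝ)
    (hmeas : ∀ u ∈ Finset.Icc 1 t, Measurable (X u))
    (hindep : iIndepFun
      (fun u : (Finset.Icc 1 t : Finset ℕ) => X u.val) P)
    (hbdd : ∀ u ∈ Finset.Icc 1 t, ∀ᵐ ω ∂P, X u ω ∈ Set.Icc (0 : ℝ) 1)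
    (μ : ℝ) (hmean : ∀ u ∈ Finset.Icc 1 t, ∫ ω, X u ω ∂P = μ) :
    ENNReal.ofReal (1 - δ)
      ≤ P {ω | ∀ s ∈ Finset.Icc 1 (t - 1),
          |(∑ u ∈ Finset.Icc 1 s, X u ω) / (s : ℝ)
              - (∑ u ∈ Finset.Icc (s + 1) t, X u ω) / ((t - s : ℕ) : ℝ)|
            ≤ Real.sqrt (2 * Real.log (4 * Real.logb 2 ((t : ℝ) + 1) / δ) / (s : ℝ))
              + Real.sqrt (2 * Real.log (4 * Real.logb 2 ((t : ℝ) + 1) / δ)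
                  / ((t - s : ℕ) : ℝ))} :=
  scan_aux_main P t ht δ hδ X hmeas hindep hbdd μ hmean
end

section
/- (Detection of a sufficiently separated changepoint.) Let X₁, …, X_t be independent random variables with values in [0,1] almost surely, and suppose there is a changepoint at τ ∈ {1,…,t−1}: E[X_u] = μ′ for all u ≤ τ and E[X_u] = μ″ for all u > τ, with gap Δ := |μ′ − μ″| > 0. If both τ > 32 log(4 log₂(t+1)/δ)/Δ² and t − τ > 32 log(4 log₂(t+1)/δ)/Δ², then with probability at least 1 − δ the confidence-based scan statistic triggers at the split τ: |μ̂(1:τ) − μ̂(τ+1:t)| > β(τ, δ) + β(t−τ, δ), where β(n, δ) = √(2 log(4 log₂(t+1)/δ)/n). -/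
open MeasureTheory ProbabilityTheory Real

lemma mgf_le_of_centered_bounded {Ω : Type*} [MeasurableSpace Ω] {P : Measure Ω}
    [IsProbabilityMeasure P] {Z : Ω → ℝ} (hm : Measurable Z)
    (hb : ∀ᵐ ω ∂P, |Z ω| ≤ 1) (hc : ∫ ω, Z ω ∂P = 0) (s : ℝ) :
    mgf Z P s ≤ Real.exp (s ^ 2 / 2) := by
  have hZint : Integrable Z P :=
    Integrable.mono' (integrable_const 1) hm.aestronglyMeasurable hb
  have hpt : ∀ᵐ ω ∂P, Real.exp (s * Z ω) ≤ Real.cosh s + Z ω * Real.sinh s := by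
    filter_upwards [hb] with ω hω
    have hy1 : -1 ≤ Z ω := (abs_le.mp hω).1
    have hy2 : Z ω ≤ 1 := (abs_le.mp hω).2
    have h := convexOn_exp.2 (Set.mem_univ (-s)) (Set.mem_univ s)
      (show (0:ℝ) ≤ (1 - Z ω) / 2 by linarith) (show (0:ℝ) ≤ (1 + Z ω) / 2 by linarith)
      (show (1 - Z ω) / 2 + (1 + Z ω) / 2 = 1 by ring)
    simp only [smul_eq_mul] at h
    have he : (1 - Z ω) / 2 * (-s) + (1 + Z ω) / 2 * s = s * Z ω := by ring
    rw [he] at h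
    calc Real.exp (s * Z ω) ≤ (1 - Z ω) / 2 * Real.exp (-s) + (1 + Z ω) / 2 * Real.exp s := h
      _ = Real.cosh s + Z ω * Real.sinh s := by
          rw [Real.cosh_eq, Real.sinh_eq]; ring
  have hint1 : Integrable (fun ω => Real.exp (s * Z ω)) P := by
    refine Integrable.mono' (integrable_const (Real.exp |s|))
      ((hm.const_mul s).exp).aestronglyMeasurable ?_
    filter_upwards [hb] with ω hω
    rw [Real.norm_eq_abs, abs_of_pos (Real.exp_pos _)]
    refine Real.exp_le_exp.mpr ?_
    calc s * Z ω ≤ |s * Z ω| := le_abs_self _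
      _ = |s| * |Z ω| := abs_mul _ _
      _ ≤ |s| * 1 := by gcongr
      _ = |s| := mul_one _
  have hint2 : Integrable (fun ω => Real.cosh s + Z ω * Real.sinh s) P :=
    (integrable_const _).add (hZint.mul_const _)
  calc mgf Z P s = ∫ ω, Real.exp (s * Z ω) ∂P := rfl
    _ ≤ ∫ ω, (Real.cosh s + Z ω * Real.sinh s) ∂P := integral_mono_ae hint1 hint2 hpt
    _ = Real.cosh s + (∫ ω, Z ω ∂P) * Real.sinh s := by
        rw [integral_add (integrable_const _) (hZint.mul_const _), integral_const,
          integral_mul_const]; simp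
    _ = Real.cosh s := by rw [hc]; ring
    _ ≤ Real.exp (s ^ 2 / 2) := Real.cosh_le_exp_half_sq s

lemma chernoff_abs_bound {Ω ι : Type*} [MeasurableSpace Ω] {P : Measure Ω}
    [IsProbabilityMeasure P] {Z : ι → Ω → ℝ}
    (hindep : iIndepFun Z P)
    (hm : ∀ i, Measurable (Z i)) (S : Finset ι)
    (hb : ∀ i ∈ S, ∀ᵐ ω ∂P, |Z i ω| ≤ 1) (hc : ∀ i ∈ S, ∫ ω, Z i ω ∂P = 0)
    {a : ℝ} (ha : 0 < a) (hcard : 0 < S.card) :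
    (P {ω | a ≤ |∑ i ∈ S, Z i ω|}).toReal
      ≤ 2 * Real.exp (-(a ^ 2) / (2 * S.card)) := by
  set n : ℝ := (S.card : ℝ) with hn
  have hnpos : 0 < n := by rw [hn]; exact_mod_cast hcard
  set s : ℝ := a / n with hs
  have hspos : 0 < s := div_pos ha hnpos
  -- integrability of exp (c * Z i) for any c
  have hint : ∀ c : ℝ, ∀ i ∈ S, Integrable (fun ω => Real.exp (c * Z i ω)) P := by
    intro c i hi
    refine Integrable.mono' (integrable_const (Real.exp |c|))
      (((hm i).const_mul c).exp).aestronglyMeasurable ?_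
    filter_upwards [hb i hi] with ω hω
    rw [Real.norm_eq_abs, abs_of_pos (Real.exp_pos _)]
    refine Real.exp_le_exp.mpr ?_
    calc c * Z i ω ≤ |c * Z i ω| := le_abs_self _
      _ = |c| * |Z i ω| := abs_mul _ _
      _ ≤ |c| * 1 := by gcongr
      _ = |c| := mul_one _
  have hmgf : ∀ c : ℝ, mgf (∑ i ∈ S, Z i) P c ≤ Real.exp (n * c ^ 2 / 2) := by
    intro c
    rw [hindep.mgf_sum hm]
    calc ∏ i ∈ S, mgf (Z i) P c ≤ ∏ i ∈ S, Real.exp (c ^ 2 / 2) := by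
          refine Finset.prod_le_prod (fun i _ => mgf_nonneg) (fun i hi => ?_)
          exact mgf_le_of_centered_bounded (hm i) (hb i hi) (hc i hi) c
      _ = Real.exp (c ^ 2 / 2) ^ S.card := Finset.prod_const _
      _ = Real.exp (n * c ^ 2 / 2) := by
          rw [← Real.exp_nat_mul, hn]; ring_nf
  have hintsum : ∀ c : ℝ, Integrable (fun ω => Real.exp (c * (∑ i ∈ S, Z i) ω)) P :=
    fun c => hindep.integrable_exp_mul_sum hm (hint c)
  have hup : (P {ω | a ≤ (∑ i ∈ S, Z i) ω}).toReal ≤ Real.exp (-(a ^ 2) / (2 * n)) := by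
    calc (P {ω | a ≤ (∑ i ∈ S, Z i) ω}).toReal
        ≤ Real.exp (-s * a) * mgf (∑ i ∈ S, Z i) P s :=
          measure_ge_le_exp_mul_mgf a hspos.le (hintsum s)
      _ ≤ Real.exp (-s * a) * Real.exp (n * s ^ 2 / 2) := by
          gcongr; exacts [hmgf s]
      _ = Real.exp (-(a ^ 2) / (2 * n)) := by
          rw [← Real.exp_add]; congr 1; rw [hs]; field_simp; ring
  have hlo : (P {ω | (∑ i ∈ S, Z i) ω ≤ -a}).toReal ≤ Real.exp (-(a ^ 2) / (2 * n)) := by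
    calc (P {ω | (∑ i ∈ S, Z i) ω ≤ -a}).toReal
        ≤ Real.exp (-(-s) * (-a)) * mgf (∑ i ∈ S, Z i) P (-s) :=
          measure_le_le_exp_mul_mgf (-a) (by linarith) (hintsum (-s))
      _ ≤ Real.exp (-(-s) * (-a)) * Real.exp (n * (-s) ^ 2 / 2) := by
          gcongr; exacts [hmgf (-s)]
      _ = Real.exp (-(a ^ 2) / (2 * n)) := by
          rw [← Real.exp_add]; congr 1; rw [hs]; field_simp; ring
  have hsub : {ω | a ≤ |∑ i ∈ S, Z i ω|}
      ⊆ {ω | a ≤ (∑ i ∈ S, Z i) ω} ∪ {ω | (∑ i ∈ S, Z i) ω ≤ -a} := by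
    intro ω hω
    simp only [Set.mem_setOf_eq, Set.mem_union, Finset.sum_apply] at *
    rcases le_abs.mp hω with h | h
    · exact Or.inl h
    · exact Or.inr (by linarith)
  calc (P {ω | a ≤ |∑ i ∈ S, Z i ω|}).toReal
      ≤ (P ({ω | a ≤ (∑ i ∈ S, Z i) ω} ∪ {ω | (∑ i ∈ S, Z i) ω ≤ -a})).toReal := by
        refine ENNReal.toReal_mono (measure_ne_top _ _) (measure_mono hsub)
    _ ≤ (P {ω | a ≤ (∑ i ∈ S, Z i) ω} + P {ω | (∑ i ∈ S, Z i) ω ≤ -a}).toReal := by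
        refine ENNReal.toReal_mono ?_ (measure_union_le _ _)
        exact ENNReal.add_ne_top.mpr ⟨measure_ne_top _ _, measure_ne_top _ _⟩
    _ = (P {ω | a ≤ (∑ i ∈ S, Z i) ω}).toReal + (P {ω | (∑ i ∈ S, Z i) ω ≤ -a}).toReal :=
        ENNReal.toReal_add (measure_ne_top _ _) (measure_ne_top _ _)
    _ ≤ 2 * Real.exp (-(a ^ 2) / (2 * n)) := by linarith
set_option maxHeartbeats 1600000 in
/-- Detection of a sufficiently separated changepoint: for independent `[0,1]`-valued random
variables with a changepoint at `τ` (mean `μ'` before, mean `μ''` after, gap `Δ > 0`), if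
both segments are longer than `32 log(4 log₂(t+1)/δ) / Δ²`, then with probability at least
`1 - δ` the confidence-based scan statistic triggers at the split `τ`. -/
theorem scan_statistic_detects_changepoint
    {Ω : Type*} [MeasurableSpace Ω] (P : Measure Ω) [IsProbabilityMeasure P]
    (t : ℕ) (ht : 2 ≤ t) (δ : ℝ) (hδ : δ ∈ Set.Ioo (0 : ℝ) 1)
    (X : ℕ → Ω → ℝ)
    (hmeas : ∀ u ∈ Finset.Icc 1 t, Measurable (X u))
    (hindep : iIndepFun
      (fun u : (Finset.Icc 1 t : Finset ℕ) => X u.val) P)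
    (hbdd : ∀ u ∈ Finset.Icc 1 t, ∀ᵐ ω ∂P, X u ω ∈ Set.Icc (0 : ℝ) 1)
    (τ : ℕ) (hτ : τ ∈ Finset.Icc 1 (t - 1))
    (μ' μ'' : ℝ)
    (hmean1 : ∀ u ∈ Finset.Icc 1 τ, ∫ ω, X u ω ∂P = μ')
    (hmean2 : ∀ u ∈ Finset.Icc (τ + 1) t, ∫ ω, X u ω ∂P = μ'')
    (Δ : ℝ) (hΔdef : Δ = |μ' - μ''|) (hΔpos : 0 < Δ)
    (hpre : (τ : ℝ) > 32 * Real.log (4 * Real.logb 2 ((t : ℝ) + 1) / δ) / Δ ^ 2)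
    (hpost : ((t - τ : ℕ) : ℝ)
      > 32 * Real.log (4 * Real.logb 2 ((t : ℝ) + 1) / δ) / Δ ^ 2) :
    ENNReal.ofReal (1 - δ)
      ≤ P {ω | |(∑ u ∈ Finset.Icc 1 τ, X u ω) / (τ : ℝ)
              - (∑ u ∈ Finset.Icc (τ + 1) t, X u ω) / ((t - τ : ℕ) : ℝ)|
            > Real.sqrt (2 * Real.log (4 * Real.logb 2 ((t : ℝ) + 1) / δ) / (τ : ℝ))
              + Real.sqrt (2 * Real.log (4 * Real.logb 2 ((t : ℝ) + 1) / δ)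
                  / ((t - τ : ℕ) : ℝ))} := by
  classical
  obtain ⟨hδ0, hδ1⟩ := hδ
  set L : ℝ := Real.log (4 * Real.logb 2 ((t : ℝ) + 1) / δ) with hLdef
  -- basic numerology
  have ht2 : (2 : ℝ) ≤ (t : ℝ) + 1 := by
    have : (2 : ℝ) ≤ (t : ℝ) := by exact_mod_cast ht
    linarith
  have hlogb : (1 : ℝ) ≤ Real.logb 2 ((t : ℝ) + 1) := by
    calc (1 : ℝ) = Real.logb 2 2 := (Real.logb_self_eq_one (by norm_num)).symm
      _ ≤ Real.logb 2 ((t : ℝ) + 1) :=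
        Real.logb_le_logb_of_le (by norm_num) (by norm_num) ht2
  have harg : (1 : ℝ) < 4 * Real.logb 2 ((t : ℝ) + 1) / δ := by
    rw [lt_div_iff₀ hδ0]; nlinarith
  have hLpos : 0 < L := Real.log_pos harg
  have hexpL : Real.exp (-L) ≤ δ / 4 := by
    rw [Real.exp_neg, hLdef, Real.exp_log (by linarith), inv_div]
    rw [div_le_div_iff₀ (by nlinarith) (by norm_num)]
    nlinarith
  -- naturals
  have hτ1 : 1 ≤ τ := (Finset.mem_Icc.mp hτ).1
  have hτlt : τ < t := by have := (Finset.mem_Icc.mp hτ).2; omega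
  have htτ1 : 1 ≤ t - τ := by omega
  have hτpos : (0 : ℝ) < (τ : ℝ) := by exact_mod_cast hτ1
  have hn2pos : (0 : ℝ) < ((t - τ : ℕ) : ℝ) := by exact_mod_cast htτ1
  set β₁ : ℝ := Real.sqrt (2 * L / (τ : ℝ)) with hβ₁def
  set β₂ : ℝ := Real.sqrt (2 * L / ((t - τ : ℕ) : ℝ)) with hβ₂def
  have hβ₁pos : 0 < β₁ := Real.sqrt_pos.mpr (by positivity)
  have hβ₂pos : 0 < β₂ := Real.sqrt_pos.mpr (by positivity)
  have hβ₁sq : β₁ ^ 2 = 2 * L / (τ : ℝ) := Real.sq_sqrt (by positivity)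
  have hβ₂sq : β₂ ^ 2 = 2 * L / ((t - τ : ℕ) : ℝ) := Real.sq_sqrt (by positivity)
  -- gap bounds
  have hgap1 : 4 * β₁ < Δ := by
    refine lt_of_pow_lt_pow_left₀ 2 hΔpos.le ?_
    have h32 : 32 * L < (τ : ℝ) * Δ ^ 2 := by
      rw [gt_iff_lt, div_lt_iff₀ (by positivity)] at hpre
      linarith
    have : (4 * β₁) ^ 2 = 32 * L / (τ : ℝ) := by rw [mul_pow, hβ₁sq]; ring
    rw [this, div_lt_iff₀ hτpos]
    nlinarith
  have hgap2 : 4 * β₂ < Δ := by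
    refine lt_of_pow_lt_pow_left₀ 2 hΔpos.le ?_
    have h32 : 32 * L < ((t - τ : ℕ) : ℝ) * Δ ^ 2 := by
      rw [gt_iff_lt, div_lt_iff₀ (by positivity)] at hpost
      linarith
    have : (4 * β₂) ^ 2 = 32 * L / ((t - τ : ℕ) : ℝ) := by rw [mul_pow, hβ₂sq]; ring
    rw [this, div_lt_iff₀ hn2pos]
    nlinarith
  -- integrability and boundedness facts
  have habs : ∀ u ∈ Finset.Icc 1 t, ∀ᵐ ω ∂P, |X u ω| ≤ 1 := by
    intro u hu
    filter_upwards [hbdd u hu] with ω hω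
    rw [abs_le]; exact ⟨by linarith [hω.1], hω.2⟩
  have hXint : ∀ u ∈ Finset.Icc 1 t, Integrable (X u) P := fun u hu =>
    Integrable.mono' (integrable_const 1) (hmeas u hu).aestronglyMeasurable (habs u hu)
  have hmem1 : ∀ u ∈ Finset.Icc 1 τ, u ∈ Finset.Icc 1 t := by
    intro u hu; rw [Finset.mem_Icc] at *; omega
  have hmem2 : ∀ u ∈ Finset.Icc (τ + 1) t, u ∈ Finset.Icc 1 t := by
    intro u hu; rw [Finset.mem_Icc] at *; omega
  have hmean_mem : ∀ u ∈ Finset.Icc 1 t, (∫ ω, X u ω ∂P) ∈ Set.Icc (0 : ℝ) 1 := by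
    intro u hu
    constructor
    · exact integral_nonneg_of_ae ((hbdd u hu).mono fun ω hω => hω.1)
    · calc ∫ ω, X u ω ∂P ≤ ∫ _, (1 : ℝ) ∂P :=
            integral_mono_ae (hXint u hu) (integrable_const 1)
              ((hbdd u hu).mono fun ω hω => hω.2)
        _ = 1 := by simp
  have hμ' : μ' ∈ Set.Icc (0 : ℝ) 1 := by
    have h1 : (1 : ℕ) ∈ Finset.Icc 1 τ := Finset.mem_Icc.mpr ⟨le_refl 1, hτ1⟩
    rw [← hmean1 1 h1]; exact hmean_mem 1 (hmem1 1 h1)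
  have hμ'' : μ'' ∈ Set.Icc (0 : ℝ) 1 := by
    have h1 : t ∈ Finset.Icc (τ + 1) t := Finset.mem_Icc.mpr ⟨by omega, le_refl t⟩
    rw [← hmean2 t h1]; exact hmean_mem t (hmem2 t h1)
  -- centered variables
  set m : ℕ → ℝ := fun u => if u ≤ τ then μ' else μ'' with hmdef
  have hmmem : ∀ u, m u ∈ Set.Icc (0 : ℝ) 1 := by
    intro u; rw [hmdef]; dsimp only; split_ifs; exacts [hμ', hμ'']
  set Z : (Finset.Icc 1 t : Finset ℕ) → Ω → ℝ :=
    fun v => (fun x => x - m v.1) ∘ (X v.1) with hZdef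
  have hindepZ : iIndepFun Z P :=
    hindep.comp (fun v => fun x => x - m v.1) (fun v => measurable_id.sub_const _)
  have hmZ : ∀ v, Measurable (Z v) := fun v => ((hmeas v.1 v.2).sub measurable_const)
  have hbZ : ∀ v : (Finset.Icc 1 t : Finset ℕ), ∀ᵐ ω ∂P, |Z v ω| ≤ 1 := by
    intro v
    filter_upwards [hbdd v.1 v.2] with ω hω
    have := hmmem v.1
    rw [hZdef]
    simp only [Function.comp_apply, abs_le]
    constructor <;> [linarith [hω.1, this.2]; linarith [hω.2, this.1]]
  have hcZ : ∀ v : (Finset.Icc 1 t : Finset ℕ), (v.1 ∈ Finset.Icc 1 τ ∨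
      v.1 ∈ Finset.Icc (τ + 1) t) → ∫ ω, Z v ω ∂P = 0 := by
    intro v hv
    rw [hZdef]
    simp only [Function.comp_apply]
    rw [integral_sub (hXint v.1 v.2) (integrable_const _), integral_const]
    simp only [probReal_univ, one_smul, smul_eq_mul]
    rcases hv with hv | hv
    · rw [hmean1 v.1 hv, hmdef]
      simp only [sub_eq_zero]
      rw [if_pos (Finset.mem_Icc.mp hv).2]
      ring
    · rw [hmean2 v.1 hv, hmdef]
      simp only [sub_eq_zero]
      rw [if_neg (by have := (Finset.mem_Icc.mp hv).1; omega)]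
      ring
  -- the two index sets
  set S₁ : Finset (Finset.Icc 1 t : Finset ℕ) :=
    (Finset.Icc 1 τ).subtype (· ∈ Finset.Icc 1 t) with hS₁def
  set S₂ : Finset (Finset.Icc 1 t : Finset ℕ) :=
    (Finset.Icc (τ + 1) t).subtype (· ∈ Finset.Icc 1 t) with hS₂def
  have hS₁mem : ∀ v : (Finset.Icc 1 t : Finset ℕ), v ∈ S₁ ↔ v.1 ∈ Finset.Icc 1 τ := by
    intro v; rw [hS₁def]; exact Finset.mem_subtype
  have hS₂mem : ∀ v : (Finset.Icc 1 t : Finset ℕ), v ∈ S₂ ↔ v.1 ∈ Finset.Icc (τ + 1) t := by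
    intro v; rw [hS₂def]; exact Finset.mem_subtype
  have hS₁card : S₁.card = τ := by
    rw [hS₁def, Finset.card_subtype, Finset.filter_true_of_mem hmem1, Nat.card_Icc]
    omega
  have hS₂card : S₂.card = t - τ := by
    rw [hS₂def, Finset.card_subtype, Finset.filter_true_of_mem hmem2, Nat.card_Icc]
    omega
  have hsum1 : ∀ (f : ℕ → ℝ), ∑ v ∈ S₁, f v.1 = ∑ u ∈ Finset.Icc 1 τ, f u := by
    intro f; rw [hS₁def]; exact Finset.sum_subtype_of_mem f hmem1
  have hsum2 : ∀ (f : ℕ → ℝ), ∑ v ∈ S₂, f v.1 = ∑ u ∈ Finset.Icc (τ + 1) t, f u := by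
    intro f; rw [hS₂def]; exact Finset.sum_subtype_of_mem f hmem2
  -- Hoeffding bounds for each segment
  have hB1 := chernoff_abs_bound hindepZ hmZ S₁
    (fun v _ => hbZ v) (fun v hv => hcZ v (Or.inl ((hS₁mem v).mp hv)))
    (a := (τ : ℝ) * β₁) (by positivity) (by rw [hS₁card]; omega)
  have hB2 := chernoff_abs_bound hindepZ hmZ S₂
    (fun v _ => hbZ v) (fun v hv => hcZ v (Or.inr ((hS₂mem v).mp hv)))
    (a := ((t - τ : ℕ) : ℝ) * β₂) (by positivity) (by rw [hS₂card]; omega)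
  rw [hS₁card] at hB1
  rw [hS₂card] at hB2
  have hexp1 : -(((τ : ℝ) * β₁) ^ 2) / (2 * (τ : ℕ)) = -L := by
    rw [mul_pow, hβ₁sq]; field_simp
  have hexp2 : -((((t - τ : ℕ) : ℝ) * β₂) ^ 2) / (2 * ((t - τ : ℕ) : ℝ)) = -L := by
    rw [mul_pow, hβ₂sq]; field_simp
  rw [hexp1] at hB1
  rw [hexp2] at hB2
  have hδ2 : 2 * Real.exp (-L) ≤ δ / 2 := by linarith
  have hB1' : P {ω | (τ : ℝ) * β₁ ≤ |∑ v ∈ S₁, Z v ω|} ≤ ENNReal.ofReal (δ / 2) :=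
    (ENNReal.le_ofReal_iff_toReal_le (measure_ne_top _ _) (by linarith)).mpr
      (le_trans hB1 hδ2)
  have hB2' : P {ω | ((t - τ : ℕ) : ℝ) * β₂ ≤ |∑ v ∈ S₂, Z v ω|} ≤ ENNReal.ofReal (δ / 2) :=
    (ENNReal.le_ofReal_iff_toReal_le (measure_ne_top _ _) (by linarith)).mpr
      (le_trans hB2 hδ2)
  -- the target set
  set G : Set Ω := {ω | |(∑ u ∈ Finset.Icc 1 τ, X u ω) / (τ : ℝ)
              - (∑ u ∈ Finset.Icc (τ + 1) t, X u ω) / ((t - τ : ℕ) : ℝ)|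
            > β₁ + β₂} with hGdef
  have hs1m : Measurable (fun ω => ∑ u ∈ Finset.Icc 1 τ, X u ω) :=
    Finset.measurable_sum _ (fun u hu => hmeas u (hmem1 u hu))
  have hs2m : Measurable (fun ω => ∑ u ∈ Finset.Icc (τ + 1) t, X u ω) :=
    Finset.measurable_sum _ (fun u hu => hmeas u (hmem2 u hu))
  have hGm : MeasurableSet G := by
    rw [hGdef]
    exact measurableSet_lt measurable_const
      (((hs1m.div_const _).sub (hs2m.div_const _)).abs)
  -- complement of G is contained in the union of bad events
  have hsubset : Gᶜ ⊆ {ω | (τ : ℝ) * β₁ ≤ |∑ v ∈ S₁, Z v ω|}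
      ∪ {ω | ((t - τ : ℕ) : ℝ) * β₂ ≤ |∑ v ∈ S₂, Z v ω|} := by
    intro ω hω
    by_contra hcon
    rw [Set.mem_union, not_or] at hcon
    obtain ⟨h1', h2'⟩ := hcon
    have h1 : |∑ v ∈ S₁, Z v ω| < (τ : ℝ) * β₁ := not_le.mp h1'
    have h2 : |∑ v ∈ S₂, Z v ω| < ((t - τ : ℕ) : ℝ) * β₂ := not_le.mp h2'
    apply hω
    -- compute the centered sums
    have he1 : ∑ v ∈ S₁, Z v ω = (∑ u ∈ Finset.Icc 1 τ, X u ω) - (τ : ℝ) * μ' := by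
      calc ∑ v ∈ S₁, Z v ω = ∑ u ∈ Finset.Icc 1 τ, (X u ω - m u) :=
            hsum1 (fun u => X u ω - m u)
        _ = ∑ u ∈ Finset.Icc 1 τ, (X u ω - μ') := by
            refine Finset.sum_congr rfl (fun u hu => ?_)
            rw [hmdef]
            simp only
            rw [if_pos (Finset.mem_Icc.mp hu).2]
        _ = (∑ u ∈ Finset.Icc 1 τ, X u ω) - (τ : ℝ) * μ' := by
            rw [Finset.sum_sub_distrib, Finset.sum_const, Nat.card_Icc, nsmul_eq_mul]
            have : τ + 1 - 1 = τ := by omega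
            rw [this]
    have he2 : ∑ v ∈ S₂, Z v ω
        = (∑ u ∈ Finset.Icc (τ + 1) t, X u ω) - ((t - τ : ℕ) : ℝ) * μ'' := by
      calc ∑ v ∈ S₂, Z v ω = ∑ u ∈ Finset.Icc (τ + 1) t, (X u ω - m u) :=
            hsum2 (fun u => X u ω - m u)
        _ = ∑ u ∈ Finset.Icc (τ + 1) t, (X u ω - μ'') := by
            refine Finset.sum_congr rfl (fun u hu => ?_)
            rw [hmdef]
            simp only
            rw [if_neg (by have := (Finset.mem_Icc.mp hu).1; omega)]
        _ = (∑ u ∈ Finset.Icc (τ + 1) t, X u ω) - ((t - τ : ℕ) : ℝ) * μ'' := by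
            rw [Finset.sum_sub_distrib, Finset.sum_const, Nat.card_Icc, nsmul_eq_mul]
            have : t + 1 - (τ + 1) = t - τ := by omega
            rw [this]
    set A : ℝ := (∑ u ∈ Finset.Icc 1 τ, X u ω) / (τ : ℝ) with hAdef
    set B : ℝ := (∑ u ∈ Finset.Icc (τ + 1) t, X u ω) / ((t - τ : ℕ) : ℝ) with hBdef
    have hA : |A - μ'| < β₁ := by
      rw [hAdef, div_sub' hτpos.ne', abs_div, abs_of_pos hτpos, div_lt_iff₀ hτpos]
      rw [he1] at h1
      exact h1.trans_le (mul_comm _ _).le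
    have hB : |B - μ''| < β₂ := by
      rw [hBdef, div_sub' hn2pos.ne', abs_div, abs_of_pos hn2pos, div_lt_iff₀ hn2pos]
      rw [he2] at h2
      exact h2.trans_le (mul_comm _ _).le
    have htri : Δ ≤ |A - μ'| + |A - B| + |B - μ''| := by
      rw [hΔdef]
      calc |μ' - μ''| ≤ |μ' - A| + |A - μ''| := abs_sub_le _ _ _
        _ ≤ |μ' - A| + (|A - B| + |B - μ''|) :=
          add_le_add_right (abs_sub_le _ _ _) _
        _ = |A - μ'| + |A - B| + |B - μ''| := by rw [abs_sub_comm μ' A]; ring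
    show β₁ + β₂ < |A - B|
    linarith
  -- conclude
  have hcompl : P Gᶜ ≤ ENNReal.ofReal δ := by
    calc P Gᶜ ≤ P ({ω | (τ : ℝ) * β₁ ≤ |∑ v ∈ S₁, Z v ω|}
        ∪ {ω | ((t - τ : ℕ) : ℝ) * β₂ ≤ |∑ v ∈ S₂, Z v ω|}) := measure_mono hsubset
      _ ≤ P {ω | (τ : ℝ) * β₁ ≤ |∑ v ∈ S₁, Z v ω|}
          + P {ω | ((t - τ : ℕ) : ℝ) * β₂ ≤ |∑ v ∈ S₂, Z v ω|} := measure_union_le _ _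
      _ ≤ ENNReal.ofReal (δ / 2) + ENNReal.ofReal (δ / 2) := add_le_add hB1' hB2'
      _ = ENNReal.ofReal δ := by
          rw [← ENNReal.ofReal_add (by linarith) (by linarith)]; norm_num
  have hone : (1 : ENNReal) ≤ P G + ENNReal.ofReal δ := by
    calc (1 : ENNReal) = P G + P Gᶜ := (prob_add_prob_compl hGm).symm
      _ ≤ P G + ENNReal.ofReal δ := add_le_add_right hcompl _
  calc ENNReal.ofReal (1 - δ) = ENNReal.ofReal 1 - ENNReal.ofReal δ :=
        ENNReal.ofReal_sub 1 hδ0.le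
    _ = 1 - ENNReal.ofReal δ := by rw [ENNReal.ofReal_one]
    _ ≤ P G := tsub_le_iff_right.mpr hone
end
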